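/- arXiv:2409.18914 — 7 statements merged into one kernel-verified Lean document; each statement's English description precedes it below -/
import Mathlib

section
/- Let c ∈ (0,1). There exists ε₀ = ε₀(c) ∈ (0,1), depending only on c, such that for every compact metric space (X,d), every compact subset E ⊆ X and every 0 < ε ≤ ε₀, there exists a Borel probability measure μ on E satisfying μ(E') ≤ (diam_d E')^{c · dim_H(E,d,ε)} for all subsets E' ⊆ E with diam_d(E') < ε/6. -/
/-!
Frostman's lemma by linear-programming duality. For `f : X → ℝ` let `λ(f)` be the least value of
`∑ w_A (diam A)^τ` over finite families of sets `A` of diameter `< δ` with weights `w_A ≥ 0` and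
`f ≤ ∑ w_A 𝟙_A` on `E`. This is a sublinear functional, and a weighted Vitali argument (round the
weights to integers and peel off disjoint subfamilies, one layer of multiplicity at a time) gives
`H^τ_{5δ}(E) ≤ 5^τ λ(1)`. With `τ = c · dim_H(E,d,ε)` and `ε ≤ ε₀(c)` one has
`H^τ_ε(E) ≥ 5^τ`, hence `λ(1) ≥ 1`. Hahn–Banach gives a linear `Λ ≤ λ` with `Λ 1 = λ 1`; it is
positive, and its normalized Riesz measure `μ` satisfies
`μ(E') ≤ Λ(φ) ≤ λ(φ) ≤ (diam E' + 2η)^τ` for an Urysohn function `φ` of the `η`-neighbourhood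
of `E'`.
-/

open Filter Set Topology
open scoped ENNReal

namespace MeanDim8

/-- The `s`-dimensional Hausdorff pre-measure of `E ⊆ X` at scale `δ`
(countable covers; conventions `0^0 = 1` for nonempty sets, `diam(∅)^s = 0`). -/
noncomputable def hMeasure {X : Type*} [MetricSpace X] (E : Set X) (s δ : ℝ) : ℝ≥0∞ :=
  open scoped Classical in
  ⨅ (C : ℕ → Set X) (_ : E ⊆ ⋃ i, C i) (_ : ∀ i, Metric.diam (C i) < δ),
    ∑' i, if (C i).Nonempty then ENNReal.ofReal (Metric.diam (C i) ^ s) else 0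

/-- `dim_H(E,d,δ) = sup { s ≥ 0 : H_δ^s(E,d) ≥ 1 }`. -/
noncomputable def dimHScale {X : Type*} [MetricSpace X] (E : Set X) (δ : ℝ) : ℝ≥0∞ :=
  ⨆ (s : ℝ) (_ : 0 ≤ s) (_ : 1 ≤ hMeasure E s δ), ENNReal.ofReal s

open Metric MeasureTheory CompactlySupported
open scoped Pointwise

lemma rpow_sub_mul_rpow_le_rpow {d δ s t : ℝ} (hd : 0 ≤ d) (hdδ : d ≤ δ) (hs : 0 ≤ s)
    (hst : s ≤ t) : δ ^ (s - t) * d ^ t ≤ d ^ s := by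
  rcases hd.eq_or_lt with rfl | hd
  · rcases (hs.trans hst).eq_or_lt with rfl | ht
    · obtain rfl : s = 0 := le_antisymm hst hs
      simp
    · rw [Real.zero_rpow ht.ne', mul_zero]
      exact Real.rpow_nonneg le_rfl s
  · calc δ ^ (s - t) * d ^ t ≤ d ^ (s - t) * d ^ t :=
          mul_le_mul_of_nonneg_right (Real.rpow_le_rpow_of_nonpos hd hdδ (sub_nonpos.mpr hst))
            (Real.rpow_nonneg hd.le t)
      _ = d ^ s := by rw [← Real.rpow_add hd, sub_add_cancel]

section HausdorffPremeasure

variable {X : Type*} [MetricSpace X] {E : Set X} {s t δ : ℝ}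

open scoped Classical in
lemma hMeasure_le_tsum {C : ℕ → Set X} (hE : E ⊆ ⋃ i, C i) (hC : ∀ i, diam (C i) < δ) :
    hMeasure E s δ ≤ ∑' i, if (C i).Nonempty then ENNReal.ofReal (diam (C i) ^ s) else 0 :=
  iInf₂_le_of_le C hE (iInf_le _ hC)

lemma hMeasure_le_sum {ι : Type*} (U : Finset ι) {C : ι → Set X} (hδ : 0 < δ)
    (hE : E ⊆ ⋃ i ∈ U, C i) (hC : ∀ i ∈ U, diam (C i) < δ) :
    hMeasure E s δ ≤ ∑ i ∈ U, ENNReal.ofReal (diam (C i) ^ s) := by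
  classical
  let e := U.equivFin.symm
  let D : ℕ → Set X := fun k => if h : k < U.card then C (e ⟨k, h⟩) else ∅
  have hD : ∀ k, diam (D k) < δ := by
    intro k
    by_cases h : k < U.card
    · simpa [D, h] using hC _ (e ⟨k, h⟩).2
    · simpa [D, h] using hδ
  have hED : E ⊆ ⋃ k, D k := by
    intro x hx
    obtain ⟨i, hi, hxi⟩ := mem_iUnion₂.mp (hE hx)
    refine mem_iUnion.mpr ⟨U.equivFin ⟨i, hi⟩, ?_⟩
    simp [D, e, hxi]
  calc hMeasure E s δ
      ≤ ∑' k, if (D k).Nonempty then ENNReal.ofReal (diam (D k) ^ s) else 0 :=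
        hMeasure_le_tsum hED hD
    _ = ∑ k ∈ Finset.range U.card,
          if (D k).Nonempty then ENNReal.ofReal (diam (D k) ^ s) else 0 :=
        tsum_eq_sum fun k hk => by simp [D, Finset.mem_range.not.mp hk]
    _ = ∑ k : Fin U.card,
          if (C (e k)).Nonempty then ENNReal.ofReal (diam (C (e k)) ^ s) else 0 := by
        rw [← Fin.sum_univ_eq_sum_range]
        simp [D]
    _ ≤ ∑ k : Fin U.card, ENNReal.ofReal (diam (C (e k)) ^ s) :=
        Finset.sum_le_sum fun k _ => by split_ifs <;> simp
    _ = ∑ i ∈ U, ENNReal.ofReal (diam (C i) ^ s) := by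
        rw [← Finset.sum_coe_sort U]
        exact e.sum_comp (fun i => ENNReal.ofReal (diam (C i) ^ s))

lemma rpow_sub_mul_hMeasure_le (hδ : 0 < δ) (hs : 0 ≤ s) (hst : s ≤ t) :
    ENNReal.ofReal (δ ^ (s - t)) * hMeasure E t δ ≤ hMeasure E s δ := by
  classical
  refine le_iInf₂ fun C hE => le_iInf fun hC => ?_
  calc ENNReal.ofReal (δ ^ (s - t)) * hMeasure E t δ
      ≤ ENNReal.ofReal (δ ^ (s - t)) *
          ∑' i, if (C i).Nonempty then ENNReal.ofReal (diam (C i) ^ t) else 0 := by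
        gcongr
        exact hMeasure_le_tsum hE hC
    _ = ∑' i, ENNReal.ofReal (δ ^ (s - t)) *
          if (C i).Nonempty then ENNReal.ofReal (diam (C i) ^ t) else 0 :=
        ENNReal.tsum_mul_left.symm
    _ ≤ ∑' i, if (C i).Nonempty then ENNReal.ofReal (diam (C i) ^ s) else 0 := by
        refine ENNReal.tsum_le_tsum fun i => ?_
        split_ifs
        · rw [← ENNReal.ofReal_mul (by positivity)]
          exact ENNReal.ofReal_le_ofReal
            (rpow_sub_mul_rpow_le_rpow diam_nonneg (hC i).le hs hst)
        · simp

lemma ofReal_rpow_sub_le_hMeasure (hδ : 0 < δ) (hs : 0 ≤ s) (hst : s ≤ t)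
    (ht : 1 ≤ hMeasure E t δ) : ENNReal.ofReal (δ ^ (s - t)) ≤ hMeasure E s δ :=
  (le_mul_of_one_le_right' ht).trans (rpow_sub_mul_hMeasure_le hδ hs hst)

lemma exists_one_le_hMeasure_of_lt_dimHScale {a : ℝ} (h : ENNReal.ofReal a < dimHScale E δ) :
    ∃ s, a < s ∧ 1 ≤ hMeasure E s δ := by
  obtain ⟨s, hs⟩ := lt_iSup_iff.mp h
  by_cases h0 : 0 ≤ s
  · by_cases h1 : 1 ≤ hMeasure E s δ
    · simp only [h0, h1, iSup_pos] at hs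
      exact ⟨s, (ENNReal.ofReal_lt_ofReal_iff'.mp hs).1, h1⟩
    · simp [h1] at hs
  · simp [h0] at hs

end HausdorffPremeasure

lemma diam_cthickening_two_mul_le {X : Type*} [PseudoMetricSpace X] (B : Set X) :
    diam (cthickening (2 * diam B) B) ≤ 5 * diam B := by
  have := diam_cthickening_le B (by positivity : 0 ≤ 2 * diam B)
  linarith

open scoped Classical in
lemma countP_mem_le_one {α : Type*} {U : Finset (Set α)}
    (hU : (U : Set (Set α)).PairwiseDisjoint id) (x : α) : U.val.countP (x ∈ ·) ≤ 1 := by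
  rw [Multiset.countP_eq_card_filter, ← Finset.filter_val, Finset.card_val]
  refine Finset.card_le_one.mpr fun A hA B hB => ?_
  rw [Finset.mem_filter] at hA hB
  exact hU.elim_set hA.1 hB.1 x hA.2 hB.2

section Vitali

variable {X : Type*} [MetricSpace X] [BoundedSpace X] {E : Set X} {τ δ ε : ℝ}

lemma exists_pairwiseDisjoint_subset_cthickening_cover (S : Finset (Set X)) :
    ∃ U ⊆ S, (U : Set (Set X)).PairwiseDisjoint id ∧
      ⋃ A ∈ S, A ⊆ ⋃ B ∈ U, cthickening (2 * diam B) B := by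
  obtain ⟨u, hut, hdisj, hmax⟩ := Vitali.exists_disjoint_subfamily_covering_enlargement id
    {A | A ∈ S ∧ A.Nonempty} diam 2 one_lt_two (fun _ _ => diam_nonneg) (diam (univ : Set X))
    (fun A _ => diam_mono (subset_univ A) (Bornology.IsBounded.all _)) (fun _ hA => hA.2)
  have hfin : u.Finite := S.finite_toSet.subset fun A hA => (hut hA).1
  refine ⟨hfin.toFinset, fun A hA => (hut (hfin.mem_toFinset.mp hA)).1, by simpa using hdisj, ?_⟩
  intro x hx
  obtain ⟨A, hA, hxA⟩ := mem_iUnion₂.mp hx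
  obtain ⟨B, hB, ⟨z, hzA, hzB⟩, hAB⟩ := hmax A ⟨hA, x, hxA⟩
  refine mem_iUnion₂.mpr ⟨B, hfin.mem_toFinset.mpr hB, mem_cthickening_of_dist_le x z _ B hzB ?_⟩
  exact (dist_le_diam_of_mem (Bornology.IsBounded.all _) hxA hzA).trans hAB

open scoped Classical in
lemma nat_mul_hMeasure_le_sum_map (hτ : 0 ≤ τ) (hδ : 0 < δ) (hδε : 5 * δ ≤ ε) (N : ℕ)
    (ℳ : Multiset (Set X)) (hdiam : ∀ A ∈ ℳ, diam A < δ)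
    (hN : ∀ x ∈ E, N ≤ ℳ.countP (x ∈ ·)) :
    N * hMeasure E τ ε ≤ (ℳ.map fun A => ENNReal.ofReal ((5 * diam A) ^ τ)).sum := by
  induction N generalizing ℳ with
  | zero => simp
  | succ N ih =>
    -- A disjoint Vitali subfamily `U` is one layer: its enlargements cover `E`, and removing it
    -- lowers the multiplicity at each point by at most one.
    set F := fun A : Set X => ENNReal.ofReal ((5 * diam A) ^ τ)
    obtain ⟨U, hUℳ, hdisj, hcover⟩ :=
      exists_pairwiseDisjoint_subset_cthickening_cover ℳ.toFinset
    have hUle : U.val ≤ ℳ := (Multiset.le_iff_subset U.nodup).mpr fun B hB =>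
      Multiset.mem_toFinset.mp (hUℳ hB)
    have hlayer : hMeasure E τ ε ≤ (U.val.map F).sum := by
      refine (hMeasure_le_sum U (C := fun B => cthickening (2 * diam B) B) (by linarith)
        (fun x hx => ?_) fun B hB => ?_).trans (Finset.sum_le_sum fun B _ => ?_)
      · obtain ⟨A, hA, hxA⟩ := Multiset.countP_pos.mp (Nat.succ_pos N |>.trans_le (hN x hx))
        exact hcover (mem_iUnion₂.mpr ⟨A, Multiset.mem_toFinset.mpr hA, hxA⟩)
      · have := hdiam B (Multiset.mem_toFinset.mp (hUℳ hB))
        linarith [diam_cthickening_two_mul_le B]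
      · exact ENNReal.ofReal_le_ofReal
          (Real.rpow_le_rpow diam_nonneg (diam_cthickening_two_mul_le B) hτ)
    have hrest : ∀ x ∈ E, N ≤ (ℳ - U.val).countP (x ∈ ·) := by
      intro x hx
      have hsplit := Multiset.countP_add (x ∈ ·) (ℳ - U.val) U.val
      rw [tsub_add_cancel_of_le hUle] at hsplit
      have := hN x hx
      have := countP_mem_le_one hdisj x
      omega
    calc ((N + 1 : ℕ) : ℝ≥0∞) * hMeasure E τ ε = N * hMeasure E τ ε + hMeasure E τ ε := by
          push_cast; ring
      _ ≤ ((ℳ - U.val).map F).sum + (U.val.map F).sum :=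
          add_le_add (ih _ (fun A hA => hdiam A (Multiset.mem_of_le tsub_le_self hA)) hrest)
            hlayer
      _ = (ℳ.map F).sum := by
          rw [← Multiset.sum_add, ← Multiset.map_add, tsub_add_cancel_of_le hUle]

end Vitali

section Coverage

variable {X : Type*}

noncomputable def coverage : (Set X →₀ ℝ) →ₗ[ℝ] X → ℝ :=
  Finsupp.linearCombination ℝ fun A => A.indicator 1

lemma coverage_apply (w : Set X →₀ ℝ) (x : X) :
    coverage w x = ∑ A ∈ w.support, w A * A.indicator 1 x := by
  simp [coverage, Finsupp.linearCombination_apply, Finsupp.sum]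

lemma coverage_single (A : Set X) (a : ℝ) (x : X) :
    coverage (Finsupp.single A a) x = a * A.indicator 1 x := by
  simp [coverage]

end Coverage

section WeightedCover

variable {X : Type*} [MetricSpace X] {E : Set X} {δ τ : ℝ} {f g : X → ℝ} {w v : Set X →₀ ℝ}

noncomputable def weightedDiamSum (τ : ℝ) : (Set X →₀ ℝ) →ₗ[ℝ] ℝ :=
  Finsupp.linearCombination ℝ fun A => diam A ^ τ

lemma weightedDiamSum_apply (w : Set X →₀ ℝ) :
    weightedDiamSum τ w = ∑ A ∈ w.support, w A * diam A ^ τ := by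
  simp [weightedDiamSum, Finsupp.linearCombination_apply, Finsupp.sum]

lemma weightedDiamSum_nonneg (hw : 0 ≤ w) : 0 ≤ weightedDiamSum τ w := by
  rw [weightedDiamSum_apply]
  exact Finset.sum_nonneg fun A _ => mul_nonneg (hw A) (Real.rpow_nonneg diam_nonneg τ)

structure IsWeightedCover (E : Set X) (δ : ℝ) (f : X → ℝ) (w : Set X →₀ ℝ) : Prop where
  nonneg : 0 ≤ w
  diam_lt : ∀ A ∈ w.support, diam A < δ
  le_coverage : ∀ x ∈ E, f x ≤ coverage w x

namespace IsWeightedCover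

lemma add (hw : IsWeightedCover E δ f w) (hv : IsWeightedCover E δ g v) :
    IsWeightedCover E δ (f + g) (w + v) where
  nonneg := add_nonneg hw.nonneg hv.nonneg
  diam_lt A hA := by
    classical
    rcases Finset.mem_union.mp (Finsupp.support_add hA) with h | h
    exacts [hw.diam_lt A h, hv.diam_lt A h]
  le_coverage x hx := by
    simpa [map_add] using add_le_add (hw.le_coverage x hx) (hv.le_coverage x hx)

lemma smul (hw : IsWeightedCover E δ f w) {c : ℝ} (hc : 0 ≤ c) :
    IsWeightedCover E δ (c • f) (c • w) where
  nonneg := smul_nonneg hc hw.nonneg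
  diam_lt A hA := hw.diam_lt A (Finsupp.support_smul hA)
  le_coverage x hx := by
    simpa [map_smul] using mul_le_mul_of_nonneg_left (hw.le_coverage x hx) hc

end IsWeightedCover

lemma isWeightedCover_zero (hf : ∀ x ∈ E, f x ≤ 0) : IsWeightedCover E δ f 0 where
  nonneg := le_rfl
  diam_lt := by simp
  le_coverage := by simpa using hf

lemma isWeightedCover_single {A : Set X} (hA : diam A < δ)
    (hf : ∀ x ∈ E, f x ≤ A.indicator 1 x) : IsWeightedCover E δ f (Finsupp.single A 1) where
  nonneg := Finsupp.single_nonneg.mpr zero_le_one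
  diam_lt B hB := by rwa [Finset.mem_singleton.mp (Finsupp.support_single_subset hB)]
  le_coverage x hx := by simpa [coverage_single] using hf x hx

lemma exists_isWeightedCover (hE : TotallyBounded E) (hδ : 0 < δ) {M : ℝ}
    (hf : ∀ x ∈ E, f x ≤ M) : ∃ w, IsWeightedCover E δ f w := by
  classical
  obtain ⟨t, ht, hEt⟩ := totallyBounded_iff.mp hE (δ / 3) (by positivity)
  refine ⟨∑ y ∈ ht.toFinset, Finsupp.single (ball y (δ / 3)) (max M 0), ⟨?_, ?_, ?_⟩⟩
  · exact Finset.sum_nonneg fun y _ => Finsupp.single_nonneg.mpr (le_max_right M 0)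
  · intro A hA
    obtain ⟨y, -, hyA⟩ := Finset.mem_biUnion.mp (Finsupp.support_finsetSum hA)
    rw [Finset.mem_singleton.mp (Finsupp.support_single_subset hyA)]
    linarith [diam_ball (x := y) (by positivity : 0 ≤ δ / 3)]
  · intro x hx
    obtain ⟨y, hy, hxy⟩ := mem_iUnion₂.mp (hEt hx)
    rw [map_sum, Finset.sum_apply]
    calc f x ≤ max M 0 * (ball y (δ / 3)).indicator 1 x := by
          simpa [indicator_of_mem hxy] using (hf x hx).trans (le_max_left M 0)
      _ ≤ ∑ z ∈ ht.toFinset, coverage (Finsupp.single (ball z (δ / 3)) (max M 0)) x := by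
          simp_rw [coverage_single]
          exact Finset.single_le_sum (f := fun z => max M 0 * (ball z (δ / 3)).indicator 1 x)
            (fun z _ => mul_nonneg (le_max_right M 0) (indicator_nonneg (by simp) x))
            (ht.mem_toFinset.mpr hy)

-- The functional `λ` of the header; it is `sInf ∅ = 0` for `f` without weighted covers.
noncomputable def weightedContent (E : Set X) (δ τ : ℝ) (f : X → ℝ) : ℝ :=
  sInf (weightedDiamSum τ '' {w | IsWeightedCover E δ f w})

lemma bddBelow_weightedDiamSum_image :
    BddBelow (weightedDiamSum τ '' {w | IsWeightedCover E δ f w}) :=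
  ⟨0, by rintro _ ⟨w, hw, rfl⟩; exact weightedDiamSum_nonneg hw.nonneg⟩

lemma weightedContent_nonneg : 0 ≤ weightedContent E δ τ f :=
  Real.sInf_nonneg (by rintro _ ⟨w, hw, rfl⟩; exact weightedDiamSum_nonneg hw.nonneg)

lemma IsWeightedCover.weightedContent_le (hw : IsWeightedCover E δ f w) :
    weightedContent E δ τ f ≤ weightedDiamSum τ w :=
  csInf_le bddBelow_weightedDiamSum_image ⟨w, hw, rfl⟩

lemma weightedContent_add_le (hf : ∃ w, IsWeightedCover E δ f w)
    (hg : ∃ v, IsWeightedCover E δ g v) :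
    weightedContent E δ τ (f + g) ≤ weightedContent E δ τ f + weightedContent E δ τ g := by
  obtain ⟨w, hw⟩ := hf
  obtain ⟨v, hv⟩ := hg
  unfold weightedContent
  rw [← csInf_add (s := weightedDiamSum τ '' {w | IsWeightedCover E δ f w})
    (t := weightedDiamSum τ '' {v | IsWeightedCover E δ g v}) ⟨_, w, hw, rfl⟩
    bddBelow_weightedDiamSum_image ⟨_, v, hv, rfl⟩ bddBelow_weightedDiamSum_image]
  refine csInf_le_csInf bddBelow_weightedDiamSum_image
    ⟨_, Set.add_mem_add ⟨w, hw, rfl⟩ ⟨v, hv, rfl⟩⟩ ?_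
  rintro _ ⟨_, ⟨w, hw, rfl⟩, _, ⟨v, hv, rfl⟩, rfl⟩
  exact ⟨w + v, hw.add hv, map_add _ _ _⟩

lemma weightedContent_smul {c : ℝ} (hc : 0 < c) (f : X → ℝ) :
    weightedContent E δ τ (c • f) = c * weightedContent E δ τ f := by
  have : weightedDiamSum τ '' {w | IsWeightedCover E δ (c • f) w} =
      c • weightedDiamSum τ '' {w | IsWeightedCover E δ f w} := by
    ext r
    constructor
    · rintro ⟨w, hw, rfl⟩
      refine ⟨weightedDiamSum τ (c⁻¹ • w), ⟨c⁻¹ • w, ?_, rfl⟩, ?_⟩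
      · simpa [smul_smul, inv_mul_cancel₀ hc.ne'] using hw.smul (inv_nonneg.mpr hc.le)
      · simp [mul_inv_cancel_left₀ hc.ne']
    · intro hr
      obtain ⟨_, ⟨w, hw, rfl⟩, rfl⟩ := Set.mem_smul_set.mp hr
      exact ⟨c • w, hw.smul hc.le, map_smul _ _ _⟩
  rw [weightedContent, this, Real.sInf_smul_of_nonneg hc.le, smul_eq_mul, weightedContent]

lemma weightedContent_eq_zero (hf : ∀ x ∈ E, f x ≤ 0) : weightedContent E δ τ f = 0 :=
  le_antisymm (by simpa using (isWeightedCover_zero hf).weightedContent_le (τ := τ))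
    weightedContent_nonneg

lemma weightedContent_le_diam_rpow {A : Set X} (hA : diam A < δ)
    (hf : ∀ x ∈ E, f x ≤ A.indicator 1 x) : weightedContent E δ τ f ≤ diam A ^ τ := by
  simpa [weightedDiamSum] using (isWeightedCover_single hA hf).weightedContent_le (τ := τ)

end WeightedCover

lemma countP_sum_nsmul_singleton {α : Type*} (s : Finset α) (n : α → ℕ) (p : α → Prop)
    [DecidablePred p] :
    (∑ a ∈ s, n a • ({a} : Multiset α)).countP p = ∑ a ∈ s, if p a then n a else 0 := by
  rw [← Multiset.coe_countPAddMonoidHom, map_sum]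
  refine Finset.sum_congr rfl fun a _ => ?_
  rw [map_nsmul, Multiset.coe_countPAddMonoidHom, ← Multiset.cons_zero, Multiset.countP_cons]
  split_ifs <;> simp

lemma sum_map_sum_nsmul_singleton {α M : Type*} [AddCommMonoid M] (s : Finset α) (n : α → ℕ)
    (F : α → M) : ((∑ a ∈ s, n a • ({a} : Multiset α)).map F).sum = ∑ a ∈ s, n a • F a := by
  rw [← Multiset.coe_mapAddMonoidHom, map_sum, Multiset.sum_sum]
  refine Finset.sum_congr rfl fun a _ => ?_
  rw [map_nsmul, Multiset.coe_mapAddMonoidHom, Multiset.sum_nsmul]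
  simp

section Rounding

variable {X : Type*} [MetricSpace X] [BoundedSpace X] {E : Set X} {τ δ ε : ℝ} {w : Set X →₀ ℝ}

open scoped Classical in
lemma nat_mul_hMeasure_le_ofReal (hτ : 0 ≤ τ) (hδ : 0 < δ) (hδε : 5 * δ ≤ ε)
    (hw : IsWeightedCover E δ 1 w) (N : ℕ) :
    N * hMeasure E τ ε ≤
      ENNReal.ofReal (5 ^ τ * (N * weightedDiamSum τ w + ∑ A ∈ w.support, diam A ^ τ)) := by
  set F := fun A : Set X => ENNReal.ofReal ((5 * diam A) ^ τ)
  -- `ℳ` takes each `A` with multiplicity `⌈N w_A⌉`, so it covers `E` at least `N` times.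
  let ℳ : Multiset (Set X) := ∑ A ∈ w.support, ⌈N * w A⌉₊ • {A}
  have hcount (x : X) :
      ℳ.countP (x ∈ ·) = ∑ A ∈ w.support, if x ∈ A then ⌈N * w A⌉₊ else 0 :=
    countP_sum_nsmul_singleton _ _ _
  have hsum : (ℳ.map F).sum = ∑ A ∈ w.support, ⌈N * w A⌉₊ * F A :=
    (sum_map_sum_nsmul_singleton _ _ _).trans (by simp only [nsmul_eq_mul])
  refine (nat_mul_hMeasure_le_sum_map hτ hδ hδε N ℳ (fun A hA => ?_) (fun x hx => ?_)).trans ?_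
  · obtain ⟨B, hB, hAB⟩ := Multiset.mem_sum.mp hA
    rw [Multiset.mem_singleton.mp (Multiset.mem_of_mem_nsmul hAB)]
    exact hw.diam_lt B hB
  · have hx1 := hw.le_coverage x hx
    rw [Pi.one_apply, coverage_apply] at hx1
    rw [hcount, ← Nat.cast_le (α := ℝ)]
    push_cast
    calc (N : ℝ) ≤ N * ∑ A ∈ w.support, w A * A.indicator 1 x :=
          le_mul_of_one_le_right (Nat.cast_nonneg N) hx1
      _ ≤ _ := by
          rw [Finset.mul_sum]
          refine Finset.sum_le_sum fun A _ => ?_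
          by_cases hxA : x ∈ A
          · simpa [hxA] using Nat.le_ceil (N * w A)
          · simp [hxA]
  · have hw0 (A : Set X) : 0 ≤ N * w A := mul_nonneg (Nat.cast_nonneg N) (hw.nonneg A)
    calc (ℳ.map F).sum = ∑ A ∈ w.support, (⌈N * w A⌉₊ : ℝ≥0∞) * F A := hsum
      _ ≤ ∑ A ∈ w.support, ENNReal.ofReal ((N * w A + 1) * (5 ^ τ * diam A ^ τ)) := by
          refine Finset.sum_le_sum fun A _ => ?_
          rw [← ENNReal.ofReal_natCast, ← ENNReal.ofReal_mul (Nat.cast_nonneg _),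
            ← Real.mul_rpow (by norm_num) diam_nonneg]
          exact ENNReal.ofReal_le_ofReal (mul_le_mul_of_nonneg_right
            (Nat.ceil_lt_add_one (hw0 A)).le (by positivity))
      _ = ENNReal.ofReal (∑ A ∈ w.support, (N * w A + 1) * (5 ^ τ * diam A ^ τ)) :=
          (ENNReal.ofReal_sum_of_nonneg fun A _ => by have := hw0 A; positivity).symm
      _ = _ := by
          rw [weightedDiamSum_apply, Finset.mul_sum, ← Finset.sum_add_distrib, Finset.mul_sum]
          exact congrArg _ (Finset.sum_congr rfl fun A _ => by ring)

lemma hMeasure_le_ofReal_five_rpow_mul (hτ : 0 ≤ τ) (hδ : 0 < δ) (hδε : 5 * δ ≤ ε)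
    (hw : IsWeightedCover E δ 1 w) :
    hMeasure E τ ε ≤ ENNReal.ofReal (5 ^ τ * weightedDiamSum τ w) := by
  set W := weightedDiamSum τ w
  set D := ∑ A ∈ w.support, diam A ^ τ
  have hbound (N : ℕ) (hN : 1 ≤ N) :
      hMeasure E τ ε ≤ ENNReal.ofReal (5 ^ τ * (W + D / N)) := by
    have hN0 : (N : ℝ) ≠ 0 := by positivity
    refine (ENNReal.mul_le_mul_iff_right (by positivity) (ENNReal.natCast_ne_top N)).mp ?_
    convert nat_mul_hMeasure_le_ofReal hτ hδ hδε hw N using 1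
    rw [← ENNReal.ofReal_natCast, ← ENNReal.ofReal_mul (Nat.cast_nonneg N)]
    congr 1
    field_simp
    rfl
  have hlim : Tendsto (fun N : ℕ => ENNReal.ofReal (5 ^ τ * (W + D / N))) atTop
      (𝓝 (ENNReal.ofReal (5 ^ τ * W))) :=
    ENNReal.tendsto_ofReal (by
      simpa using ((tendsto_const_div_atTop_nhds_zero_nat D).const_add W).const_mul (5 ^ τ))
  exact ge_of_tendsto hlim (eventually_atTop.mpr ⟨1, hbound⟩)

lemma one_le_weightedContent_one (hE : TotallyBounded E) (hτ : 0 ≤ τ) (hδ : 0 < δ)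
    (hδε : 5 * δ ≤ ε) (h : ENNReal.ofReal (5 ^ τ) ≤ hMeasure E τ ε) :
    1 ≤ weightedContent E δ τ 1 := by
  obtain ⟨w₀, hw₀⟩ := exists_isWeightedCover hE hδ (f := 1) (fun _ _ => le_rfl)
  refine le_csInf ⟨_, w₀, hw₀, rfl⟩ ?_
  rintro _ ⟨w, hw, rfl⟩
  have h5 : (0 : ℝ) < 5 ^ τ := by positivity
  have := h.trans (hMeasure_le_ofReal_five_rpow_mul hτ hδ hδε hw)
  rw [ENNReal.ofReal_le_ofReal_iff (mul_nonneg h5.le (weightedDiamSum_nonneg hw.nonneg))] at this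
  exact (le_mul_iff_one_le_right h5).mp this

end Rounding

theorem exists_linearMap_eq_le_sublinear {V : Type*} [AddCommGroup V] [Module ℝ V] (N : V → ℝ)
    (N_hom : ∀ c : ℝ, 0 < c → ∀ x, N (c • x) = c * N x) (N_add : ∀ x y, N (x + y) ≤ N x + N y)
    (v : V) : ∃ ℓ : V →ₗ[ℝ] ℝ, ℓ v = N v ∧ ∀ x, ℓ x ≤ N x := by
  have N_zero : N 0 = 0 := by
    have := N_hom 2 two_pos 0
    rw [smul_zero] at this
    linarith
  have N_neg : -N v ≤ N (-v) := by
    have := N_add v (-v)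
    rw [add_neg_cancel, N_zero] at this
    linarith
  let f := LinearPMap.mkSpanSingleton' (σ := RingHom.id ℝ) v (N v) fun c hc => by
    rcases smul_eq_zero.mp hc with rfl | rfl
    · exact zero_smul ℝ _
    · rw [N_zero, smul_zero]
  have hf : ∀ x : f.domain, f x ≤ N x := by
    rintro ⟨x, hx⟩
    obtain ⟨a, rfl⟩ := Submodule.mem_span_singleton.mp hx
    rw [LinearPMap.mkSpanSingleton'_apply, RingHom.id_apply, smul_eq_mul]
    change a * N v ≤ N (a • v)
    rcases lt_trichotomy a 0 with ha | rfl | ha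
    · rw [show a • v = (-a) • -v by rw [smul_neg, neg_smul, neg_neg], N_hom _ (neg_pos.mpr ha)]
      nlinarith
    · simp [N_zero]
    · rw [N_hom a ha]
  obtain ⟨ℓ, hℓf, hℓN⟩ := exists_extension_of_le_sublinear f N N_hom N_add hf
  exact ⟨ℓ, (hℓf ⟨v, Submodule.mem_span_singleton_self v⟩).trans
    (LinearPMap.mkSpanSingleton'_apply_self _ _ _ _), hℓN⟩

section Riesz

variable {X : Type*} [TopologicalSpace X] [T2Space X] [LocallyCompactSpace X] [MeasurableSpace X]
  [BorelSpace X] (Λ : C_c(X, ℝ) →ₚ[ℝ] ℝ)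

lemma rieszMeasure_compl_eq_zero {E : Set X} (hE : IsClosed E)
    (hΛ : ∀ f : C_c(X, ℝ), (∀ x ∈ E, f x = 0) → Λ f ≤ 0) : RealRMK.rieszMeasure Λ Eᶜ = 0 := by
  rw [hE.isOpen_compl.measure_eq_iSup_isCompact]
  refine le_antisymm (iSup₂_le fun K hKE => iSup_le fun hK => ?_) bot_le
  obtain ⟨f, hfK, hfE, hfc, hf01⟩ := exists_continuous_one_zero_of_isCompact hK hE
    (subset_compl_iff_disjoint_right.mp hKE)
  calc RealRMK.rieszMeasure Λ K ≤ ENNReal.ofReal (Λ ⟨f, hfc⟩) :=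
        RealRMK.rieszMeasure_le_of_eq_one Λ (fun x => (hf01 x).1) hK hfK
    _ = 0 := ENNReal.ofReal_eq_zero.mpr (hΛ _ hfE)

end Riesz

section Frostman

variable {X : Type*} [MetricSpace X] [CompactSpace X] {E : Set X} {δ τ : ℝ}

open CompactlySupportedContinuousMap in
lemma exists_positiveLinearMap_le_weightedContent (hδ : 0 < δ) :
    ∃ Λ : C_c(X, ℝ) →ₚ[ℝ] ℝ, Λ (continuousMapEquiv 1) = weightedContent E δ τ 1 ∧
      ∀ f : C_c(X, ℝ), Λ f ≤ weightedContent E δ τ f := by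
  have hcover (f : C_c(X, ℝ)) : ∃ w, IsWeightedCover E δ f w := by
    obtain ⟨M, hM⟩ := (isCompact_range f.continuous).bddAbove
    exact exists_isWeightedCover (isCompact_univ.totallyBounded.subset (subset_univ E)) hδ
      fun x _ => hM (mem_range_self x)
  obtain ⟨ℓ, hℓ1, hℓ⟩ := exists_linearMap_eq_le_sublinear
    (fun f : C_c(X, ℝ) => weightedContent E δ τ f)
    (fun c hc f => by rw [coe_smul]; exact weightedContent_smul hc f)
    (fun f g => by rw [coe_add]; exact weightedContent_add_le (hcover f) (hcover g))
    (continuousMapEquiv 1)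
  refine ⟨PositiveLinearMap.mk₀ ℓ fun f hf => ?_, hℓ1, hℓ⟩
  have := (hℓ (-f)).trans_eq (weightedContent_eq_zero fun x _ => by simpa using hf x)
  rw [map_neg] at this
  linarith

variable [MeasurableSpace X] [BorelSpace X]

lemma rieszMeasure_le_diam_rpow (Λ : C_c(X, ℝ) →ₚ[ℝ] ℝ)
    (hΛ : ∀ f : C_c(X, ℝ), Λ f ≤ weightedContent E δ τ f) (hτ : 0 ≤ τ) {E' : Set X}
    (hE' : diam E' < δ) : RealRMK.rieszMeasure Λ E' ≤ ENNReal.ofReal (diam E' ^ τ) := by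
  have hK : IsCompact (closure E') := isClosed_closure.isCompact
  have hstep (η : ℝ) (hη : 0 < η) (hηδ : diam E' + 2 * η < δ) :
      RealRMK.rieszMeasure Λ E' ≤ ENNReal.ofReal ((diam E' + 2 * η) ^ τ) := by
    set U := thickening η E'
    have hU : diam U ≤ diam E' + 2 * η := diam_thickening_le E' hη.le
    obtain ⟨f, hfK, hfU, hfc, hf01⟩ := exists_continuous_one_zero_of_isCompact hK
      isOpen_thickening.isClosed_compl
      (disjoint_compl_right_iff_subset.mpr (closure_subset_thickening hη E'))
    have hfU' (x : X) : f x ≤ U.indicator 1 x := by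
      by_cases hx : x ∈ U
      · simpa [hx] using (hf01 x).2
      · simp [hx, hfU (mem_compl hx)]
    calc RealRMK.rieszMeasure Λ E' ≤ RealRMK.rieszMeasure Λ (closure E') :=
          measure_mono subset_closure
      _ ≤ ENNReal.ofReal (Λ ⟨f, hfc⟩) :=
          RealRMK.rieszMeasure_le_of_eq_one Λ (fun x => (hf01 x).1) hK hfK
      _ ≤ ENNReal.ofReal (diam U ^ τ) := ENNReal.ofReal_le_ofReal <|
          (hΛ _).trans (weightedContent_le_diam_rpow (hU.trans_lt hηδ) fun x _ => hfU' x)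
      _ ≤ ENNReal.ofReal ((diam E' + 2 * η) ^ τ) :=
          ENNReal.ofReal_le_ofReal (Real.rpow_le_rpow diam_nonneg hU hτ)
  have hcont : ContinuousAt (fun η : ℝ => ENNReal.ofReal ((diam E' + 2 * η) ^ τ)) 0 :=
    ENNReal.continuous_ofReal.continuousAt.comp
      ((continuous_const.add (continuous_const.mul continuous_id)).continuousAt.rpow_const
        (Or.inr hτ))
  refine ge_of_tendsto
    (by simpa using hcont.tendsto.mono_left (nhdsWithin_le_nhds (s := Ioi 0))) ?_
  filter_upwards [Ioo_mem_nhdsGT (show (0 : ℝ) < (δ - diam E') / 2 by linarith)] with η hη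
  exact hstep η hη.1 (by linarith [hη.2])

open CompactlySupportedContinuousMap in
theorem exists_isProbabilityMeasure_le_diam_rpow (hE : IsClosed E) (hτ : 0 ≤ τ) (hδ : 0 < δ)
    (h1 : 1 ≤ weightedContent E δ τ 1) :
    ∃ μ : Measure X, IsProbabilityMeasure μ ∧ μ Eᶜ = 0 ∧
      ∀ E' : Set X, diam E' < δ → μ E' ≤ ENNReal.ofReal (diam E' ^ τ) := by
  obtain ⟨Λ, hΛ1, hΛ⟩ := exists_positiveLinearMap_le_weightedContent (E := E) (τ := τ) hδ
  set ν := RealRMK.rieszMeasure Λ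
  have hν : 1 ≤ ν univ := by
    calc 1 ≤ ENNReal.ofReal (Λ (continuousMapEquiv 1)) := by
          rw [hΛ1, ← ENNReal.ofReal_one]
          exact ENNReal.ofReal_le_ofReal h1
      _ ≤ ν univ := RealRMK.le_rieszMeasure_tsupport_subset Λ
          (fun _ => ⟨zero_le_one, le_rfl⟩) (subset_univ _)
  have : NeZero ν := ⟨fun h => by simp [h] at hν⟩
  refine ⟨(ν univ)⁻¹ • ν, inferInstance, ?_, fun E' hE' => ?_⟩
  · rw [Measure.smul_apply, rieszMeasure_compl_eq_zero Λ hE fun f hf =>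
      (hΛ f).trans_eq (weightedContent_eq_zero fun x hx => (hf x hx).le), smul_zero]
  · calc ((ν univ)⁻¹ • ν) E' ≤ 1 * ν E' := by
          rw [Measure.smul_apply, smul_eq_mul]
          exact mul_le_mul_left (ENNReal.inv_le_one.mpr hν) _
      _ ≤ ENNReal.ofReal (diam E' ^ τ) := by
          rw [one_mul]
          exact rieszMeasure_le_diam_rpow Λ hΛ hτ hE'

end Frostman

lemma five_rpow_le_rpow_sub {c σ s ε : ℝ} (hc0 : 0 < c) (hc1 : c < 1) (hσ : 0 ≤ σ)
    (hs : (1 + c) / 2 * σ < s) (hε : 0 < ε) (hεε₀ : ε ≤ 5 ^ (-(2 * c / (1 - c)))) :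
    (5 : ℝ) ^ (c * σ) ≤ ε ^ (c * σ - s) := by
  have hexp : c * σ ≤ -(2 * c / (1 - c)) * (c * σ - s) := by
    rw [show -(2 * c / (1 - c)) * (c * σ - s) = 2 * c * (s - c * σ) / (1 - c) by ring,
      le_div_iff₀ (by linarith)]
    nlinarith
  calc (5 : ℝ) ^ (c * σ) ≤ 5 ^ (-(2 * c / (1 - c)) * (c * σ - s)) :=
        Real.rpow_le_rpow_of_exponent_le (by norm_num) hexp
    _ = (5 ^ (-(2 * c / (1 - c)))) ^ (c * σ - s) := Real.rpow_mul (by norm_num) _ _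
    _ ≤ ε ^ (c * σ - s) := Real.rpow_le_rpow_of_nonpos hε hεε₀ (by nlinarith)

/-- Frostman-type lemma (Lindenstrauss–Tsukamoto): for `c ∈ (0,1)` there
is `ε₀ ∈ (0,1)`, depending only on `c`, such that for every compact metric space,
every nonempty compact subset `E` and every `0 < ε ≤ ε₀` there is a Borel probability
measure supported on `E` with `μ(E') ≤ (diam E')^{c·dim_H(E,d,ε)}` whenever
`diam E' < ε/6`. -/
theorem exists_frostman_measure (c : ℝ) (hc : c ∈ Set.Ioo (0 : ℝ) 1) :
    ∃ ε₀ ∈ Set.Ioo (0 : ℝ) 1,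
      ∀ (X : Type) [MetricSpace X] [CompactSpace X] [MeasurableSpace X] [BorelSpace X],
        ∀ E : Set X, IsCompact E → E.Nonempty → ∀ ε : ℝ, 0 < ε → ε ≤ ε₀ →
          ∃ μ : MeasureTheory.Measure X, MeasureTheory.IsProbabilityMeasure μ ∧ μ Eᶜ = 0 ∧
            ∀ E' : Set X, E' ⊆ E → Metric.diam E' < ε / 6 →
              μ E' ≤ ENNReal.ofReal (Metric.diam E' ^ (c * (dimHScale E ε).toReal)) := by
  obtain ⟨hc0, hc1⟩ := hc
  refine ⟨5 ^ (-(2 * c / (1 - c))), ⟨by positivity, Real.rpow_lt_one_of_one_lt_of_neg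
    (by norm_num) (neg_neg_of_pos (div_pos (by positivity) (by linarith)))⟩, ?_⟩
  intro X _ _ _ _ E hE hne ε hε hεε₀
  set σ := (dimHScale E ε).toReal
  -- `σ = 0` includes `dimHScale E ε = ⊤`, whose `toReal` is `0`.
  rcases (ENNReal.toReal_nonneg : 0 ≤ σ).eq_or_lt with hσ | hσ
  · obtain ⟨x, hx⟩ := hne
    refine ⟨Measure.dirac x, inferInstance, by simp [hx], fun E' _ _ => ?_⟩
    rw [show σ = 0 from hσ.symm, mul_zero, Real.rpow_zero, ENNReal.ofReal_one]
    exact prob_le_one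
  have htop : dimHScale E ε ≠ ⊤ := fun h => by simp [h] at hσ
  obtain ⟨s, hs, hHs⟩ := exists_one_le_hMeasure_of_lt_dimHScale (a := (1 + c) / 2 * σ) <| by
    rw [← ENNReal.ofReal_toReal htop, ENNReal.ofReal_lt_ofReal_iff hσ]
    nlinarith
  have h5 : ENNReal.ofReal (5 ^ (c * σ)) ≤ hMeasure E (c * σ) ε :=
    (ENNReal.ofReal_le_ofReal (five_rpow_le_rpow_sub hc0 hc1 hσ.le hs hε hεε₀)).trans
      (ofReal_rpow_sub_le_hMeasure hε (by positivity) (by nlinarith) hHs)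
  obtain ⟨μ, hμ, hμE, hμE'⟩ := exists_isProbabilityMeasure_le_diam_rpow (δ := ε / 6) hE.isClosed
    (by positivity) (by positivity) (one_le_weightedContent_one
      (isCompact_univ.totallyBounded.subset (subset_univ E)) (by positivity) (by positivity)
      (by linarith) h5)
  exact ⟨μ, hμ, hμE, fun E' _ hE' => hμE' E' hE'⟩

end MeanDim8
end

section
/- Let G be a countable discrete group, (X,d) a compact metric space, and let X^G carry the shift action and the metric 𝒅 as in the context. Fix ε > 0, let P ⊆ X be a maximal ε-separated subset of (X,d) with |P| = N, let λ be the uniform probability measure on P, and let μ = λ^{⊗G} be the product measure on X^G. Then for every finite nonempty subset F of G, every q ∈ X^G and every r < ε/2, there exist points p_{i_g} ∈ P (g ∈ F) such that supp(μ) ∩ B_{𝒅_F}(q,r) ⊆ { x ∈ X^G : x_g = p_{i_g} for all g ∈ F }; consequently μ(B_{𝒅_F}(q,r)) ≤ N^{-|F|}. -/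
open Filter Set Topology MeasureTheory
open scoped ENNReal

namespace MeanDim9

/-- The shift action of `G` on `X^G`: `(σ^h x)_g = x_{gh}`. -/
def shift {G X : Type*} [Group G] (h : G) (x : G → X) : G → X := fun g => x (g * h)

/-- The metric `𝒅((x_g),(y_g)) = Σ_g α_g d(x_g, y_g)` on `X^G`. -/
noncomputable def bigD {G X : Type*} [MetricSpace X] (α : G → ℝ) (x y : G → X) : ℝ :=
  ∑' g, α g * dist (x g) (y g)

/-- The dynamical (Bowen) metric `d_F(x,y) = max_{g ∈ F} d(gx, gy)`. -/
noncomputable def dynDist {G X : Type*} (T : G → X → X) (d : X → X → ℝ)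
    (F : Finset G) (x y : X) : ℝ :=
  if h : F.Nonempty then F.sup' h (fun g => d (T g x) (T g y)) else 0

/-- Topological support of a measure: points all of whose open neighbourhoods
have positive measure. -/
def measSupport {Z : Type*} [TopologicalSpace Z] [MeasurableSpace Z]
    (μ : Measure Z) : Set Z :=
  {x : Z | ∀ U : Set Z, IsOpen U → x ∈ U → 0 < μ U}

/-- for the product of uniform measures on a maximal `ε`-separated set `P`,
any `𝒅_F`-ball of radius `r < ε/2` meets `supp(μ)` inside a single cylinder over `F`;
consequently its measure is at most `N^{-|F|}`. -/
theorem measure_ball_le_of_product_measure {G X : Type*} [Group G] [Countable G]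
    [MetricSpace X] [CompactSpace X] [MeasurableSpace X] [BorelSpace X]
    (α : G → ℝ) (hαpos : ∀ g, 0 < α g) (hα1 : α (1 : G) = 1) (hsum : Summable α)
    (ε : ℝ) (hε : 0 < ε)
    (P : Finset X) (hPsep : ∀ p ∈ P, ∀ q ∈ P, p ≠ q → ε < dist p q)
    (hPmax : ∀ Q : Finset X, (∀ p ∈ Q, ∀ q ∈ Q, p ≠ q → ε < dist p q) → P ⊆ Q → Q = P)
    (N : ℕ) (hN : P.card = N)
    (μ : Measure (G → X))
    (hμ : ∀ (F' : Finset G) (A : G → Set X), (∀ g : G, MeasurableSet (A g)) →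
      μ {x : G → X | ∀ g ∈ F', x g ∈ A g}
        = ∏ g ∈ F', (((N : ℝ≥0∞)⁻¹ • ∑ p ∈ P, Measure.dirac p) (A g)))
    (F : Finset G) (hF : F.Nonempty) (q : G → X) (r : ℝ) (hr : r < ε / 2) :
    ∃ p : G → X, (∀ g ∈ F, p g ∈ P) ∧
      measSupport μ ∩ {x : G → X | dynDist shift (bigD α) F q x < r}
        ⊆ {x : G → X | ∀ g ∈ F, x g = p g} ∧
      μ {x : G → X | dynDist shift (bigD α) F q x < r} ≤ ((N : ℝ≥0∞)⁻¹) ^ F.card := by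

  classical
  -- `X` is nonempty (via `q 1`), and `P` is nonempty by maximality
  have hPne : P.Nonempty := by
    by_contra h
    rw [Finset.not_nonempty_iff_eq_empty] at h
    have := hPmax {q 1} (by
      intro p hp q' hq' hne
      simp only [Finset.mem_singleton] at hp hq'
      exact absurd (hp.trans hq'.symm) hne) (by simp [h])
    simp [h] at this
  have hNpos : 0 < N := hN ▸ Finset.card_pos.mpr hPne
  have hN0 : (N : ℝ≥0∞) ≠ 0 := by exact_mod_cast hNpos.ne'
  -- uniform measure evaluation
  have hunif : ∀ s : Set X, MeasurableSet s →
      (((N : ℝ≥0∞)⁻¹ • ∑ p ∈ P, Measure.dirac p) s)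
        = (N : ℝ≥0∞)⁻¹ * ∑ p ∈ P, s.indicator 1 p := by
    intro s hs
    rw [Measure.smul_apply, smul_eq_mul, Measure.finset_sum_apply]
    congr 1
    exact Finset.sum_congr rfl fun p _ => Measure.dirac_apply' p hs
  -- μ is a probability measure
  have hμuniv : μ Set.univ = 1 := by
    have h := hμ ∅ (fun _ => Set.univ) (fun _ => MeasurableSet.univ)
    simpa using h
  -- coordinates of points near q in the Bowen metric are near coordinates of q
  obtain ⟨C, hC⟩ : ∃ C, ∀ a b : X, dist a b ≤ C := by
    refine ⟨Metric.diam (Set.univ : Set X), fun a b =>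
      Metric.dist_le_diam_of_mem ?_ (Set.mem_univ a) (Set.mem_univ b)⟩
    exact isCompact_univ.isBounded
  have hcoord : ∀ x : G → X, dynDist shift (bigD α) F q x < r →
      ∀ g ∈ F, dist (q g) (x g) < r := by
    intro x hx g hg
    have hsup : bigD α (shift g q) (shift g x) < r := by
      rw [dynDist, dif_pos hF] at hx
      exact lt_of_le_of_lt (Finset.le_sup' (fun g => bigD α (shift g q) (shift g x)) hg) hx
    have hsummable : Summable (fun h : G => α h * dist (shift g q h) (shift g x h)) := by
      refine Summable.of_nonneg_of_le (fun h => ?_) (fun h => ?_) (hsum.mul_right C)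
      · exact mul_nonneg (hαpos h).le dist_nonneg
      · exact mul_le_mul_of_nonneg_left (hC _ _) (hαpos h).le
    have hterm : α 1 * dist (shift g q 1) (shift g x 1)
        ≤ bigD α (shift g q) (shift g x) := by
      exact Summable.le_tsum hsummable 1 (fun h _ => mul_nonneg (hαpos h).le dist_nonneg)
    have : dist (q g) (x g) ≤ bigD α (shift g q) (shift g x) := by
      simpa [shift, hα1] using hterm
    exact lt_of_le_of_lt this hsup
  -- points in the support have all coordinates in P
  have hsupp : ∀ x ∈ measSupport μ, ∀ g : G, x g ∈ (P : Set X) := by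
    intro x hx g
    by_contra hxg
    have hclosed : IsClosed (P : Set X) := P.finite_toSet.isClosed
    obtain ⟨δ, hδ, hball⟩ := Metric.isOpen_iff.mp hclosed.isOpen_compl (x g) hxg
    have hopen : IsOpen {y : G → X | y g ∈ Metric.ball (x g) δ} :=
      Metric.isOpen_ball.preimage (continuous_apply g)
    have hmem : x ∈ {y : G → X | y g ∈ Metric.ball (x g) δ} := by
      simp [Metric.mem_ball, hδ]
    have hpos := hx _ hopen hmem
    have hzero : μ {y : G → X | y g ∈ Metric.ball (x g) δ} = 0 := by
      have h := hμ {g} (fun _ => Metric.ball (x g) δ) (fun _ => measurableSet_ball)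
      have hset : {y : G → X | ∀ g' ∈ ({g} : Finset G), y g' ∈ Metric.ball (x g) δ}
          = {y : G → X | y g ∈ Metric.ball (x g) δ} := by
        ext y; simp
      rw [hset] at h
      rw [h, Finset.prod_singleton, hunif _ measurableSet_ball]
      have : ∀ p ∈ P, (Metric.ball (x g) δ).indicator (1 : X → ℝ≥0∞) p = 0 := by
        intro p hp
        have : p ∉ Metric.ball (x g) δ := fun hmem' => (hball hmem') hp
        simp [Set.indicator_of_notMem this]
      rw [Finset.sum_congr rfl this]
      simp
    exact absurd hzero hpos.ne'
  -- define p
  set p : G → X := fun g =>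
    if h : ∃ s ∈ P, dist (q g) s < r then h.choose else hPne.choose with hp_def
  have hpP : ∀ g, p g ∈ P := by
    intro g
    rw [hp_def]
    by_cases h : ∃ s ∈ P, dist (q g) s < r
    · simp only [dif_pos h]; exact h.choose_spec.1
    · simp only [dif_neg h]; exact hPne.choose_spec
  have hpuniq : ∀ g : G, ∀ s ∈ P, dist (q g) s < r → p g = s := by
    intro g s hs hds
    have h : ∃ s ∈ P, dist (q g) s < r := ⟨s, hs, hds⟩
    have hch := h.choose_spec
    have hpg : p g = h.choose := by rw [hp_def]; simp only [dif_pos h]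
    rw [hpg]
    by_contra hne
    have := hPsep _ hch.1 _ hs hne
    have : ε < dist (q g) h.choose + dist (q g) s :=
      lt_of_lt_of_le this (by
        have := dist_triangle h.choose (q g) s
        simpa [dist_comm] using this)
    linarith [hch.2, hds]
  refine ⟨p, fun g _ => hpP g, ?_, ?_⟩
  · rintro x ⟨hxs, hxb⟩ g hg
    exact (hpuniq g (x g) (hsupp x hxs g) (hcoord x hxb g hg)).symm
  · -- the measure bound
    set Ball := {x : G → X | dynDist shift (bigD α) F q x < r}
    set Cy := {x : G → X | ∀ g ∈ F, x g ∈ (P : Set X)} with hCy_def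
    have hCmeas : MeasurableSet Cy := by
      have : Cy = ⋂ g ∈ F, (fun x : G → X => x g) ⁻¹' (P : Set X) := by
        ext y; simp [hCy_def]
      rw [this]
      exact MeasurableSet.biInter F.countable_toSet
        (fun g _ => (measurable_pi_apply g) P.finite_toSet.measurableSet)
    have hμCy : μ Cy = 1 := by
      have h := hμ F (fun _ => (P : Set X)) (fun _ => P.finite_toSet.measurableSet)
      rw [hCy_def, h]
      have : ∀ g ∈ F, (((N : ℝ≥0∞)⁻¹ • ∑ p ∈ P, Measure.dirac p) (P : Set X)) = 1 := by
        intro g _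
        rw [hunif _ P.finite_toSet.measurableSet]
        have : ∀ p ∈ P, ((P : Set X)).indicator (1 : X → ℝ≥0∞) p = 1 := by
          intro p hp; simp [Set.indicator_of_mem (by exact_mod_cast hp : p ∈ (P : Set X))]
        rw [Finset.sum_congr rfl this, Finset.sum_const, hN]
        simp only [nsmul_eq_mul, mul_one]
        exact ENNReal.inv_mul_cancel hN0 (ENNReal.natCast_ne_top N)
      rw [Finset.prod_congr rfl this]
      simp
    have hμCyc : μ Cyᶜ = 0 := by
      have := measure_compl hCmeas (by rw [hμCy]; exact ENNReal.one_ne_top)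
      rw [hμuniv, hμCy] at this
      simpa using this
    have hμcyl : μ {x : G → X | ∀ g ∈ F, x g = p g} = ((N : ℝ≥0∞)⁻¹) ^ F.card := by
      have h := hμ F (fun g => {p g}) (fun g => measurableSet_singleton _)
      have hset : {x : G → X | ∀ g ∈ F, x g ∈ ({p g} : Set X)}
          = {x : G → X | ∀ g ∈ F, x g = p g} := by
        ext y; simp
      rw [hset] at h
      rw [h]
      have : ∀ g ∈ F, (((N : ℝ≥0∞)⁻¹ • ∑ p' ∈ P, Measure.dirac p') ({p g} : Set X))
          = (N : ℝ≥0∞)⁻¹ := by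
        intro g _
        rw [hunif _ (measurableSet_singleton _)]
        have : ∑ p' ∈ P, ({p g} : Set X).indicator (1 : X → ℝ≥0∞) p'
            = ∑ p' ∈ P, if p' = p g then 1 else 0 := by
          refine Finset.sum_congr rfl fun p' _ => ?_
          by_cases hpe : p' = p g <;> simp [Set.indicator_apply, hpe]
        rw [this, Finset.sum_ite_eq' P (p g) (fun _ => (1 : ℝ≥0∞)), if_pos (hpP g)]
        simp
      rw [Finset.prod_congr rfl this, Finset.prod_const]
    have hincl : Ball ∩ Cy ⊆ {x : G → X | ∀ g ∈ F, x g = p g} := by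
      rintro x ⟨hxb, hxc⟩ g hg
      exact (hpuniq g (x g) (hxc g hg) (hcoord x hxb g hg)).symm
    calc μ Ball ≤ μ ((Ball ∩ Cy) ∪ Cyᶜ) := by
          refine measure_mono fun x hx => ?_
          by_cases hc : x ∈ Cy
          · exact Or.inl ⟨hx, hc⟩
          · exact Or.inr hc
      _ ≤ μ (Ball ∩ Cy) + μ Cyᶜ := measure_union_le _ _
      _ ≤ ((N : ℝ≥0∞)⁻¹) ^ F.card + 0 := by
          gcongr
          · rw [← hμcyl]; exact measure_mono hincl
          · exact le_of_eq hμCyc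
      _ = ((N : ℝ≥0∞)⁻¹) ^ F.card := by simp


end MeanDim9
end

section
/- Let G be a countable discrete group, (X,d) a compact metric space with diameter H > 0, and let X^G carry the shift action and the metric 𝒅 as in the context; set l = Σ_{g in G} α_g. Let 0 < ε < 1/2 and let S be a finite nonempty subset of G with Σ_{g in G\S} α_g ≤ ε/(2H). Then for every finite nonempty subset F of G, the maximal cardinality of a (F, 3lε)-separated subset of (X^G, 𝒅) satisfies s_F(𝒅, 3lε, X^G) ≤ N(ε)^{|SF|}, where N(ε) is the maximal cardinality of an ε-separated subset of (X,d) and SF = { gh : g ∈ S, h ∈ F }. -/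
/-!
Fix a maximal `ε`-separated set `Q ⊆ X`: it has `N(ε)` points and is an `ε`-net, so choosing
`r p ∈ Q` with `d(p, r p) ≤ ε` codes each `x ∈ X^G` by `(r (x g))_{g ∈ SF}`. Two points with the
same code are `2ε`-close at every coordinate of `SF`, so for `h ∈ F` the part of
`𝒅(σ^h x, σ^h y)` over `S` is at most `2εl`, while the part over `G \ S` is at most
`H · ε/(2H) = ε/2 ≤ εl` because `l ≥ α_1 = 1`. Hence distinct points of an `(F, 3lε)`-separated
set have distinct codes, and there are at most `N(ε)^{|SF|}` codes.
-/

open Filter Set Topology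
open scoped ENNReal Pointwise

namespace MeanDim10

/-- The shift action of `G` on `X^G`: `(σ^h x)_g = x_{gh}`. -/
def shift {G X : Type*} [Group G] (h : G) (x : G → X) : G → X := fun g => x (g * h)

/-- The metric `𝒅((x_g),(y_g)) = Σ_g α_g d(x_g, y_g)` on `X^G`. -/
noncomputable def bigD {G X : Type*} [MetricSpace X] (α : G → ℝ) (x y : G → X) : ℝ :=
  ∑' g, α g * dist (x g) (y g)

/-- The dynamical (Bowen) metric `d_F(x,y) = max_{g ∈ F} d(gx, gy)`. -/
noncomputable def dynDist {G X : Type*} (T : G → X → X) (d : X → X → ℝ)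
    (F : Finset G) (x y : X) : ℝ :=
  if h : F.Nonempty then F.sup' h (fun g => d (T g x) (T g y)) else 0

/-- `K` is an `(F,ε)`-separated subset of `E`. -/
def IsSeparatedSet {G X : Type*} (T : G → X → X) (d : X → X → ℝ)
    (F : Finset G) (ε : ℝ) (E : Set X) (K : Finset X) : Prop :=
  ↑K ⊆ E ∧ ∀ x ∈ K, ∀ y ∈ K, x ≠ y → ε < dynDist T d F x y

/-- `s_F(d,ε,E)`: maximal cardinality of an `(F,ε)`-separated subset of `E`. -/
noncomputable def sepNum {G X : Type*} (T : G → X → X) (d : X → X → ℝ)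
    (F : Finset G) (ε : ℝ) (E : Set X) : ℕ :=
  sSup {n : ℕ | ∃ K : Finset X, IsSeparatedSet T d F ε E K ∧ K.card = n}

/-- `N(ε)`: maximal cardinality of an `ε`-separated subset of `X`. -/
noncomputable def maxSep (X : Type*) [MetricSpace X] (ε : ℝ) : ℕ :=
  sSup {n : ℕ | ∃ Q : Finset X, (∀ p ∈ Q, ∀ q ∈ Q, p ≠ q → ε < dist p q) ∧ Q.card = n}

section Packing

open Metric

variable {X : Type*}

lemma _root_.IsCompact.packingNumber_ne_top [PseudoEMetricSpace X] {s : Set X} (hs : IsCompact s)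
    {ε : NNReal} (hε : ε ≠ 0) : packingNumber ε s ≠ ⊤ := by
  have hε2 : ε / 2 ≠ 0 := by positivity
  obtain ⟨N, -, hN, hcover⟩ := exists_finite_isCover_of_isCompact hε2 hs
  refine ne_top_of_le_ne_top hN.encard_lt_top.ne ?_
  calc packingNumber ε s = packingNumber (2 * (ε / 2)) s := by rw [mul_div_cancel₀ _ two_ne_zero]
    _ ≤ externalCoveringNumber (ε / 2) s := packingNumber_two_mul_le_externalCoveringNumber _ _
    _ ≤ N.encard := hcover.externalCoveringNumber_le_encard

variable [MetricSpace X]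

lemma isSeparated_ofReal_coe_finset_iff {ε : ℝ} {Q : Finset X} :
    IsSeparated (ENNReal.ofReal ε) (Q : Set X) ↔ ∀ p ∈ Q, ∀ q ∈ Q, p ≠ q → ε < dist p q := by
  simp only [IsSeparated, Set.Pairwise, Finset.mem_coe, edist_dist]
  refine forall₂_congr fun p _ ↦ forall₂_congr fun q _ ↦ imp_congr_right fun hpq ↦ ?_
  exact ENNReal.ofReal_lt_ofReal_iff'.trans (and_iff_left (dist_pos.2 hpq))

lemma exists_finset_card_le_maxSep_forall_dist_le [CompactSpace X] {ε : ℝ} (hε : 0 < ε) :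
    ∃ Q : Finset X, Q.card ≤ maxSep X ε ∧ ∀ x, ∃ q ∈ Q, dist x q ≤ ε := by
  have hfin := isCompact_univ.packingNumber_ne_top (X := X) (ε := ε.toNNReal) (by simpa using hε)
  have hC : (maximalSeparatedSet ε.toNNReal (univ : Set X)).Finite :=
    Set.encard_ne_top_iff.mp (encard_maximalSeparatedSet hfin ▸ hfin)
  -- `maxSep` is an `sSup` in `ℕ`, which is junk (`0`) unless the set is bounded.
  have hbdd : BddAbove {n : ℕ | ∃ Q : Finset X,
      (∀ p ∈ Q, ∀ q ∈ Q, p ≠ q → ε < dist p q) ∧ Q.card = n} := by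
    refine ⟨(packingNumber ε.toNNReal (univ : Set X)).toNat, ?_⟩
    rintro _ ⟨Q, hQ, rfl⟩
    have := (isSeparated_ofReal_coe_finset_iff.2 hQ).encard_le_packingNumber (subset_univ _)
    rw [Set.encard_coe_eq_coe_finsetCard] at this
    simpa using ENat.toNat_le_toNat this hfin
  refine ⟨hC.toFinset, le_csSup hbdd ⟨hC.toFinset, ?_, rfl⟩, fun x ↦ ?_⟩
  · rw [← isSeparated_ofReal_coe_finset_iff, Set.Finite.coe_toFinset]
    exact isSeparated_maximalSeparatedSet
  · obtain ⟨q, hq, hxq⟩ := isCover_maximalSeparatedSet hfin (mem_univ x)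
    exact ⟨q, hC.mem_toFinset.2 hq, (edist_le_ofReal hε.le).1 hxq⟩

end Packing

section Shift

variable {G X : Type*}

lemma dynDist_le {T : G → X → X} {d : X → X → ℝ} {F : Finset G} {x y : X} {c : ℝ}
    (hc : 0 ≤ c) (h : ∀ g ∈ F, d (T g x) (T g y) ≤ c) : dynDist T d F x y ≤ c := by
  unfold dynDist
  split_ifs with hF
  · exact Finset.sup'_le hF _ h
  · exact hc

lemma sepNum_le_of_forall_card_le {T : G → X → X} {d : X → X → ℝ} {F : Finset G} {δ : ℝ}
    {E : Set X} {n : ℕ} (h : ∀ K, IsSeparatedSet T d F δ E K → K.card ≤ n) : sepNum T d F δ E ≤ n :=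
  csSup_le' <| by rintro _ ⟨K, hK, rfl⟩; exact h K hK

lemma card_le_card_pow_of_injOn_comp {ι : Type*} {K : Finset (ι → X)} {Q : Finset X}
    (A : Finset ι) {r : X → X} (hr : ∀ p, r p ∈ Q)
    (hK : ∀ x ∈ K, ∀ y ∈ K, (∀ i ∈ A, r (x i) = r (y i)) → x = y) :
    K.card ≤ Q.card ^ A.card := by
  classical
  calc K.card ≤ (Fintype.piFinset fun _ : A ↦ Q).card := by
        refine Finset.card_le_card_of_injOn (fun x i ↦ r (x i)) (fun x _ ↦ ?_) ?_
        · simpa [Fintype.mem_piFinset] using fun i _ ↦ hr _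
        · intro x hx y hy hxy
          exact hK x hx y hy fun i hi ↦ congrFun hxy ⟨i, hi⟩
    _ = Q.card ^ A.card := by simp

variable [MetricSpace X] {α : G → ℝ}

lemma bigD_le_of_dist_le (hα : ∀ g, 0 ≤ α g) (hsum : Summable α) (S : Finset G)
    {x y : G → X} {c H : ℝ} (hS : ∀ g ∈ S, dist (x g) (y g) ≤ c) (hH : ∀ g, dist (x g) (y g) ≤ H) :
    bigD α x y ≤ (∑ g ∈ S, α g) * c + (∑' g : {g // g ∉ S}, α g) * H := by
  have hsum' : Summable fun g ↦ α g * dist (x g) (y g) :=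
    (hsum.mul_right H).of_nonneg_of_le (fun g ↦ mul_nonneg (hα g) dist_nonneg)
      fun g ↦ mul_le_mul_of_nonneg_left (hH g) (hα g)
  rw [bigD, ← hsum'.sum_add_tsum_subtype_compl S, Finset.sum_mul, ← tsum_mul_right]
  refine add_le_add (Finset.sum_le_sum fun g hg ↦ mul_le_mul_of_nonneg_left (hS g hg) (hα g)) ?_
  exact (hsum'.subtype _).tsum_le_tsum (fun g ↦ mul_le_mul_of_nonneg_left (hH g) (hα g))
    ((hsum.mul_right H).subtype _)

variable [Group G] [DecidableEq G]

lemma dynDist_shift_bigD_le (hα : ∀ g, 0 ≤ α g) (hsum : Summable α) (S F : Finset G)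
    {x y : G → X} {c H : ℝ} (hc : 0 ≤ c) (hH₀ : 0 ≤ H)
    (hS : ∀ g ∈ S * F, dist (x g) (y g) ≤ c) (hH : ∀ g, dist (x g) (y g) ≤ H) :
    dynDist shift (bigD α) F x y ≤ (∑ g ∈ S, α g) * c + (∑' g : {g // g ∉ S}, α g) * H := by
  have hbound : 0 ≤ (∑ g ∈ S, α g) * c + (∑' g : {g // g ∉ S}, α g) * H :=
    add_nonneg (mul_nonneg (Finset.sum_nonneg fun g _ ↦ hα g) hc)
      (mul_nonneg (tsum_nonneg fun g ↦ hα g) hH₀)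
  refine dynDist_le hbound fun h hh ↦ bigD_le_of_dist_le hα hsum S (fun g hg ↦ ?_) fun g ↦ hH _
  exact hS _ (Finset.mul_mem_mul hg hh)

end Shift

theorem sepNum_shift_le_general {G X : Type*} [Group G] [DecidableEq G]
    [MetricSpace X] [CompactSpace X]
    (α : G → ℝ) (hαpos : ∀ g, 0 < α g) (hα1 : α (1 : G) = 1) (hsum : Summable α)
    (H : ℝ) (hH : H = Metric.diam (Set.univ : Set X))
    (l : ℝ) (hl : l = ∑' g, α g)
    (ε : ℝ) (hε0 : 0 < ε)
    (S : Finset G)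
    (htail : (∑' g : {g : G // g ∉ S}, α g) ≤ ε / (2 * H))
    (F : Finset G) :
    sepNum shift (bigD α) F (3 * l * ε) (Set.univ : Set (G → X))
      ≤ maxSep X ε ^ (S * F).card := by
  have hα : ∀ g, 0 ≤ α g := fun g ↦ (hαpos g).le
  have hH₀ : 0 ≤ H := hH ▸ Metric.diam_nonneg
  have hdist : ∀ a b : X, dist a b ≤ H := fun a b ↦
    hH ▸ Metric.dist_le_diam_of_mem isCompact_univ.isBounded (mem_univ a) (mem_univ b)
  have hl₁ : 1 ≤ l := hl ▸ hα1 ▸ hsum.le_tsum 1 fun g _ ↦ hα g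
  have hSl : ∑ g ∈ S, α g ≤ l := hl ▸ hsum.sum_le_tsum S fun g _ ↦ hα g
  have htail' : (∑' g : {g : G // g ∉ S}, α g) * (2 * H) ≤ ε :=
    mul_le_of_le_div₀ hε0.le (by positivity) htail
  obtain ⟨Q, hQ, hcover⟩ := exists_finset_card_le_maxSep_forall_dist_le (X := X) hε0
  choose r hrQ hr using hcover
  refine sepNum_le_of_forall_card_le fun K ⟨_, hK⟩ ↦ (card_le_card_pow_of_injOn_comp (S * F) hrQ
    fun x hx y hy hxy ↦ ?_).trans (Nat.pow_le_pow_left hQ _)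
  by_contra hne
  have hclose : ∀ g ∈ S * F, dist (x g) (y g) ≤ 2 * ε := fun g hg ↦ calc
    dist (x g) (y g) ≤ dist (x g) (r (x g)) + dist (y g) (r (x g)) := dist_triangle_right _ _ _
    _ ≤ ε + ε := add_le_add (hr _) (hxy g hg ▸ hr _)
    _ = 2 * ε := by ring
  have hsep := (hK x hx y hy hne).trans_le <|
    dynDist_shift_bigD_le hα hsum S F (by positivity) hH₀ hclose fun g ↦ hdist _ _
  nlinarith

/-- `s_F(𝒅, 3lε, X^G) ≤ N(ε)^{|SF|}`. -/
theorem sepNum_shift_le {G X : Type*} [Group G] [Countable G] [DecidableEq G]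
    [MetricSpace X] [CompactSpace X]
    (α : G → ℝ) (hαpos : ∀ g, 0 < α g) (hα1 : α (1 : G) = 1) (hsum : Summable α)
    (H : ℝ) (hH : H = Metric.diam (Set.univ : Set X)) (hHpos : 0 < H)
    (l : ℝ) (hl : l = ∑' g, α g)
    (ε : ℝ) (hε0 : 0 < ε) (hε1 : ε < 1 / 2)
    (S : Finset G) (hSne : S.Nonempty)
    (htail : (∑' g : {g : G // g ∉ S}, α g) ≤ ε / (2 * H))
    (F : Finset G) (hF : F.Nonempty) :
    sepNum shift (bigD α) F (3 * l * ε) (Set.univ : Set (G → X))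
      ≤ maxSep X ε ^ (S * F).card :=
  sepNum_shift_le_general α hαpos hα1 hsum H hH l hl ε hε0 S htail F

end MeanDim10
end

section
/- Let G be a countable discrete group admitting a Følner sequence {F_n}, let (X,d) be a compact metric space, and let X^G carry the shift action and the metric 𝒅 as in the context. Then overline{mdim}_M(X^G, G, 𝒅) ≤ overline{dim}_B(X,d) and underline{mdim}_M(X^G, G, 𝒅) ≤ underline{dim}_B(X,d), where the metric mean dimensions are computed with respect to {F_n}. -/
open Filter Set Topology
open scoped ENNReal

namespace MeanDim11

/-- The shift action of `G` on `X^G`: `(σ^h x)_g = x_{gh}`. -/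
def shift {G X : Type*} [Group G] (h : G) (x : G → X) : G → X := fun g => x (g * h)

/-- The metric `𝒅((x_g),(y_g)) = Σ_g α_g d(x_g, y_g)` on `X^G`. -/
noncomputable def bigD {G X : Type*} [MetricSpace X] (α : G → ℝ) (x y : G → X) : ℝ :=
  ∑' g, α g * dist (x g) (y g)

/-- The dynamical (Bowen) metric `d_F(x,y) = max_{g ∈ F} d(gx, gy)`. -/
noncomputable def dynDist {G X : Type*} (T : G → X → X) (d : X → X → ℝ)
    (F : Finset G) (x y : X) : ℝ :=
  if h : F.Nonempty then F.sup' h (fun g => d (T g x) (T g y)) else 0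

/-- `K` is an `(F,ε)`-spanning subset of `E`. -/
def IsSpanningSet {G X : Type*} (T : G → X → X) (d : X → X → ℝ)
    (F : Finset G) (ε : ℝ) (E : Set X) (K : Finset X) : Prop :=
  ↑K ⊆ E ∧ ∀ x ∈ E, ∃ y ∈ K, dynDist T d F x y ≤ ε

/-- `r_F(d,ε,E)`: minimal cardinality of an `(F,ε)`-spanning subset of `E`. -/
noncomputable def spanNum {G X : Type*} (T : G → X → X) (d : X → X → ℝ)
    (F : Finset G) (ε : ℝ) (E : Set X) : ℕ :=
  sInf {n : ℕ | ∃ K : Finset X, IsSpanningSet T d F ε E K ∧ K.card = n}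

/-- `{F n}` is a Følner sequence of nonempty finite subsets of `G`. -/
def IsFolner {G : Type*} [Group G] (Fs : ℕ → Finset G) : Prop :=
  letI := Classical.decEq G
  (∀ n, (Fs n).Nonempty) ∧
    ∀ g : G, Tendsto
      (fun n => (((Fs n) \ (Fs n).image (fun h => g * h)).card : ℝ) / ((Fs n).card : ℝ))
      atTop (𝓝 0)

/-- Upper metric mean dimension (via spanning numbers), w.r.t. a Følner sequence. -/
noncomputable def mdimMUpper {G X : Type*} (T : G → X → X) (d : X → X → ℝ)
    (Fs : ℕ → Finset G) (E : Set X) : ℝ≥0∞ :=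
  limsup (fun ε : ℝ =>
      (limsup (fun n =>
          ENNReal.ofReal (Real.log (spanNum T d (Fs n) ε E : ℝ) / ((Fs n).card : ℝ))) atTop)
        / ENNReal.ofReal |Real.log ε|) (𝓝[>] (0 : ℝ))

/-- Lower metric mean dimension (via spanning numbers), w.r.t. a Følner sequence. -/
noncomputable def mdimMLower {G X : Type*} (T : G → X → X) (d : X → X → ℝ)
    (Fs : ℕ → Finset G) (E : Set X) : ℝ≥0∞ :=
  liminf (fun ε : ℝ =>
      (limsup (fun n =>
          ENNReal.ofReal (Real.log (spanNum T d (Fs n) ε E : ℝ) / ((Fs n).card : ℝ))) atTop)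
        / ENNReal.ofReal |Real.log ε|) (𝓝[>] (0 : ℝ))

/-- `N(ε)`: maximal cardinality of an `ε`-separated subset of `X`. -/
noncomputable def maxSep (X : Type*) [MetricSpace X] (ε : ℝ) : ℕ :=
  sSup {n : ℕ | ∃ Q : Finset X, (∀ p ∈ Q, ∀ q ∈ Q, p ≠ q → ε < dist p q) ∧ Q.card = n}

/-- Upper box (Minkowski) dimension of `(X,d)`. -/
noncomputable def boxUpper (X : Type*) [MetricSpace X] : ℝ≥0∞ :=
  limsup (fun ε : ℝ => ENNReal.ofReal (Real.log (maxSep X ε : ℝ) / |Real.log ε|))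
    (𝓝[>] (0 : ℝ))

/-- Lower box (Minkowski) dimension of `(X,d)`. -/
noncomputable def boxLower (X : Type*) [MetricSpace X] : ℝ≥0∞ :=
  liminf (fun ε : ℝ => ENNReal.ofReal (Real.log (maxSep X ε : ℝ) / |Real.log ε|))
    (𝓝[>] (0 : ℝ))

/-!
A maximal `η`-separated set `Q ⊆ X` is an `η`-net with `N(η)` points. Since `∑ α_g < ∞`, two points
of `X^G` whose coordinates on a large finite `E ⊆ G` are `η`-close are `ε`-close for `𝒅` once
`(∑ α_g) η < ε`; hence `r_F(𝒅, ε, X^G) ≤ N(η)^{|E F|}`, and `|E F_n| ≤ (1 + δ) |F_n|` eventually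
by the Følner property. So the inner `limsup` is at most `log N(c ε)` for a fixed `c > 0`, and
replacing `ε` by `c ε` does not change `|log ε|` asymptotically.
-/

section Separated

variable {X : Type*} [MetricSpace X] [CompactSpace X]

lemma bddAbove_card_separated {ε : ℝ} (hε : 0 < ε) :
    BddAbove {n : ℕ | ∃ Q : Finset X,
      (∀ p ∈ Q, ∀ q ∈ Q, p ≠ q → ε < dist p q) ∧ Q.card = n} := by
  obtain ⟨t, -, htf, hcov⟩ :=
    finite_cover_balls_of_compact (isCompact_univ (X := X)) (half_pos hε)
  have hcenter : ∀ q : X, ∃ z ∈ t, dist q z < ε / 2 := fun q => by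
    simpa [Metric.mem_ball] using hcov (mem_univ q)
  choose f hft hf using hcenter
  refine ⟨htf.toFinset.card, ?_⟩
  rintro n ⟨Q, hQ, rfl⟩
  -- two points of `Q` sharing a centre would be `ε`-close
  refine Finset.card_le_card_of_injOn f (fun q _ => htf.mem_toFinset.mpr (hft q)) ?_
  intro p hp q hq hpq
  by_contra hne
  linarith [hQ p hp q hq hne, dist_triangle_right p q (f q), hpq ▸ hf p, hf q]

lemma exists_finset_card_eq_maxSep_net {ε : ℝ} (hε : 0 < ε) :
    ∃ Q : Finset X, Q.card = maxSep X ε ∧ ∀ x : X, ∃ q ∈ Q, dist x q ≤ ε := by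
  classical
  obtain ⟨Q, hQ, hcard⟩ :=
    Nat.sSup_mem (by exact ⟨0, ∅, by simp, rfl⟩) (bddAbove_card_separated (X := X) hε)
  replace hcard : Q.card = maxSep X ε := hcard
  refine ⟨Q, hcard, fun x => ?_⟩
  -- a maximal separated set is a net: otherwise `x` could be added to it
  by_contra! hx
  have hxQ : x ∉ Q := fun h => by simpa using hε.trans (hx x h)
  have hsep : ∀ p ∈ insert x Q, ∀ q ∈ insert x Q, p ≠ q → ε < dist p q := by
    simp only [Finset.mem_insert]
    rintro p (rfl | hp) q (rfl | hq) hpq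
    · exact absurd rfl hpq
    · exact hx q hq
    · exact dist_comm p q ▸ hx p hp
    · exact hQ p hp q hq hpq
  have := le_csSup (bddAbove_card_separated hε) ⟨insert x Q, hsep, rfl⟩
  rw [Finset.card_insert_of_notMem hxQ] at this
  exact Nat.lt_irrefl _ (hcard ▸ this)

end Separated


lemma dynDist_le {G X : Type*} {T : G → X → X} {d : X → X → ℝ} {F : Finset G} {x y : X}
    {ε : ℝ} (hF : F.Nonempty) (h : ∀ g ∈ F, d (T g x) (T g y) ≤ ε) : dynDist T d F x y ≤ ε := by
  rw [dynDist, dif_pos hF]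
  exact Finset.sup'_le hF _ h

lemma spanNum_le_card {G X : Type*} {T : G → X → X} {d : X → X → ℝ} {F : Finset G} {ε : ℝ}
    {E : Set X} {K : Finset X} (hK : IsSpanningSet T d F ε E K) :
    spanNum T d F ε E ≤ K.card :=
  Nat.sInf_le ⟨K, hK, rfl⟩

section Shift

variable {G X : Type*} [MetricSpace X] {α : G → ℝ}

lemma bigD_le_of_dist_le (hα : ∀ g, 0 ≤ α g) (hsum : Summable α) [CompactSpace X]
    {E : Finset G} {x y : G → X} {η : ℝ} (hη : 0 ≤ η) (hxy : ∀ g ∈ E, dist (x g) (y g) ≤ η) :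
    bigD α x y ≤
      (∑' g, α g) * η + (∑' g : ↑((E : Set G)ᶜ), α g) * Metric.diam (univ : Set X) := by
  set C := Metric.diam (univ : Set X)
  have hC : ∀ a b : X, dist a b ≤ C := fun a b =>
    Metric.dist_le_diam_of_mem isCompact_univ.isBounded trivial trivial
  have hsummable : Summable fun g => α g * dist (x g) (y g) :=
    (hsum.mul_right C).of_nonneg_of_le (fun g => mul_nonneg (hα g) dist_nonneg)
      (fun g => mul_le_mul_of_nonneg_left (hC _ _) (hα g))
  rw [bigD, ← hsummable.sum_add_tsum_compl (s := E)]
  gcongr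
  · calc ∑ g ∈ E, α g * dist (x g) (y g) ≤ ∑ g ∈ E, α g * η :=
          Finset.sum_le_sum fun g hg => mul_le_mul_of_nonneg_left (hxy g hg) (hα g)
      _ ≤ (∑' g, α g) * η := by
          rw [← Finset.sum_mul]
          exact mul_le_mul_of_nonneg_right (hsum.sum_le_tsum E fun g _ => hα g) hη
  · rw [← tsum_mul_right]
    exact (hsummable.subtype _).tsum_le_tsum
      (fun g => mul_le_mul_of_nonneg_left (hC _ _) (hα g)) ((hsum.subtype _).mul_right C)

open scoped Pointwise in
lemma spanNum_shift_le_maxSep_pow [Group G] [DecidableEq G] [CompactSpace X]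
    (hα : ∀ g, 0 ≤ α g) (hsum : Summable α) {ε η : ℝ} (hη : 0 < η) {E F : Finset G}
    (hF : F.Nonempty)
    (hε : (∑' g, α g) * η + (∑' g : ↑((E : Set G)ᶜ), α g) * Metric.diam (univ : Set X) ≤ ε) :
    spanNum shift (bigD α) F ε (univ : Set (G → X)) ≤ maxSep X η ^ (E * F).card := by
  classical
  rcases isEmpty_or_nonempty X with hX | ⟨⟨x₀⟩⟩
  · exact (spanNum_le_card (K := ∅) ⟨by simp, fun x _ => (hX.false (x 1)).elim⟩).trans (by simp)
  obtain ⟨Q, hQcard, hQnet⟩ := exists_finset_card_eq_maxSep_net (X := X) hη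
  -- for `h ∈ F`, the `E`-coordinates of `shift h x` are coordinates of `x` in `E * F`
  let ext : (↥(E * F) → X) → G → X := fun q g => if h : g ∈ E * F then q ⟨g, h⟩ else x₀
  calc spanNum shift (bigD α) F ε univ
      ≤ ((Fintype.piFinset fun _ : ↥(E * F) => Q).image ext).card := by
        refine spanNum_le_card ⟨subset_univ _, fun x _ => ?_⟩
        choose q hq hqx using fun a : ↥(E * F) => hQnet (x a)
        refine ⟨ext q, Finset.mem_image_of_mem _ (Fintype.mem_piFinset.2 hq),
          dynDist_le hF fun h hh => (bigD_le_of_dist_le hα hsum hη.le fun g hg => ?_).trans hε⟩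
        have hgh : g * h ∈ E * F := Finset.mul_mem_mul hg hh
        simpa only [shift, ext, dif_pos hgh] using hqx ⟨g * h, hgh⟩
    _ ≤ (Fintype.piFinset fun _ : ↥(E * F) => Q).card := Finset.card_image_le
    _ = maxSep X η ^ (E * F).card := by simp [hQcard]

end Shift

section Folner

open scoped Pointwise

variable {G : Type*} [Group G] [DecidableEq G]

lemma card_mul_le_card_add_sum_card_sdiff (E F : Finset G) :
    (E * F).card ≤ F.card + ∑ g ∈ E, (F \ F.image (g * ·)).card := by
  have hsub : E * F ⊆ F ∪ E.biUnion fun g => F.image (g * ·) \ F := by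
    intro a ha
    obtain ⟨g, hg, h, hh, rfl⟩ := Finset.mem_mul.mp ha
    by_cases hgh : g * h ∈ F
    · exact Finset.mem_union_left _ hgh
    · exact Finset.mem_union_right _ <| Finset.mem_biUnion.mpr
        ⟨g, hg, Finset.mem_sdiff.mpr ⟨Finset.mem_image_of_mem _ hh, hgh⟩⟩
  calc (E * F).card ≤ F.card + (E.biUnion fun g => F.image (g * ·) \ F).card :=
        (Finset.card_le_card hsub).trans (Finset.card_union_le _ _)
    _ ≤ F.card + ∑ g ∈ E, (F.image (g * ·) \ F).card := by
        gcongr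
        exact Finset.card_biUnion_le
    _ = F.card + ∑ g ∈ E, (F \ F.image (g * ·)).card := by
        congr 1
        refine Finset.sum_congr rfl fun g _ => Finset.card_sdiff_comm ?_
        exact Finset.card_image_of_injective _ (mul_right_injective g)

lemma IsFolner.eventually_card_mul_le {Fs : ℕ → Finset G} (hFol : IsFolner Fs) (E : Finset G)
    {δ : ℝ} (hδ : 0 < δ) :
    ∀ᶠ n in atTop, ((E * Fs n).card : ℝ) ≤ (1 + δ) * (Fs n).card := by
  obtain ⟨hne, hF⟩ := hFol
  have hsum : Tendsto
      (fun n => ∑ g ∈ E, ((Fs n \ (Fs n).image (g * ·)).card : ℝ) / (Fs n).card) atTop (𝓝 0) := by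
    rw [← Finset.sum_const_zero (s := E)]
    exact tendsto_finsetSum E fun g _ => by convert hF g
  filter_upwards [(tendsto_order.1 hsum).2 δ hδ] with n hn
  have hpos : (0 : ℝ) < (Fs n).card := by exact_mod_cast (hne n).card_pos
  rw [← Finset.sum_div, div_lt_iff₀ hpos] at hn
  have : ((E * Fs n).card : ℝ) ≤
      (Fs n).card + ∑ g ∈ E, ((Fs n \ (Fs n).image (g * ·)).card : ℝ) :=
    mod_cast card_mul_le_card_add_sum_card_sdiff E (Fs n)
  linarith

end Folner

lemma log_natCast_le_log_natCast {m n : ℕ} (h : m ≤ n) : Real.log m ≤ Real.log n := by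
  rcases m.eq_zero_or_pos with rfl | hm
  · simpa using Real.log_natCast_nonneg n
  · exact Real.log_le_log (by exact_mod_cast hm) (by exact_mod_cast h)

open scoped Pointwise in
lemma limsup_log_spanNum_shift_le {G X : Type*} [Group G] [MetricSpace X] [CompactSpace X]
    {α : G → ℝ} (hα : ∀ g, 0 ≤ α g) (hsum : Summable α) {Fs : ℕ → Finset G}
    (hFol : IsFolner Fs) {ε η : ℝ} (hη : 0 < η) (hηε : (∑' g, α g) * η < ε) :
    limsup (fun n => ENNReal.ofReal
        (Real.log (spanNum shift (bigD α) (Fs n) ε (univ : Set (G → X))) / (Fs n).card)) atTop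
      ≤ ENNReal.ofReal (Real.log (maxSep X η)) := by
  classical
  obtain ⟨E, hE⟩ : ∃ E : Finset G,
      (∑' g : ↑((E : Set G)ᶜ), α g) * Metric.diam (univ : Set X) < ε - (∑' g, α g) * η := by
    have := (tendsto_tsum_compl_atTop_zero α).mul_const (Metric.diam (univ : Set X))
    rw [zero_mul] at this
    exact (this.eventually (gt_mem_nhds (sub_pos.2 hηε))).exists
  set N := maxSep X η
  have hbound : ∀ δ > 0, limsup (fun n => ENNReal.ofReal
      (Real.log (spanNum shift (bigD α) (Fs n) ε (univ : Set (G → X))) / (Fs n).card)) atTop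
      ≤ ENNReal.ofReal ((1 + δ) * Real.log N) := fun δ hδ => by
    refine limsup_le_of_le (by isBoundedDefault) ?_
    filter_upwards [hFol.eventually_card_mul_le E hδ] with n hn
    refine ENNReal.ofReal_le_ofReal ?_
    rw [div_le_iff₀ (by exact_mod_cast (hFol.1 n).card_pos)]
    calc Real.log (spanNum shift (bigD α) (Fs n) ε univ)
        ≤ Real.log (N ^ (E * Fs n).card : ℕ) := log_natCast_le_log_natCast <|
          spanNum_shift_le_maxSep_pow hα hsum hη (hFol.1 n) (by linarith)
      _ = (E * Fs n).card * Real.log N := by push_cast; exact Real.log_pow _ _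
      _ ≤ (1 + δ) * (Fs n).card * Real.log N :=
          mul_le_mul_of_nonneg_right hn (Real.log_natCast_nonneg N)
      _ = (1 + δ) * Real.log N * (Fs n).card := by ring
  have hlim : Tendsto (fun δ : ℝ => ENNReal.ofReal ((1 + δ) * Real.log N)) (𝓝[>] 0)
      (𝓝 (ENNReal.ofReal (Real.log N))) := by
    refine ENNReal.tendsto_ofReal (tendsto_nhdsWithin_of_tendsto_nhds ?_)
    exact Continuous.tendsto' (by fun_prop) 0 _ (by simp)
  exact ge_of_tendsto hlim (eventually_nhdsWithin_of_forall hbound)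

section Scaling

open Real

lemma map_const_mul_nhdsGT_zero {c : ℝ} (hc : 0 < c) : map (c * ·) (𝓝[>] 0) = 𝓝[>] 0 := by
  conv_lhs => rw [← comap_mulLeft_nhdsGT_zero hc]
  exact map_comap_of_surjective (mul_left_surjective₀ hc.ne') _

lemma tendsto_abs_log_const_mul_div_abs_log {c : ℝ} (hc : 0 < c) :
    Tendsto (fun ε => |log (c * ε)| / |log ε|) (𝓝[>] 0) (𝓝 1) := by
  have hlog := tendsto_log_nhdsGT_zero
  have : Tendsto (fun ε => |log c / log ε + 1|) (𝓝[>] 0) (𝓝 1) := by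
    simpa using ((tendsto_const_nhds.div_atBot hlog).add_const 1).abs
  refine this.congr' ?_
  filter_upwards [self_mem_nhdsWithin, hlog.eventually_lt_atBot 0] with ε hε hneg
  rw [log_mul hc.ne' (ne_of_gt hε), ← abs_div, add_div, div_self hneg.ne]

lemma eventually_ofReal_comp_const_mul_div_eq (f : ℝ → ℝ) {c : ℝ} (hc : 0 < c) :
    ∀ᶠ ε in 𝓝[>] 0, ENNReal.ofReal (f (c * ε)) / ENNReal.ofReal |log ε| =
      ENNReal.ofReal (|log (c * ε)| / |log ε|) *
        ENNReal.ofReal (f (c * ε) / |log (c * ε)|) := by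
  have hlog := tendsto_log_nhdsGT_zero
  have hlog_mul := hlog.comp (map_const_mul_nhdsGT_zero hc).le
  filter_upwards [hlog.eventually_lt_atBot 0, hlog_mul.eventually_lt_atBot 0] with ε hε hcε
  have hcε : |log (c * ε)| ≠ 0 := abs_ne_zero.2 hcε.ne
  rw [← ENNReal.ofReal_div_of_pos (abs_pos.2 hε.ne), ← ENNReal.ofReal_mul (by positivity),
    mul_comm (|log (c * ε)| / _), div_mul_div_cancel₀ hcε]

lemma limsup_ofReal_abs_log_const_mul_div_abs_log {c : ℝ} (hc : 0 < c) :
    limsup (fun ε => ENNReal.ofReal (|log (c * ε)| / |log ε|)) (𝓝[>] 0) = 1 := by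
  simpa using (ENNReal.tendsto_ofReal (tendsto_abs_log_const_mul_div_abs_log hc)).limsup_eq

lemma limsup_ofReal_comp_const_mul_div_le (f : ℝ → ℝ) {c : ℝ} (hc : 0 < c) :
    limsup (fun ε => ENNReal.ofReal (f (c * ε)) / ENNReal.ofReal |log ε|) (𝓝[>] 0) ≤
      limsup (fun ε => ENNReal.ofReal (f ε / |log ε|)) (𝓝[>] 0) := by
  have hratio := limsup_ofReal_abs_log_const_mul_div_abs_log hc
  rw [limsup_congr (eventually_ofReal_comp_const_mul_div_eq f hc)]
  refine (ENNReal.limsup_mul_le' (by simp [hratio]) (by simp [hratio])).trans_eq ?_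
  rw [hratio, one_mul, ← Function.comp_def (fun ε => ENNReal.ofReal (f ε / |log ε|)) (c * ·),
    limsup_comp, map_const_mul_nhdsGT_zero hc]

lemma liminf_ofReal_comp_const_mul_div_le (f : ℝ → ℝ) {c : ℝ} (hc : 0 < c) :
    liminf (fun ε => ENNReal.ofReal (f (c * ε)) / ENNReal.ofReal |log ε|) (𝓝[>] 0) ≤
      liminf (fun ε => ENNReal.ofReal (f ε / |log ε|)) (𝓝[>] 0) := by
  have hratio := limsup_ofReal_abs_log_const_mul_div_abs_log hc
  rw [liminf_congr (eventually_ofReal_comp_const_mul_div_eq f hc)]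
  refine (ENNReal.liminf_mul_le (by simp [hratio]) (by simp [hratio])).trans_eq ?_
  rw [hratio, one_mul, ← Function.comp_def (fun ε => ENNReal.ofReal (f ε / |log ε|)) (c * ·),
    liminf_comp, map_const_mul_nhdsGT_zero hc]

end Scaling

theorem mdimM_shift_le_box_general {G X : Type*} [Group G]
    [MetricSpace X] [CompactSpace X]
    (α : G → ℝ) (hαpos : ∀ g, 0 < α g) (hsum : Summable α)
    (Fs : ℕ → Finset G) (hFol : IsFolner Fs) :
    mdimMUpper shift (bigD α) Fs (Set.univ : Set (G → X)) ≤ boxUpper X ∧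
    mdimMLower shift (bigD α) Fs (Set.univ : Set (G → X)) ≤ boxLower X := by
  have hα : ∀ g, 0 ≤ α g := fun g => (hαpos g).le
  have hS : 0 ≤ ∑' g, α g := tsum_nonneg hα
  set c := (∑' g, α g + 1)⁻¹
  have hc : 0 < c := inv_pos.2 (by linarith)
  have hev : ∀ᶠ ε in 𝓝[>] 0,
      limsup (fun n => ENNReal.ofReal
          (Real.log (spanNum shift (bigD α) (Fs n) ε (univ : Set (G → X))) / (Fs n).card)) atTop
        / ENNReal.ofReal |Real.log ε|
      ≤ ENNReal.ofReal (Real.log (maxSep X (c * ε))) / ENNReal.ofReal |Real.log ε| := by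
    filter_upwards [self_mem_nhdsWithin] with ε (hε : 0 < ε)
    refine ENNReal.div_le_div_right
      (limsup_log_spanNum_shift_le hα hsum hFol (mul_pos hc hε) ?_) _
    rw [← mul_assoc]
    refine mul_lt_of_lt_one_left hε ?_
    rw [← div_eq_mul_inv, div_lt_one (by linarith)]
    exact lt_add_one _
  exact ⟨(limsup_le_limsup hev).trans
      (limsup_ofReal_comp_const_mul_div_le (fun ε => Real.log (maxSep X ε)) hc),
    (liminf_le_liminf hev).trans
      (liminf_ofReal_comp_const_mul_div_le (fun ε => Real.log (maxSep X ε)) hc)⟩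

/-- the metric mean dimension of the shift on `(X^G, 𝒅)` is bounded
above by the corresponding box dimension of `(X,d)`. -/
theorem mdimM_shift_le_box {G X : Type*} [Group G] [Countable G]
    [MetricSpace X] [CompactSpace X]
    (α : G → ℝ) (hαpos : ∀ g, 0 < α g) (hα1 : α (1 : G) = 1) (hsum : Summable α)
    (Fs : ℕ → Finset G) (hFol : IsFolner Fs) :
    mdimMUpper shift (bigD α) Fs (Set.univ : Set (G → X)) ≤ boxUpper X ∧
    mdimMLower shift (bigD α) Fs (Set.univ : Set (G → X)) ≤ boxLower X :=
  mdimM_shift_le_box_general α hαpos hsum Fs hFol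

end MeanDim11
end

section
/- Let (X,τ) be a compact metrizable topological space, d ∈ X(τ), and let G be a countable discrete group with a Følner sequence {F_n} acting continuously on X. For all α, ε ∈ (0,1): the function d_{α,ε} is a metric in X(τ); D(d, d_{α,ε}) < 2ε; and overline{mdim}_M(X,G,d_{α,ε}) = overline{mdim}_M(X,G,d)/α and underline{mdim}_M(X,G,d_{α,ε}) = underline{mdim}_M(X,G,d)/α (values taken in [0,∞], with ∞/α = ∞). -/
open Filter Set Topology
open scoped ENNReal

namespace MeanDim13

/-- `d` is a metric on `X`. -/
def IsMetricOn {X : Type*} (d : X → X → ℝ) : Prop :=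
  (∀ x y, 0 ≤ d x y) ∧ (∀ x y, d x y = 0 ↔ x = y) ∧
    (∀ x y, d x y = d y x) ∧ ∀ x y z, d x z ≤ d x y + d y z

/-- `d` induces the given topology on `X`. -/
def InducesTopology {X : Type*} [TopologicalSpace X] (d : X → X → ℝ) : Prop :=
  ∀ (x : X) (s : Set X), s ∈ 𝓝 x ↔ ∃ ε > 0, {y : X | d x y < ε} ⊆ s

/-- `T` is a continuous (left) action of `G` on `X`. -/
def IsContAction {G X : Type*} [Group G] [TopologicalSpace X] (T : G → X → X) : Prop :=
  (∀ x : X, T 1 x = x) ∧ (∀ g h : G, ∀ x : X, T (g * h) x = T g (T h x)) ∧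
    ∀ g : G, Continuous (T g)

/-- The dynamical (Bowen) metric `d_F(x,y) = max_{g ∈ F} d(gx, gy)`. -/
noncomputable def dynDist {G X : Type*} (T : G → X → X) (d : X → X → ℝ)
    (F : Finset G) (x y : X) : ℝ :=
  if h : F.Nonempty then F.sup' h (fun g => d (T g x) (T g y)) else 0

/-- `K` is an `(F,ε)`-spanning subset of `E`. -/
def IsSpanningSet {G X : Type*} (T : G → X → X) (d : X → X → ℝ)
    (F : Finset G) (ε : ℝ) (E : Set X) (K : Finset X) : Prop :=
  ↑K ⊆ E ∧ ∀ x ∈ E, ∃ y ∈ K, dynDist T d F x y ≤ ε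

/-- `r_F(d,ε,E)`: minimal cardinality of an `(F,ε)`-spanning subset of `E`. -/
noncomputable def spanNum {G X : Type*} (T : G → X → X) (d : X → X → ℝ)
    (F : Finset G) (ε : ℝ) (E : Set X) : ℕ :=
  sInf {n : ℕ | ∃ K : Finset X, IsSpanningSet T d F ε E K ∧ K.card = n}

/-- The max-metric on the product. -/
def prodDist {X Y : Type*} (dX : X → X → ℝ) (dY : Y → Y → ℝ) (p q : X × Y) : ℝ :=
  max (dX p.1 q.1) (dY p.2 q.2)

/-- The diagonal action on the product. -/
def prodAction {G X Y : Type*} (T : G → X → X) (S : G → Y → Y) (g : G) (p : X × Y) : X × Y :=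
  (T g p.1, S g p.2)

/-- `{F n}` is a Følner sequence of nonempty finite subsets of `G`. -/
def IsFolner {G : Type*} [Group G] (Fs : ℕ → Finset G) : Prop :=
  letI := Classical.decEq G
  (∀ n, (Fs n).Nonempty) ∧
    ∀ g : G, Tendsto
      (fun n => (((Fs n) \ (Fs n).image (fun h => g * h)).card : ℝ) / ((Fs n).card : ℝ))
      atTop (𝓝 0)

/-- Upper metric mean dimension (via spanning numbers), w.r.t. a Følner sequence. -/
noncomputable def mdimMUpper {G X : Type*} (T : G → X → X) (d : X → X → ℝ)
    (Fs : ℕ → Finset G) (E : Set X) : ℝ≥0∞ :=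
  limsup (fun ε : ℝ =>
      (limsup (fun n =>
          ENNReal.ofReal (Real.log (spanNum T d (Fs n) ε E : ℝ) / ((Fs n).card : ℝ))) atTop)
        / ENNReal.ofReal |Real.log ε|) (𝓝[>] (0 : ℝ))

/-- Lower metric mean dimension (via spanning numbers), w.r.t. a Følner sequence. -/
noncomputable def mdimMLower {G X : Type*} (T : G → X → X) (d : X → X → ℝ)
    (Fs : ℕ → Finset G) (E : Set X) : ℝ≥0∞ :=
  liminf (fun ε : ℝ =>
      (limsup (fun n =>
          ENNReal.ofReal (Real.log (spanNum T d (Fs n) ε E : ℝ) / ((Fs n).card : ℝ))) atTop)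
        / ENNReal.ofReal |Real.log ε|) (𝓝[>] (0 : ℝ))


/-- The uniform distance `D(d₁,d₂) = sup_{x,y} |d₁(x,y) − d₂(x,y)|` between two metrics. -/
noncomputable def metrD {X : Type*} (d₁ d₂ : X → X → ℝ) : ℝ :=
  sSup {r : ℝ | ∃ x y : X, r = |d₁ x y - d₂ x y|}

/-- The deformed metric `d_{α,ε}`. -/
noncomputable def dAlphaEps {X : Type*} (d : X → X → ℝ) (α ε : ℝ) (x y : X) : ℝ :=
  if ε ≤ d x y then d x y else ε ^ (1 - α) * d x y ^ α

/-!
Write `d_{α,ε} = φ ∘ d` with `φ t = t` on `[ε, ∞)` and `φ t = ε^{1-α} t^α` on `[0, ε)`. The profile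
`φ` is strictly increasing, subadditive (as `t ↦ t^α` is), vanishes only at `0`, is continuous
there and satisfies `t ≤ φ t < t + ε`; this gives the metric, topology and distance claims.

For `δ < ε` one has `φ t ≤ δ ↔ t ≤ ψ δ` with `ψ δ = (δ / ε^{1-α})^{1/α}`, so the `(F, δ)`-spanning
sets of `d_{α,ε}` are the `(F, ψ δ)`-spanning sets of `d`. Since `ψ` maps `𝓝[>] 0` onto itself and
`log (ψ δ) / log δ → 1/α`, normalizing by `|log δ|` rather than `|log (ψ δ)|` multiplies both the
limsup and the liminf by `1/α`.
-/

section Profile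

variable {α ε : ℝ}

noncomputable def deformProfile (α ε t : ℝ) : ℝ := if ε ≤ t then t else ε ^ (1 - α) * t ^ α

lemma dAlphaEps_apply {X : Type*} (d : X → X → ℝ) (α ε : ℝ) (x y : X) :
    dAlphaEps d α ε x y = deformProfile α ε (d x y) := rfl

lemma deformProfile_of_le {t : ℝ} (h : ε ≤ t) : deformProfile α ε t = t := if_pos h

lemma deformProfile_of_lt {t : ℝ} (h : t < ε) : deformProfile α ε t = ε ^ (1 - α) * t ^ α :=
  if_neg (not_le.mpr h)

lemma rpow_one_sub_mul_rpow_self (hε : 0 < ε) : ε ^ (1 - α) * ε ^ α = ε := by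
  rw [← Real.rpow_add hε, sub_add_cancel, Real.rpow_one]

lemma deformProfile_zero (hα : 0 < α) (hε : 0 < ε) : deformProfile α ε 0 = 0 := by
  rw [deformProfile_of_lt hε, Real.zero_rpow hα.ne', mul_zero]

lemma deformProfile_lt {t : ℝ} (hα : 0 < α) (hε : 0 < ε) (ht : 0 ≤ t) (htε : t < ε) :
    deformProfile α ε t < ε := by
  rw [deformProfile_of_lt htε]
  calc ε ^ (1 - α) * t ^ α < ε ^ (1 - α) * ε ^ α := by gcongr
    _ = ε := rpow_one_sub_mul_rpow_self hε

lemma le_deformProfile {t : ℝ} (hα : α ≤ 1) (ht : 0 ≤ t) : t ≤ deformProfile α ε t := by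
  rcases le_or_gt ε t with htε | htε
  · exact (deformProfile_of_le htε).ge
  · rw [deformProfile_of_lt htε]
    calc t = t ^ (1 - α) * t ^ α := by
          rw [← Real.rpow_add' ht (by simp), sub_add_cancel, Real.rpow_one]
      _ ≤ ε ^ (1 - α) * t ^ α := by gcongr

lemma deformProfile_sub_le {t : ℝ} (hα : 0 < α) (hε : 0 < ε) (ht : 0 ≤ t) :
    deformProfile α ε t - t ≤ ε := by
  rcases le_or_gt ε t with htε | htε
  · rw [deformProfile_of_le htε, sub_self]; exact hε.le
  · linarith [deformProfile_lt hα hε ht htε]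

lemma strictMonoOn_deformProfile (hα : 0 < α) (hε : 0 < ε) :
    StrictMonoOn (deformProfile α ε) (Ici 0) := by
  intro s hs t ht hst
  rcases le_or_gt ε s with hsε | hsε
  · rwa [deformProfile_of_le hsε, deformProfile_of_le (hsε.trans hst.le)]
  rcases le_or_gt ε t with htε | htε
  · rw [deformProfile_of_le htε]
    exact (deformProfile_lt hα hε hs hsε).trans_le htε
  · rw [deformProfile_of_lt hsε, deformProfile_of_lt htε]
    gcongr

lemma deformProfile_add_le {a b : ℝ} (hα : 0 < α) (hα₁ : α ≤ 1) (ha : 0 ≤ a) (hb : 0 ≤ b) :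
    deformProfile α ε (a + b) ≤ deformProfile α ε a + deformProfile α ε b := by
  rcases le_or_gt ε (a + b) with habε | habε
  · rw [deformProfile_of_le habε]
    exact add_le_add (le_deformProfile hα₁ ha) (le_deformProfile hα₁ hb)
  · rw [deformProfile_of_lt habε, deformProfile_of_lt (by linarith),
      deformProfile_of_lt (by linarith), ← mul_add]
    have hε : 0 < ε := by linarith
    gcongr
    exact Real.rpow_add_le_add_rpow ha hb hα.le hα₁

lemma tendsto_deformProfile_nhdsGE_zero (hα : 0 < α) (hε : 0 < ε) :
    Tendsto (deformProfile α ε) (𝓝[≥] 0) (𝓝 0) := by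
  have hpow : ContinuousAt (fun t : ℝ => ε ^ (1 - α) * t ^ α) 0 :=
    continuousAt_const.mul (Real.continuousAt_rpow_const 0 α (Or.inr hα.le))
  have hlim := hpow.tendsto
  rw [Real.zero_rpow hα.ne', mul_zero] at hlim
  refine (hlim.congr' ?_).mono_left nhdsWithin_le_nhds
  filter_upwards [Iio_mem_nhds hε] with t ht
  exact (deformProfile_of_lt ht).symm

lemma deformProfile_le_iff {t δ : ℝ} (hα : 0 < α) (hε : 0 < ε) (ht : 0 ≤ t)
    (hδ : δ ∈ Ioo 0 ε) :
    deformProfile α ε t ≤ δ ↔ t ≤ (δ / ε ^ (1 - α)) ^ α⁻¹ := by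
  set s := (δ / ε ^ (1 - α)) ^ α⁻¹
  have hc : 0 < ε ^ (1 - α) := Real.rpow_pos_of_pos hε _
  have hs : 0 ≤ s := Real.rpow_nonneg (div_nonneg hδ.1.le hc.le) _
  have hpow : ε ^ (1 - α) * s ^ α = δ := by
    rw [Real.rpow_inv_rpow (div_nonneg hδ.1.le hc.le) hα.ne', mul_div_cancel₀ _ hc.ne']
  have hsε : s < ε := by
    by_contra! h
    have : ε ^ (1 - α) * ε ^ α ≤ ε ^ (1 - α) * s ^ α := by gcongr
    rw [rpow_one_sub_mul_rpow_self hε, hpow] at this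
    exact hδ.2.not_ge this
  rw [← hpow, ← deformProfile_of_lt hsε]
  exact (strictMonoOn_deformProfile hα hε).le_iff_le ht hs

end Profile

section Metric

variable {X : Type*} {d : X → X → ℝ} {f : ℝ → ℝ}

lemma IsMetricOn.comp (hd : IsMetricOn d) (hf : StrictMonoOn f (Ici 0)) (hf₀ : f 0 = 0)
    (hsub : ∀ a ≥ 0, ∀ b ≥ 0, f (a + b) ≤ f a + f b) :
    IsMetricOn fun x y => f (d x y) := by
  obtain ⟨hd₀, hdeq, hdsymm, hdtri⟩ := hd
  refine ⟨fun x y => hf₀ ▸ hf.monotoneOn self_mem_Ici (hd₀ x y) (hd₀ x y),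
    fun x y => ?_, fun x y => congrArg f (hdsymm x y), fun x y z => ?_⟩
  · have hinj := hf.injOn.eq_iff (hd₀ x y) (self_mem_Ici : (0 : ℝ) ∈ Ici 0)
    rw [hf₀] at hinj
    exact hinj.trans (hdeq x y)
  · calc f (d x z) ≤ f (d x y + d y z) :=
          hf.monotoneOn (hd₀ x z) (add_nonneg (hd₀ x y) (hd₀ y z)) (hdtri x y z)
      _ ≤ f (d x y) + f (d y z) := hsub _ (hd₀ x y) _ (hd₀ y z)

lemma InducesTopology.comp [TopologicalSpace X] (hc : InducesTopology d)
    (hd₀ : ∀ x y, 0 ≤ d x y) (hle : ∀ t ≥ 0, t ≤ f t) (hf : Tendsto f (𝓝[≥] 0) (𝓝 0)) :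
    InducesTopology fun x y => f (d x y) := by
  intro x s
  rw [hc x s]
  constructor
  · rintro ⟨r, hr, hsub⟩
    exact ⟨r, hr, fun y hy => hsub ((hle _ (hd₀ x y)).trans_lt hy)⟩
  · rintro ⟨r, hr, hsub⟩
    obtain ⟨r', hr', hsmall⟩ := mem_nhdsGE_iff_exists_Ico_subset.mp (hf (Iio_mem_nhds hr))
    exact ⟨r', hr', fun y hy => hsub (hsmall ⟨hd₀ x y, hy⟩)⟩

lemma metrD_le {d₁ d₂ : X → X → ℝ} {c : ℝ} (hc : 0 ≤ c) (h : ∀ x y, |d₁ x y - d₂ x y| ≤ c) :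
    metrD d₁ d₂ ≤ c :=
  Real.sSup_le (by rintro r ⟨x, y, rfl⟩; exact h x y) hc

end Metric

section Dynamics

variable {G X : Type*} {T : G → X → X} {d d' : X → X → ℝ} {F : Finset G}

lemma dynDist_le_iff {x y : X} {δ : ℝ} (hδ : 0 ≤ δ) :
    dynDist T d F x y ≤ δ ↔ ∀ g ∈ F, d (T g x) (T g y) ≤ δ := by
  unfold dynDist
  split_ifs with hF
  · exact Finset.sup'_le_iff hF _
  · simp [Finset.not_nonempty_iff_eq_empty.mp hF, hδ]

lemma spanNum_congr {δ δ' : ℝ} (E : Set X)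
    (h : ∀ x y, dynDist T d' F x y ≤ δ' ↔ dynDist T d F x y ≤ δ) :
    spanNum T d' F δ' E = spanNum T d F δ E := by
  simp only [spanNum, IsSpanningSet, h]

end Dynamics

section LogScale

lemma _root_.ENNReal.limsup_mul_of_tendsto {ι : Type*} {f : Filter ι} [f.NeBot]
    {u v : ι → ℝ≥0∞} {a : ℝ≥0∞} (hv : Tendsto v f (𝓝 a)) (ha₀ : a ≠ 0) (ha : a ≠ ∞) :
    limsup (u * v) f = limsup u f * a := by
  refine le_antisymm ?_ ?_
  · have := ENNReal.limsup_mul_le' (u := u) (Or.inr (hv.limsup_eq ▸ ha))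
      (Or.inr (hv.limsup_eq ▸ ha₀))
    rwa [hv.limsup_eq] at this
  · simpa only [hv.liminf_eq] using ENNReal.le_limsup_mul (u := u) (v := v) (f := f)

lemma _root_.ENNReal.liminf_mul_of_tendsto {ι : Type*} {f : Filter ι} [f.NeBot]
    {u v : ι → ℝ≥0∞} {a : ℝ≥0∞} (hv : Tendsto v f (𝓝 a)) (ha₀ : a ≠ 0) (ha : a ≠ ∞) :
    liminf (u * v) f = liminf u f * a := by
  refine le_antisymm ?_ ?_
  · have := ENNReal.liminf_mul_le (u := v) (v := u) (Or.inl (hv.limsup_eq ▸ ha₀))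
      (Or.inl (hv.limsup_eq ▸ ha))
    rwa [hv.limsup_eq, mul_comm v, mul_comm a] at this
  · simpa only [hv.liminf_eq] using ENNReal.le_liminf_mul (u := u) (v := v) (f := f)

lemma tendsto_nhdsGT_zero_of_continuousAt {g : ℝ → ℝ} (hg : ContinuousAt g 0) (hg₀ : g 0 = 0)
    (hpos : ∀ t > 0, 0 < g t) : Tendsto g (𝓝[>] 0) (𝓝[>] 0) := by
  have hlim := hg.tendsto
  rw [hg₀] at hlim
  exact tendsto_nhdsWithin_iff.mpr
    ⟨hlim.mono_left nhdsWithin_le_nhds, eventually_mem_nhdsWithin.mono hpos⟩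

lemma map_div_rpow_nhdsGT_zero {c p : ℝ} (hc : 0 < c) (hp : 0 < p) :
    map (fun δ => (δ / c) ^ p) (𝓝[>] 0) = 𝓝[>] 0 := by
  have hψ : Tendsto (fun δ => (δ / c) ^ p) (𝓝[>] 0) (𝓝[>] 0) :=
    tendsto_nhdsGT_zero_of_continuousAt
      ((Real.continuousAt_rpow_const _ p (Or.inr hp.le)).comp (continuousAt_id.div_const c))
      (by simp [Real.zero_rpow hp.ne']) fun t ht => by positivity
  have hφ : Tendsto (fun s => c * s ^ p⁻¹) (𝓝[>] 0) (𝓝[>] 0) :=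
    tendsto_nhdsGT_zero_of_continuousAt
      (continuousAt_const.mul (Real.continuousAt_rpow_const _ _ (Or.inr (inv_pos.mpr hp).le)))
      (by simp [Real.zero_rpow (inv_pos.mpr hp).ne']) fun t ht => by positivity
  have hinv : (fun δ => (δ / c) ^ p) ∘ (fun s => c * s ^ p⁻¹) =ᶠ[𝓝[>] 0] id := by
    filter_upwards [self_mem_nhdsWithin] with s (hs : 0 < s)
    simp only [Function.comp_apply, id, mul_div_cancel_left₀ _ hc.ne']
    exact Real.rpow_inv_rpow hs.le hp.ne'
  refine le_antisymm hψ ?_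
  calc 𝓝[>] 0 = map ((fun δ => (δ / c) ^ p) ∘ fun s => c * s ^ p⁻¹) (𝓝[>] 0) := by
        rw [map_congr hinv, map_id]
    _ ≤ map (fun δ => (δ / c) ^ p) (𝓝[>] 0) := by
        rw [← map_map]
        exact map_mono hφ

lemma tendsto_log_div_rpow_div_log {c p : ℝ} (hc : 0 < c) :
    Tendsto (fun δ => Real.log ((δ / c) ^ p) / Real.log δ) (𝓝[>] 0) (𝓝 p) := by
  have hlim : Tendsto (fun δ => p * (1 - Real.log c / Real.log δ)) (𝓝[>] 0) (𝓝 (p * (1 - 0))) :=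
    (tendsto_const_nhds.sub (tendsto_const_nhds.div_atBot Real.tendsto_log_nhdsGT_zero)).const_mul p
  rw [sub_zero, mul_one] at hlim
  refine hlim.congr' ?_
  filter_upwards [Ioo_mem_nhdsGT one_pos] with δ hδ
  have hlog : Real.log δ ≠ 0 := (Real.log_neg hδ.1 hδ.2).ne
  rw [Real.log_rpow (div_pos hδ.1 hc), Real.log_div hδ.1.ne' hc.ne']
  field_simp

lemma div_abs_log_eventuallyEq {A B : ℝ → ℝ≥0∞} {ψ : ℝ → ℝ} (hB : B =ᶠ[𝓝[>] 0] A ∘ ψ)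
    (hψ : Tendsto ψ (𝓝[>] 0) (𝓝[>] 0)) :
    (fun δ => B δ / ENNReal.ofReal |Real.log δ|) =ᶠ[𝓝[>] 0]
      ((fun δ => A δ / ENNReal.ofReal |Real.log δ|) ∘ ψ) *
        fun δ => ENNReal.ofReal |Real.log (ψ δ) / Real.log δ| := by
  filter_upwards [hB, Ioo_mem_nhdsGT one_pos, hψ (Ioo_mem_nhdsGT one_pos)] with δ hBδ hδ hψδ
  have hlogδ : 0 < |Real.log δ| := abs_pos.mpr (Real.log_neg hδ.1 hδ.2).ne
  have hlogψ : ENNReal.ofReal |Real.log (ψ δ)| ≠ 0 := by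
    simpa using (Real.log_neg hψδ.1 hψδ.2).ne
  simp only [Pi.mul_apply, Function.comp_apply, hBδ, abs_div, ENNReal.ofReal_div_of_pos hlogδ,
    ← mul_div_assoc, ENNReal.div_mul_cancel hlogψ ENNReal.ofReal_ne_top]

theorem limsup_div_abs_log_of_eventuallyEq_comp {A B : ℝ → ℝ≥0∞} {ψ : ℝ → ℝ} {a : ℝ}
    (hB : B =ᶠ[𝓝[>] 0] A ∘ ψ) (hψ : map ψ (𝓝[>] 0) = 𝓝[>] 0)
    (hlog : Tendsto (fun δ => Real.log (ψ δ) / Real.log δ) (𝓝[>] 0) (𝓝 a)) (ha : 0 < a) :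
    limsup (fun δ => B δ / ENNReal.ofReal |Real.log δ|) (𝓝[>] 0) =
      limsup (fun δ => A δ / ENNReal.ofReal |Real.log δ|) (𝓝[>] 0) * ENNReal.ofReal a := by
  have hr := ENNReal.tendsto_ofReal hlog.abs
  rw [abs_of_pos ha] at hr
  rw [limsup_congr (div_abs_log_eventuallyEq hB hψ.le),
    ENNReal.limsup_mul_of_tendsto hr (by simpa using ha) ENNReal.ofReal_ne_top, limsup_comp, hψ]

theorem liminf_div_abs_log_of_eventuallyEq_comp {A B : ℝ → ℝ≥0∞} {ψ : ℝ → ℝ} {a : ℝ}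
    (hB : B =ᶠ[𝓝[>] 0] A ∘ ψ) (hψ : map ψ (𝓝[>] 0) = 𝓝[>] 0)
    (hlog : Tendsto (fun δ => Real.log (ψ δ) / Real.log δ) (𝓝[>] 0) (𝓝 a)) (ha : 0 < a) :
    liminf (fun δ => B δ / ENNReal.ofReal |Real.log δ|) (𝓝[>] 0) =
      liminf (fun δ => A δ / ENNReal.ofReal |Real.log δ|) (𝓝[>] 0) * ENNReal.ofReal a := by
  have hr := ENNReal.tendsto_ofReal hlog.abs
  rw [abs_of_pos ha] at hr
  rw [liminf_congr (div_abs_log_eventuallyEq hB hψ.le),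
    ENNReal.liminf_mul_of_tendsto hr (by simpa using ha) ENNReal.ofReal_ne_top, liminf_comp, hψ]

end LogScale

section Deformation

variable {G X : Type*} {T : G → X → X} {d : X → X → ℝ} {α ε : ℝ}

lemma isMetricOn_dAlphaEps (hd : IsMetricOn d) (hα : 0 < α) (hα₁ : α ≤ 1) (hε : 0 < ε) :
    IsMetricOn (dAlphaEps d α ε) :=
  hd.comp (strictMonoOn_deformProfile hα hε) (deformProfile_zero hα hε)
    fun _ ha _ hb => deformProfile_add_le hα hα₁ ha hb

lemma inducesTopology_dAlphaEps [TopologicalSpace X] (hc : InducesTopology d)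
    (hd₀ : ∀ x y, 0 ≤ d x y) (hα : 0 < α) (hα₁ : α ≤ 1) (hε : 0 < ε) :
    InducesTopology (dAlphaEps d α ε) :=
  hc.comp hd₀ (fun _ ht => le_deformProfile hα₁ ht) (tendsto_deformProfile_nhdsGE_zero hα hε)

lemma metrD_dAlphaEps_le (hd₀ : ∀ x y, 0 ≤ d x y) (hα : 0 < α) (hα₁ : α ≤ 1) (hε : 0 < ε) :
    metrD d (dAlphaEps d α ε) ≤ ε :=
  metrD_le hε.le fun x y => by
    rw [dAlphaEps_apply, abs_sub_comm,
      abs_of_nonneg (sub_nonneg.mpr (le_deformProfile hα₁ (hd₀ x y)))]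
    exact deformProfile_sub_le hα hε (hd₀ x y)

lemma spanNum_dAlphaEps (hd₀ : ∀ x y, 0 ≤ d x y) (hα : 0 < α) (hε : 0 < ε) {δ : ℝ}
    (hδ : δ ∈ Ioo 0 ε) (F : Finset G) (E : Set X) :
    spanNum T (dAlphaEps d α ε) F δ E = spanNum T d F ((δ / ε ^ (1 - α)) ^ α⁻¹) E :=
  spanNum_congr E fun x y => by
    rw [dynDist_le_iff hδ.1.le, dynDist_le_iff (by have := hδ.1; positivity)]
    exact forall₂_congr fun g _ => deformProfile_le_iff hα hε (hd₀ _ _) hδ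

/-- `mdimMUpper` and `mdimMLower` are, by definition, the limsup and liminf as `δ → 0+` of
`spanEntropy T d Fs E δ / |log δ|`. -/
noncomputable def spanEntropy (T : G → X → X) (d : X → X → ℝ) (Fs : ℕ → Finset G) (E : Set X)
    (δ : ℝ) : ℝ≥0∞ :=
  limsup (fun n => ENNReal.ofReal (Real.log (spanNum T d (Fs n) δ E : ℝ) / ((Fs n).card : ℝ)))
    atTop

lemma spanEntropy_dAlphaEps_eventuallyEq (hd₀ : ∀ x y, 0 ≤ d x y) (hα : 0 < α) (hε : 0 < ε)
    (Fs : ℕ → Finset G) (E : Set X) :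
    spanEntropy T (dAlphaEps d α ε) Fs E =ᶠ[𝓝[>] 0]
      spanEntropy T d Fs E ∘ fun δ => (δ / ε ^ (1 - α)) ^ α⁻¹ := by
  filter_upwards [Ioo_mem_nhdsGT hε] with δ hδ
  simp only [spanEntropy, Function.comp_apply, spanNum_dAlphaEps hd₀ hα hε hδ]

lemma mdimMUpper_dAlphaEps (hd₀ : ∀ x y, 0 ≤ d x y) (hα : 0 < α) (hε : 0 < ε)
    (Fs : ℕ → Finset G) (E : Set X) :
    mdimMUpper T (dAlphaEps d α ε) Fs E = mdimMUpper T d Fs E / ENNReal.ofReal α := by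
  rw [div_eq_mul_inv, ← ENNReal.ofReal_inv_of_pos hα]
  have hc : 0 < ε ^ (1 - α) := Real.rpow_pos_of_pos hε _
  exact limsup_div_abs_log_of_eventuallyEq_comp (spanEntropy_dAlphaEps_eventuallyEq hd₀ hα hε Fs E)
    (map_div_rpow_nhdsGT_zero hc (inv_pos.mpr hα)) (tendsto_log_div_rpow_div_log hc)
    (inv_pos.mpr hα)

lemma mdimMLower_dAlphaEps (hd₀ : ∀ x y, 0 ≤ d x y) (hα : 0 < α) (hε : 0 < ε)
    (Fs : ℕ → Finset G) (E : Set X) :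
    mdimMLower T (dAlphaEps d α ε) Fs E = mdimMLower T d Fs E / ENNReal.ofReal α := by
  rw [div_eq_mul_inv, ← ENNReal.ofReal_inv_of_pos hα]
  have hc : 0 < ε ^ (1 - α) := Real.rpow_pos_of_pos hε _
  exact liminf_div_abs_log_of_eventuallyEq_comp (spanEntropy_dAlphaEps_eventuallyEq hd₀ hα hε Fs E)
    (map_div_rpow_nhdsGT_zero hc (inv_pos.mpr hα)) (tendsto_log_div_rpow_div_log hc)
    (inv_pos.mpr hα)

end Deformation

theorem dAlphaEps_properties_general {G X : Type*}
    [TopologicalSpace X]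
    (T : G → X → X)
    (Fs : ℕ → Finset G)
    (d : X → X → ℝ) (hd : IsMetricOn d) (hc : InducesTopology d)
    (α ε : ℝ) (hα : α ∈ Set.Ioo (0 : ℝ) 1) (hε : ε ∈ Set.Ioo (0 : ℝ) 1) :
    IsMetricOn (dAlphaEps d α ε) ∧
    InducesTopology (dAlphaEps d α ε) ∧
    metrD d (dAlphaEps d α ε) < 2 * ε ∧
    mdimMUpper T (dAlphaEps d α ε) Fs (Set.univ : Set X)
      = mdimMUpper T d Fs (Set.univ : Set X) / ENNReal.ofReal α ∧
    mdimMLower T (dAlphaEps d α ε) Fs (Set.univ : Set X)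
      = mdimMLower T d Fs (Set.univ : Set X) / ENNReal.ofReal α := by
  obtain ⟨hα₀, hα₁⟩ := hα
  obtain ⟨hε₀, -⟩ := hε
  have hd₀ := hd.1
  exact ⟨isMetricOn_dAlphaEps hd hα₀ hα₁.le hε₀,
    inducesTopology_dAlphaEps hc hd₀ hα₀ hα₁.le hε₀,
    (metrD_dAlphaEps_le hd₀ hα₀ hα₁.le hε₀).trans_lt (by linarith),
    mdimMUpper_dAlphaEps hd₀ hα₀ hε₀ Fs univ,
    mdimMLower_dAlphaEps hd₀ hα₀ hε₀ Fs univ⟩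

/-- for all `α, ε ∈ (0,1)`, `d_{α,ε}` is a compatible metric with
`D(d,d_{α,ε}) < 2ε` and upper/lower metric mean dimension equal to that of `d`
divided by `α`. -/
theorem dAlphaEps_properties {G X : Type*} [Group G] [Countable G]
    [TopologicalSpace X] [CompactSpace X]
    (T : G → X → X) (hT : IsContAction T)
    (Fs : ℕ → Finset G) (hFol : IsFolner Fs)
    (d : X → X → ℝ) (hd : IsMetricOn d) (hc : InducesTopology d)
    (α ε : ℝ) (hα : α ∈ Set.Ioo (0 : ℝ) 1) (hε : ε ∈ Set.Ioo (0 : ℝ) 1) :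
    IsMetricOn (dAlphaEps d α ε) ∧
    InducesTopology (dAlphaEps d α ε) ∧
    metrD d (dAlphaEps d α ε) < 2 * ε ∧
    mdimMUpper T (dAlphaEps d α ε) Fs (Set.univ : Set X)
      = mdimMUpper T d Fs (Set.univ : Set X) / ENNReal.ofReal α ∧
    mdimMLower T (dAlphaEps d α ε) Fs (Set.univ : Set X)
      = mdimMLower T d Fs (Set.univ : Set X) / ENNReal.ofReal α :=
  dAlphaEps_properties_general T Fs d hd hc α ε hα hε

end MeanDim13
end

section
/- Let G be a countable discrete group, (X,d) a G-system with diameter ρ, and {F_n} a Følner sequence in G. Let ζ ∈ A[0,ρ] satisfy k_m(ζ) > 0 and k_M(ζ) > 0, and set ζ_d(x,y) = ζ(d(x,y)). Then (i) underline{mdim}_M(X,G,d) ≥ k_m(ζ) · underline{mdim}_M(X,G,ζ_d), and (ii) overline{mdim}_M(X,G,d) ≤ k_M(ζ) · overline{mdim}_M(X,G,ζ_d). -/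
open Filter Set Topology
open scoped ENNReal

namespace MeanDim17

/-- `d` is a metric on `X`. -/
def IsMetricOn {X : Type*} (d : X → X → ℝ) : Prop :=
  (∀ x y, 0 ≤ d x y) ∧ (∀ x y, d x y = 0 ↔ x = y) ∧
    (∀ x y, d x y = d y x) ∧ ∀ x y z, d x z ≤ d x y + d y z

/-- `d` induces the given topology on `X`. -/
def InducesTopology {X : Type*} [TopologicalSpace X] (d : X → X → ℝ) : Prop :=
  ∀ (x : X) (s : Set X), s ∈ 𝓝 x ↔ ∃ ε > 0, {y : X | d x y < ε} ⊆ s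

/-- `T` is a continuous (left) action of `G` on `X`. -/
def IsContAction {G X : Type*} [Group G] [TopologicalSpace X] (T : G → X → X) : Prop :=
  (∀ x : X, T 1 x = x) ∧ (∀ g h : G, ∀ x : X, T (g * h) x = T g (T h x)) ∧
    ∀ g : G, Continuous (T g)

/-- The dynamical (Bowen) metric `d_F(x,y) = max_{g ∈ F} d(gx, gy)`. -/
noncomputable def dynDist {G X : Type*} (T : G → X → X) (d : X → X → ℝ)
    (F : Finset G) (x y : X) : ℝ :=
  if h : F.Nonempty then F.sup' h (fun g => d (T g x) (T g y)) else 0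

/-- `K` is an `(F,ε)`-spanning subset of `E`. -/
def IsSpanningSet {G X : Type*} (T : G → X → X) (d : X → X → ℝ)
    (F : Finset G) (ε : ℝ) (E : Set X) (K : Finset X) : Prop :=
  ↑K ⊆ E ∧ ∀ x ∈ E, ∃ y ∈ K, dynDist T d F x y ≤ ε

/-- `r_F(d,ε,E)`: minimal cardinality of an `(F,ε)`-spanning subset of `E`. -/
noncomputable def spanNum {G X : Type*} (T : G → X → X) (d : X → X → ℝ)
    (F : Finset G) (ε : ℝ) (E : Set X) : ℕ :=
  sInf {n : ℕ | ∃ K : Finset X, IsSpanningSet T d F ε E K ∧ K.card = n}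

/-- The max-metric on the product. -/
def prodDist {X Y : Type*} (dX : X → X → ℝ) (dY : Y → Y → ℝ) (p q : X × Y) : ℝ :=
  max (dX p.1 q.1) (dY p.2 q.2)

/-- The diagonal action on the product. -/
def prodAction {G X Y : Type*} (T : G → X → X) (S : G → Y → Y) (g : G) (p : X × Y) : X × Y :=
  (T g p.1, S g p.2)

/-- `{F n}` is a Følner sequence of nonempty finite subsets of `G`. -/
def IsFolner {G : Type*} [Group G] (Fs : ℕ → Finset G) : Prop :=
  letI := Classical.decEq G
  (∀ n, (Fs n).Nonempty) ∧
    ∀ g : G, Tendsto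
      (fun n => (((Fs n) \ (Fs n).image (fun h => g * h)).card : ℝ) / ((Fs n).card : ℝ))
      atTop (𝓝 0)

/-- Upper metric mean dimension (via spanning numbers), w.r.t. a Følner sequence. -/
noncomputable def mdimMUpper {G X : Type*} (T : G → X → X) (d : X → X → ℝ)
    (Fs : ℕ → Finset G) (E : Set X) : ℝ≥0∞ :=
  limsup (fun ε : ℝ =>
      (limsup (fun n =>
          ENNReal.ofReal (Real.log (spanNum T d (Fs n) ε E : ℝ) / ((Fs n).card : ℝ))) atTop)
        / ENNReal.ofReal |Real.log ε|) (𝓝[>] (0 : ℝ))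

/-- Lower metric mean dimension (via spanning numbers), w.r.t. a Følner sequence. -/
noncomputable def mdimMLower {G X : Type*} (T : G → X → X) (d : X → X → ℝ)
    (Fs : ℕ → Finset G) (E : Set X) : ℝ≥0∞ :=
  liminf (fun ε : ℝ =>
      (limsup (fun n =>
          ENNReal.ofReal (Real.log (spanNum T d (Fs n) ε E : ℝ) / ((Fs n).card : ℝ))) atTop)
        / ENNReal.ofReal |Real.log ε|) (𝓝[>] (0 : ℝ))


/-- Diameter of a set with respect to an abstract metric `d` (with `diam ∅ = 0`). -/
noncomputable def setDiam {X : Type*} (d : X → X → ℝ) (A : Set X) : ℝ :=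
  sSup {r : ℝ | ∃ x ∈ A, ∃ y ∈ A, r = d x y}

/-- `ζ ∈ A[0,ρ]`: continuous, increasing, subadditive on `[0,ρ]`, nonnegative,
and vanishing exactly at `0`. -/
def MemA (ρ : ℝ) (ζ : ℝ → ℝ) : Prop :=
  ContinuousOn ζ (Set.Icc 0 ρ) ∧ MonotoneOn ζ (Set.Icc 0 ρ) ∧
    (∀ x ∈ Set.Icc 0 ρ, 0 ≤ ζ x) ∧
    (∀ x ∈ Set.Icc 0 ρ, ∀ y ∈ Set.Icc 0 ρ, x + y ∈ Set.Icc 0 ρ → ζ (x + y) ≤ ζ x + ζ y) ∧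
    ∀ x ∈ Set.Icc 0 ρ, (ζ x = 0 ↔ x = 0)

/-- `k_m(ζ) = liminf_{ε→0⁺} log ζ(ε) / log ε`. -/
noncomputable def km (ζ : ℝ → ℝ) : ℝ :=
  liminf (fun ε : ℝ => Real.log (ζ ε) / Real.log ε) (𝓝[>] (0 : ℝ))

/-- `k_M(ζ) = limsup_{ε→0⁺} log ζ(ε) / log ε`. -/
noncomputable def kM (ζ : ℝ → ℝ) : ℝ :=
  limsup (fun ε : ℝ => Real.log (ζ ε) / Real.log ε) (𝓝[>] (0 : ℝ))


section Aux

variable {G X : Type*} [Group G] [TopologicalSpace X] [CompactSpace X]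

lemma d_cont (d : X → X → ℝ) (hd : IsMetricOn d) (hc : InducesTopology d) :
    Continuous fun p : X × X => d p.1 p.2 := by
  obtain ⟨h0, heq, hsymm, htri⟩ := hd
  rw [continuous_iff_continuousAt]
  rintro ⟨x₀, y₀⟩
  rw [ContinuousAt, Metric.tendsto_nhds]
  intro η hη
  have hU : {x : X | d x₀ x < η / 2} ∈ 𝓝 x₀ :=
    (hc x₀ _).mpr ⟨η / 2, by linarith, fun y hy => hy⟩
  have hV : {y : X | d y₀ y < η / 2} ∈ 𝓝 y₀ :=
    (hc y₀ _).mpr ⟨η / 2, by linarith, fun y hy => hy⟩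
  filter_upwards [prod_mem_nhds hU hV] with p hp
  obtain ⟨h1, h2⟩ := hp
  simp only [mem_setOf_eq] at h1 h2
  have t1 : d p.1 p.2 ≤ d p.1 x₀ + d x₀ y₀ + d y₀ p.2 :=
    (htri _ x₀ _).trans (by linarith [htri x₀ y₀ p.2])
  have t2 : d x₀ y₀ ≤ d x₀ p.1 + d p.1 p.2 + d p.2 y₀ :=
    (htri _ p.1 _).trans (by linarith [htri p.1 p.2 y₀])
  have e1 : d p.1 x₀ = d x₀ p.1 := hsymm _ _
  have e2 : d y₀ p.2 = d p.2 y₀ := hsymm _ _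
  rw [Real.dist_eq, abs_sub_lt_iff]
  constructor <;> linarith

lemma dist_le_diam (d : X → X → ℝ) (hcont : Continuous fun p : X × X => d p.1 p.2)
    (x y : X) : d x y ≤ setDiam d (univ : Set X) := by
  have himg : {r : ℝ | ∃ a ∈ (univ : Set X), ∃ b ∈ (univ : Set X), r = d a b}
      = (fun p : X × X => d p.1 p.2) '' univ := by
    ext r
    constructor
    · rintro ⟨a, -, b, -, rfl⟩; exact ⟨(a, b), trivial, rfl⟩
    · rintro ⟨⟨a, b⟩, -, rfl⟩; exact ⟨a, trivial, b, trivial, rfl⟩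
  have hbdd : BddAbove {r : ℝ | ∃ a ∈ (univ : Set X), ∃ b ∈ (univ : Set X), r = d a b} := by
    rw [himg]; exact (isCompact_univ.image hcont).bddAbove
  exact le_csSup hbdd ⟨x, trivial, y, trivial, rfl⟩

lemma dynDist_le_iff {T : G → X → X} {d : X → X → ℝ} {F : Finset G} (hF : F.Nonempty)
    {x y : X} {ε : ℝ} : dynDist T d F x y ≤ ε ↔ ∀ g ∈ F, d (T g x) (T g y) ≤ ε := by
  rw [dynDist, dif_pos hF, Finset.sup'_le_iff]

lemma dynDist_zero {T : G → X → X} {d : X → X → ℝ} (h0 : ∀ x y : X, d x y = 0) (F : Finset G)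
    (x y : X) : dynDist T d F x y = 0 := by
  rw [dynDist]
  split
  · simp [h0, Finset.sup'_const]
  · rfl

lemma dynDist_self {T : G → X → X} {d : X → X → ℝ} (h0 : ∀ x : X, d x x = 0) (F : Finset G)
    (x : X) : dynDist T d F x x = 0 := by
  rw [dynDist]
  split
  · simp [h0, Finset.sup'_const]
  · rfl

lemma dynDist_cont {T : G → X → X} (hTc : ∀ g, Continuous (T g)) {d : X → X → ℝ}
    (hdc : Continuous fun p : X × X => d p.1 p.2) (F : Finset G) (x : X) :
    Continuous fun y => dynDist T d F x y := by
  rcases F.eq_empty_or_nonempty with rfl | hF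
  · simp only [dynDist, Finset.not_nonempty_empty, dif_neg, not_false_iff]
    exact continuous_const
  · have hcg : ∀ g ∈ F, Continuous fun y => d (T g x) (T g y) := fun g _ =>
      hdc.comp (continuous_const.prodMk (hTc g))
    rw [continuous_iff_continuousAt]
    intro y
    have h2 := Tendsto.finset_sup'_nhds_apply (s := F) hF (l := 𝓝 y)
      (f := fun g y => d (T g x) (T g y)) (g := fun g => d (T g x) (T g y))
      (fun g hg => ((hcg g hg).tendsto y))
    unfold ContinuousAt
    simpa only [dynDist, dif_pos hF] using h2

lemma exists_spanning {T : G → X → X} (hTc : ∀ g, Continuous (T g)) {d : X → X → ℝ}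
    (hdc : Continuous fun p : X × X => d p.1 p.2) (h0 : ∀ x : X, d x x = 0)
    (hsymm : ∀ x y : X, d x y = d y x) (F : Finset G) {ε : ℝ} (hε : 0 < ε) :
    ∃ K : Finset X, IsSpanningSet T d F ε (univ : Set X) K := by
  have hdynsymm : ∀ x y : X, dynDist T d F x y = dynDist T d F y x := by
    intro x y
    rw [dynDist, dynDist]
    split
    · exact Finset.sup'_congr _ rfl fun g _ => hsymm _ _
    · rfl
  have hopen : ∀ x : X, IsOpen {y : X | dynDist T d F x y < ε} :=
    fun x => isOpen_lt (dynDist_cont hTc hdc F x) continuous_const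
  have hcover : (univ : Set X) ⊆ ⋃ x : X, {y | dynDist T d F x y < ε} := fun x _ =>
    mem_iUnion.mpr ⟨x, by simp only [mem_setOf_eq, dynDist_self h0]; exact hε⟩
  obtain ⟨t, ht⟩ := isCompact_univ.elim_finite_subcover _ hopen hcover
  refine ⟨t, subset_univ _, fun x _ => ?_⟩
  obtain ⟨y, hyt, hxy⟩ := mem_iUnion₂.mp (ht (mem_univ x))
  exact ⟨y, hyt, by rw [hdynsymm]; exact le_of_lt hxy⟩

lemma spanNum_spec {T : G → X → X} {d : X → X → ℝ} {F : Finset G} {ε : ℝ}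
    (hex : ∃ K : Finset X, IsSpanningSet T d F ε (univ : Set X) K) :
    ∃ K : Finset X, IsSpanningSet T d F ε (univ : Set X) K ∧
      K.card = spanNum T d F ε (univ : Set X) := by
  obtain ⟨K, hK⟩ := hex
  exact Nat.sInf_mem (⟨K.card, K, hK, rfl⟩ :
    {n : ℕ | ∃ K : Finset X, IsSpanningSet T d F ε (univ : Set X) K ∧ K.card = n}.Nonempty)

lemma one_le_spanNum [Nonempty X] {T : G → X → X} {d : X → X → ℝ} {F : Finset G} {ε : ℝ}
    (hex : ∃ K : Finset X, IsSpanningSet T d F ε (univ : Set X) K) :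
    1 ≤ spanNum T d F ε (univ : Set X) := by
  obtain ⟨K, hK, hcard⟩ := spanNum_spec hex
  rcases Nat.eq_zero_or_pos (spanNum T d F ε (univ : Set X)) with h | h
  · exfalso
    rw [h, Finset.card_eq_zero] at hcard
    obtain ⟨y, hy, -⟩ := hK.2 (Classical.arbitrary X) trivial
    rw [hcard] at hy
    exact absurd hy (Finset.notMem_empty y)
  · exact h

lemma spanNum_le_spanNum {T : G → X → X} {d₁ d₂ : X → X → ℝ} {F : Finset G} {ε₁ ε₂ : ℝ}
    (himp : ∀ x y : X, dynDist T d₁ F x y ≤ ε₁ → dynDist T d₂ F x y ≤ ε₂)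
    (hex : ∃ K : Finset X, IsSpanningSet T d₁ F ε₁ (univ : Set X) K) :
    spanNum T d₂ F ε₂ (univ : Set X) ≤ spanNum T d₁ F ε₁ (univ : Set X) := by
  obtain ⟨K, hK, hcard⟩ := spanNum_spec hex
  refine Nat.sInf_le ⟨K, ⟨hK.1, fun x hx => ?_⟩, hcard⟩
  obtain ⟨y, hy, hle⟩ := hK.2 x hx
  exact ⟨y, hy, himp x y hle⟩

end Aux


section Core

lemma eventually_lt_of_lt_liminf' {α : Type*} {l : Filter α} {f : α → ℝ} {c : ℝ}
    (h : c < liminf f l) (hpos : 0 < liminf f l) : ∀ᶠ x in l, c < f x := by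
  have hS : {a : ℝ | ∀ᶠ x in l, a ≤ f x}.Nonempty := by
    by_contra hS
    rw [not_nonempty_iff_eq_empty] at hS
    rw [liminf_eq, hS, Real.sSup_empty] at hpos
    exact lt_irrefl 0 hpos
  rw [liminf_eq] at h
  obtain ⟨a, ha, hca⟩ := exists_lt_of_lt_csSup hS h
  exact ha.mono fun x hx => lt_of_lt_of_le hca hx

lemma eventually_lt_of_limsup_lt' {α : Type*} {l : Filter α} {f : α → ℝ} {c : ℝ}
    (h : limsup f l < c) (hpos : 0 < limsup f l) : ∀ᶠ x in l, f x < c := by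
  have hT : {a : ℝ | ∀ᶠ x in l, f x ≤ a}.Nonempty := by
    by_contra hT
    rw [not_nonempty_iff_eq_empty] at hT
    rw [limsup_eq, hT, Real.sInf_empty] at hpos
    exact lt_irrefl 0 hpos
  rw [limsup_eq] at h
  obtain ⟨a, ha, hac⟩ := exists_lt_of_csInf_lt hT h
  exact ha.mono fun x hx => lt_of_le_of_lt hx hac

lemma core_I {U V A : ℝ → ℝ≥0∞} {φ : ℝ → ℝ} {c : ℝ}
    (h1 : Tendsto φ (𝓝[>] (0:ℝ)) (𝓝[>] (0:ℝ)))
    (h2 : ∀ᶠ ε in 𝓝[>] (0:ℝ), V (φ ε) ≤ U ε)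
    (h3 : ∀ᶠ ε in 𝓝[>] (0:ℝ), ENNReal.ofReal c * A ε ≤ A (φ ε))
    (h4 : ∀ᶠ ε in 𝓝[>] (0:ℝ), A ε ≠ 0 ∧ A ε ≠ ⊤) :
    ENNReal.ofReal c * liminf (fun δ : ℝ => V δ / A δ) (𝓝[>] (0:ℝ)) ≤
      liminf (fun ε : ℝ => U ε / A ε) (𝓝[>] (0:ℝ)) := by
  have step1 : liminf (fun δ : ℝ => V δ / A δ) (𝓝[>] (0:ℝ)) ≤
      liminf ((fun δ : ℝ => V δ / A δ) ∘ φ) (𝓝[>] (0:ℝ)) := by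
    rw [liminf_comp]
    exact liminf_le_liminf_of_le h1
  refine le_trans (mul_le_mul_right step1 _) ?_
  have step2 : ENNReal.ofReal c * liminf ((fun δ : ℝ => V δ / A δ) ∘ φ) (𝓝[>] (0:ℝ)) ≤
      liminf (fun ε : ℝ => ENNReal.ofReal c * (V (φ ε) / A (φ ε))) (𝓝[>] (0:ℝ)) := by
    have h := ENNReal.le_liminf_mul (u := fun _ : ℝ => ENNReal.ofReal c)
      (v := (fun δ : ℝ => V δ / A δ) ∘ φ) (f := 𝓝[>] (0:ℝ))
    rwa [liminf_const] at h
  refine le_trans step2 (liminf_le_liminf ?_)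
  filter_upwards [h2, h3, h4] with ε hVU hkey hA
  rw [ENNReal.le_div_iff_mul_le (Or.inl hA.1) (Or.inl hA.2)]
  calc ENNReal.ofReal c * (V (φ ε) / A (φ ε)) * A ε
      = V (φ ε) / A (φ ε) * (ENNReal.ofReal c * A ε) := by ring
    _ ≤ V (φ ε) / A (φ ε) * A (φ ε) := mul_le_mul_right hkey _
    _ = A (φ ε) * (V (φ ε) / A (φ ε)) := mul_comm _ _
    _ ≤ V (φ ε) := ENNReal.mul_div_le
    _ ≤ U ε := hVU

lemma core_II {U V A : ℝ → ℝ≥0∞} {θ : ℝ → ℝ} {c : ℝ} (hc : 0 < c)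
    (h1 : Tendsto θ (𝓝[>] (0:ℝ)) (𝓝[>] (0:ℝ)))
    (h2 : ∀ᶠ ε in 𝓝[>] (0:ℝ), U ε ≤ V (θ ε))
    (h3 : ∀ᶠ ε in 𝓝[>] (0:ℝ), A (θ ε) ≤ ENNReal.ofReal c * A ε) :
    limsup (fun ε : ℝ => U ε / A ε) (𝓝[>] (0:ℝ)) ≤
      ENNReal.ofReal c * limsup (fun δ : ℝ => V δ / A δ) (𝓝[>] (0:ℝ)) := by
  have hc0 : (ENNReal.ofReal c) ≠ 0 := ne_of_gt (ENNReal.ofReal_pos.mpr hc)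
  have step1 : limsup (fun ε : ℝ => U ε / A ε) (𝓝[>] (0:ℝ)) ≤
      limsup (fun ε : ℝ => ENNReal.ofReal c * (V (θ ε) / A (θ ε))) (𝓝[>] (0:ℝ)) := by
    refine limsup_le_limsup ?_
    filter_upwards [h2, h3] with ε hUV hkey
    calc U ε / A ε ≤ V (θ ε) / A ε := ENNReal.div_le_div_right hUV _
      _ = ENNReal.ofReal c * V (θ ε) / (ENNReal.ofReal c * A ε) :=
        (ENNReal.mul_div_mul_left _ _ hc0 ENNReal.ofReal_ne_top).symm
      _ ≤ ENNReal.ofReal c * V (θ ε) / A (θ ε) := ENNReal.div_le_div_left hkey _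
      _ = ENNReal.ofReal c * (V (θ ε) / A (θ ε)) := by
          rw [div_eq_mul_inv, div_eq_mul_inv, mul_assoc]
  refine step1.trans ?_
  rw [ENNReal.limsup_const_mul_of_ne_top ENNReal.ofReal_ne_top]
  refine mul_le_mul_right ?_ _
  have heq : (fun ε : ℝ => V (θ ε) / A (θ ε)) = (fun δ : ℝ => V δ / A δ) ∘ θ := rfl
  rw [heq, limsup_comp]
  exact limsup_le_limsup_of_le h1

lemma final_i {W D : ℝ≥0∞} {k : ℝ} (hk : 0 < k)
    (H : ∀ c : ℝ, 0 < c → c < k → ENNReal.ofReal c * W ≤ D) :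
    ENNReal.ofReal k * W ≤ D := by
  by_cases hW : W = ⊤
  · have h := H (k / 2) (half_pos hk) (half_lt_self hk)
    rw [hW, ENNReal.mul_top (ne_of_gt (ENNReal.ofReal_pos.mpr (half_pos hk)))] at h
    exact le_top.trans h
  · refine le_of_tendsto (x := 𝓝[<] k)
      ((ENNReal.Tendsto.mul_const (ENNReal.tendsto_ofReal tendsto_id)
        (Or.inr hW)).mono_left nhdsWithin_le_nhds) ?_
    filter_upwards [eventually_mem_nhdsWithin,
      (eventually_gt_nhds hk).filter_mono nhdsWithin_le_nhds] with c h1 h2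
    exact H c h2 h1

lemma final_ii {W D : ℝ≥0∞} {k : ℝ} (hk : 0 < k)
    (H : ∀ c : ℝ, k < c → D ≤ ENNReal.ofReal c * W) :
    D ≤ ENNReal.ofReal k * W := by
  by_cases hW : W = ⊤
  · rw [hW, ENNReal.mul_top (ne_of_gt (ENNReal.ofReal_pos.mpr hk))]
    exact le_top
  · refine ge_of_tendsto (x := 𝓝[>] k)
      ((ENNReal.Tendsto.mul_const (ENNReal.tendsto_ofReal tendsto_id)
        (Or.inr hW)).mono_left nhdsWithin_le_nhds) ?_
    filter_upwards [eventually_mem_nhdsWithin] with c h1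
    exact H c h1

end Core

/-- comparison of metric mean dimensions of `d` and `ζ∘d`. -/
theorem mdimM_comp_bounds {G X : Type*} [Group G] [Countable G]
    [TopologicalSpace X] [CompactSpace X]
    (T : G → X → X) (hT : IsContAction T)
    (d : X → X → ℝ) (hd : IsMetricOn d) (hc : InducesTopology d)
    (Fs : ℕ → Finset G) (hFol : IsFolner Fs)
    (ρ : ℝ) (hρ : ρ = setDiam d (Set.univ : Set X))
    (ζ : ℝ → ℝ) (hζ : MemA ρ ζ) (hkm : 0 < km ζ) (hkM : 0 < kM ζ) :
    ENNReal.ofReal (km ζ) * mdimMLower T (fun x y => ζ (d x y)) Fs (Set.univ : Set X)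
        ≤ mdimMLower T d Fs (Set.univ : Set X) ∧
    mdimMUpper T d Fs (Set.univ : Set X)
        ≤ ENNReal.ofReal (kM ζ) * mdimMUpper T (fun x y => ζ (d x y)) Fs (Set.univ : Set X) := by
  classical
  obtain ⟨hT1, hT2, hTc⟩ := hT
  have hdcont : Continuous fun p : X × X => d p.1 p.2 := d_cont d hd hc
  have hdself : ∀ x : X, d x x = 0 := fun x => (hd.2.1 x x).mpr rfl
  have hρ0 : (0:ℝ) ≤ ρ := by
    rcases isEmpty_or_nonempty X with hXe | hXne
    · have hset : {r : ℝ | ∃ x ∈ (univ : Set X), ∃ y ∈ (univ : Set X), r = d x y} = ∅ := by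
        ext r
        simp only [mem_setOf_eq, mem_empty_iff_false, iff_false, not_exists]
        intro a
        exact fun h => (IsEmpty.false a).elim
      have : setDiam d (univ : Set X) = 0 := by
        unfold setDiam
        rw [hset, Real.sSup_empty]
      rw [hρ, this]
    · obtain ⟨x⟩ := hXne
      calc (0:ℝ) = d x x := (hdself x).symm
        _ ≤ ρ := hρ ▸ dist_le_diam d hdcont x x
  obtain ⟨hζcont, hζmono, hζnn, -, hζiff⟩ := hζ
  have hζ0 : ζ 0 = 0 := (hζiff 0 ⟨le_refl 0, hρ0⟩).mpr rfl
  by_cases hdall : ∀ x y : X, d x y = 0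
  · -- degenerate case: all distances vanish
    have hζdall : ∀ x y : X, ζ (d x y) = 0 := fun x y => by rw [hdall x y, hζ0]
    have key : ∀ (d' : X → X → ℝ), (∀ x y : X, d' x y = 0) →
        ∀ (F : Finset G) (ε : ℝ), 0 < ε →
          Real.log ((spanNum T d' F ε (univ : Set X) : ℝ)) = 0 := by
      intro d' h00 F ε hε
      have hle : spanNum T d' F ε (univ : Set X) ≤ 1 := by
        rcases isEmpty_or_nonempty X with hXe | hXne
        · have h0 : spanNum T d' F ε (univ : Set X) ≤ 0 :=
            Nat.sInf_le ⟨∅, ⟨by simp, fun x _ => (IsEmpty.false x).elim⟩, Finset.card_empty⟩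
          omega
        · obtain ⟨x₀⟩ := hXne
          exact Nat.sInf_le ⟨{x₀}, ⟨by simp, fun x _ =>
            ⟨x₀, Finset.mem_singleton_self x₀, by
              rw [dynDist_zero h00]; exact hε.le⟩⟩, Finset.card_singleton x₀⟩
      interval_cases h : spanNum T d' F ε (univ : Set X)
      · simp
      · simp
    have hmdim : ∀ (d' : X → X → ℝ), (∀ x y : X, d' x y = 0) →
        mdimMLower T d' Fs (univ : Set X) = 0 ∧ mdimMUpper T d' Fs (univ : Set X) = 0 := by
      intro d' h00
      have hfun : (fun ε : ℝ =>
          (limsup (fun n =>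
            ENNReal.ofReal (Real.log ((spanNum T d' (Fs n) ε (univ : Set X) : ℝ)) / ((Fs n).card : ℝ))) atTop)
            / ENNReal.ofReal |Real.log ε|) =ᶠ[𝓝[>] (0:ℝ)] (fun _ => (0 : ℝ≥0∞)) := by
        filter_upwards [eventually_mem_nhdsWithin] with ε hε
        have hfn : (fun n =>
            ENNReal.ofReal (Real.log ((spanNum T d' (Fs n) ε (univ : Set X) : ℝ)) / ((Fs n).card : ℝ)))
            = fun _ : ℕ => (0:ℝ≥0∞) := by
          funext n
          rw [key d' h00 (Fs n) ε hε]
          simp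
        simp only [hfn, limsup_const, ENNReal.zero_div]
      constructor
      · unfold mdimMLower
        rw [liminf_congr hfun, liminf_const]
      · unfold mdimMUpper
        rw [limsup_congr hfun, limsup_const]
    obtain ⟨hl1, hu1⟩ := hmdim d hdall
    obtain ⟨hl2, hu2⟩ := hmdim (fun x y => ζ (d x y)) hζdall
    rw [hl1, hu1, hl2, hu2]
    simp
  · -- main case
    push_neg at hdall
    obtain ⟨x₀, y₀, hxy⟩ := hdall
    have hXne : Nonempty X := ⟨x₀⟩
    have hbd : ∀ x y : X, d x y ≤ ρ := fun x y => hρ ▸ dist_le_diam d hdcont x y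
    have hρpos : (0:ℝ) < ρ :=
      lt_of_lt_of_le ((hd.1 x₀ y₀).lt_of_ne (Ne.symm hxy)) (hbd x₀ y₀)
    set ζd : X → X → ℝ := fun x y => ζ (d x y) with hζddef
    have hζdcont : Continuous fun p : X × X => ζd p.1 p.2 :=
      hζcont.comp_continuous hdcont fun p => ⟨hd.1 _ _, hbd _ _⟩
    have hζpos : ∀ {ε : ℝ}, 0 < ε → ε ≤ ρ → 0 < ζ ε := fun {ε} hε hερ =>
      (hζnn ε ⟨hε.le, hερ⟩).lt_of_ne fun h =>
        (ne_of_gt hε) ((hζiff ε ⟨hε.le, hερ⟩).mp h.symm)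
    have hexd : ∀ (F : Finset G) {ε : ℝ}, 0 < ε →
        ∃ K : Finset X, IsSpanningSet T d F ε (univ : Set X) K := fun F {ε} hε =>
      exists_spanning hTc hdcont hdself hd.2.2.1 F hε
    have hζdself : ∀ x : X, ζd x x = 0 := fun x => by
      show ζ (d x x) = 0
      rw [hdself x, hζ0]
    have hζdsymm : ∀ x y : X, ζd x y = ζd y x := fun x y => by
      show ζ (d x y) = ζ (d y x)
      rw [hd.2.2.1 x y]
    have hexζ : ∀ (F : Finset G) {ε : ℝ}, 0 < ε →
        ∃ K : Finset X, IsSpanningSet T ζd F ε (univ : Set X) K := fun F {ε} hε =>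
      exists_spanning hTc hζdcont hζdself hζdsymm F hε
    have hsd : ∀ (F : Finset G) {ε : ℝ}, 0 < ε → 1 ≤ spanNum T d F ε (univ : Set X) :=
      fun F {ε} hε => one_le_spanNum (hexd F hε)
    have hsζ : ∀ (F : Finset G) {ε : ℝ}, 0 < ε → 1 ≤ spanNum T ζd F ε (univ : Set X) :=
      fun F {ε} hε => one_le_spanNum (hexζ F hε)
    have hBspan : ∀ (n : ℕ) {ε : ℝ}, 0 < ε → ε ≤ ρ →
        spanNum T ζd (Fs n) (ζ ε) (univ : Set X) ≤ spanNum T d (Fs n) ε (univ : Set X) := by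
      intro n ε hε hερ
      refine spanNum_le_spanNum (fun x y hxy' => ?_) (hexd (Fs n) hε)
      rw [dynDist_le_iff (hFol.1 n)] at hxy' ⊢
      exact fun g hg => hζmono ⟨hd.1 _ _, hbd _ _⟩ ⟨hε.le, hερ⟩ (hxy' g hg)
    have hAspan : ∀ (n : ℕ) {ε δ : ℝ}, 0 < ε → ε ≤ ρ → 0 < δ → δ < ζ ε →
        spanNum T d (Fs n) ε (univ : Set X) ≤ spanNum T ζd (Fs n) δ (univ : Set X) := by
      intro n ε δ hε hερ hδ hδζ
      refine spanNum_le_spanNum (fun x y hxy' => ?_) (hexζ (Fs n) hδ)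
      rw [dynDist_le_iff (hFol.1 n)] at hxy' ⊢
      intro g hg
      by_contra hgt
      push_neg at hgt
      have hz1 : ζ ε ≤ ζ (d (T g x) (T g y)) :=
        hζmono ⟨hε.le, hερ⟩ ⟨hd.1 _ _, hbd _ _⟩ hgt.le
      have hz2 := hxy' g hg
      simp only [hζddef] at hz2
      linarith
    -- eventual facts on the filter 𝓝[>] 0
    have ev_pos : ∀ᶠ ε in 𝓝[>] (0:ℝ), 0 < ε :=
      eventually_mem_nhdsWithin
    have ev_leρ : ∀ᶠ ε in 𝓝[>] (0:ℝ), ε ≤ ρ :=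
      eventually_of_mem (Ioc_mem_nhdsGT hρpos) fun ε hε => hε.2
    have ev_lt1 : ∀ᶠ ε in 𝓝[>] (0:ℝ), ε < 1 :=
      eventually_of_mem (Ioo_mem_nhdsGT one_pos) fun ε hε => hε.2
    have hζt0 : Tendsto ζ (𝓝[>] (0:ℝ)) (𝓝 0) := by
      have h1 : (𝓝[>] (0:ℝ)) ≤ 𝓝[Icc 0 ρ] (0:ℝ) := by
        rw [← nhdsWithin_Ioc_eq_nhdsGT hρpos]
        exact nhdsWithin_mono _ Ioc_subset_Icc_self
      have h2 : Tendsto ζ (𝓝[Icc 0 ρ] (0:ℝ)) (𝓝 (ζ 0)) := hζcont 0 ⟨le_refl 0, hρ0⟩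
      rw [hζ0] at h2
      exact h2.mono_left h1
    have hζtl : Tendsto ζ (𝓝[>] (0:ℝ)) (𝓝[>] (0:ℝ)) := by
      rw [tendsto_nhdsWithin_iff]
      exact ⟨hζt0, by filter_upwards [ev_pos, ev_leρ] with ε h1 h2 using hζpos h1 h2⟩
    have ev_ζlt1 : ∀ᶠ ε in 𝓝[>] (0:ℝ), ζ ε < 1 :=
      hζt0.eventually (eventually_lt_nhds one_pos)
    have hθtl : Tendsto (fun ε : ℝ => ζ ε / 2) (𝓝[>] (0:ℝ)) (𝓝[>] (0:ℝ)) := by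
      rw [tendsto_nhdsWithin_iff]
      constructor
      · have h := hζt0.div_const (2:ℝ)
        simpa using h
      · filter_upwards [ev_pos, ev_leρ] with ε h1 h2 using half_pos (hζpos h1 h2)
    have evA : ∀ᶠ ε in 𝓝[>] (0:ℝ),
        ENNReal.ofReal |Real.log ε| ≠ 0 ∧ ENNReal.ofReal |Real.log ε| ≠ ⊤ := by
      filter_upwards [ev_pos, ev_lt1] with ε hε h1
      have hlog : Real.log ε < 0 := Real.log_neg hε h1
      refine ⟨?_, ENNReal.ofReal_ne_top⟩
      simp only [ne_eq, ENNReal.ofReal_eq_zero, not_le]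
      rw [abs_of_neg hlog]
      linarith
    -- part (i)
    have partI : ∀ c : ℝ, 0 < c → c < km ζ →
        ENNReal.ofReal c * mdimMLower T ζd Fs (univ : Set X) ≤
          mdimMLower T d Fs (univ : Set X) := by
      intro c hc hckm
      have hckm' : c < liminf (fun ε : ℝ => Real.log (ζ ε) / Real.log ε) (𝓝[>] (0:ℝ)) := hckm
      have hkm' : 0 < liminf (fun ε : ℝ => Real.log (ζ ε) / Real.log ε) (𝓝[>] (0:ℝ)) := hkm
      have hkm_ev : ∀ᶠ ε in 𝓝[>] (0:ℝ), c < Real.log (ζ ε) / Real.log ε :=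
        eventually_lt_of_lt_liminf' hckm' hkm'
      have evlog : ∀ᶠ ε in 𝓝[>] (0:ℝ),
          ENNReal.ofReal c * ENNReal.ofReal |Real.log ε| ≤ ENNReal.ofReal |Real.log (ζ ε)| := by
        filter_upwards [hkm_ev, ev_pos, ev_lt1, ev_leρ] with ε hrat hε h1 hρε
        have hlogε : Real.log ε < 0 := Real.log_neg hε h1
        rw [lt_div_iff_of_neg hlogε] at hrat
        have hlogζ : Real.log (ζ ε) < 0 := lt_trans hrat (mul_neg_of_pos_of_neg hc hlogε)
        rw [← ENNReal.ofReal_mul hc.le]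
        apply ENNReal.ofReal_le_ofReal
        rw [abs_of_neg hlogε, abs_of_neg hlogζ]
        have he : c * -Real.log ε = -(c * Real.log ε) := by ring
        linarith
      have h2 : ∀ᶠ ε in 𝓝[>] (0:ℝ),
          (fun δ : ℝ => limsup (fun n =>
            ENNReal.ofReal (Real.log ((spanNum T ζd (Fs n) δ (univ : Set X) : ℝ)) / ((Fs n).card : ℝ))) atTop) (ζ ε)
          ≤ (fun ε' : ℝ => limsup (fun n =>
            ENNReal.ofReal (Real.log ((spanNum T d (Fs n) ε' (univ : Set X) : ℝ)) / ((Fs n).card : ℝ))) atTop) ε := by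
        filter_upwards [ev_pos, ev_leρ] with ε hε hρε
        refine limsup_le_limsup (Eventually.of_forall fun n => ?_)
        have hs1 : 1 ≤ spanNum T ζd (Fs n) (ζ ε) (univ : Set X) := hsζ (Fs n) (hζpos hε hρε)
        have hs2 := hBspan n hε hρε
        have hcard : (0:ℝ) < ((Fs n).card : ℝ) := by exact_mod_cast (hFol.1 n).card_pos
        apply ENNReal.ofReal_le_ofReal
        refine (div_le_div_iff_of_pos_right hcard).mpr ?_
        refine Real.log_le_log ?_ ?_
        · exact_mod_cast Nat.lt_of_lt_of_le Nat.zero_lt_one hs1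
        · exact_mod_cast hs2
      unfold mdimMLower
      exact core_I hζtl h2 evlog evA
    -- part (ii)
    have partII : ∀ c : ℝ, kM ζ < c →
        mdimMUpper T d Fs (univ : Set X) ≤
          ENNReal.ofReal c * mdimMUpper T ζd Fs (univ : Set X) := by
      intro c hckM
      have hc : 0 < c := lt_trans hkM hckM
      set c' : ℝ := (kM ζ + c) / 2 with hc'def
      have hkMc' : kM ζ < c' := by rw [hc'def]; linarith
      have hc'c : c' < c := by rw [hc'def]; linarith
      have hkM1 : limsup (fun ε : ℝ => Real.log (ζ ε) / Real.log ε) (𝓝[>] (0:ℝ)) < c' := hkMc'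
      have hkM2 : 0 < limsup (fun ε : ℝ => Real.log (ζ ε) / Real.log ε) (𝓝[>] (0:ℝ)) := hkM
      have hkM_ev : ∀ᶠ ε in 𝓝[>] (0:ℝ), Real.log (ζ ε) / Real.log ε < c' :=
        eventually_lt_of_limsup_lt' hkM1 hkM2
      have ev_logsmall : ∀ᶠ ε in 𝓝[>] (0:ℝ), Real.log ε ≤ -(Real.log 2 / (c - c')) :=
        Real.tendsto_log_nhdsGT_zero.eventually (eventually_le_atBot _)
      have evlog2 : ∀ᶠ ε in 𝓝[>] (0:ℝ), ENNReal.ofReal |Real.log (ζ ε / 2)| ≤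
          ENNReal.ofReal c * ENNReal.ofReal |Real.log ε| := by
        filter_upwards [hkM_ev, ev_pos, ev_lt1, ev_leρ, ev_ζlt1, ev_logsmall]
          with ε hrat hε h1 hρε hζ1 hls
        have hζε : 0 < ζ ε := hζpos hε hρε
        have hlogε : Real.log ε < 0 := Real.log_neg hε h1
        rw [div_lt_iff_of_neg hlogε] at hrat
        have hlogζ : Real.log (ζ ε) < 0 := Real.log_neg hζε hζ1
        have hhalf : Real.log (ζ ε / 2) = Real.log (ζ ε) - Real.log 2 :=
          Real.log_div (ne_of_gt hζε) two_ne_zero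
        have hlog2 : (0:ℝ) < Real.log 2 := Real.log_pos one_lt_two
        have hcc' : 0 < c - c' := by linarith
        have hmul : Real.log 2 ≤ (c - c') * (-Real.log ε) := by
          have h' : Real.log 2 / (c - c') ≤ -Real.log ε := by linarith
          calc Real.log 2 = (c - c') * (Real.log 2 / (c - c')) := by field_simp
            _ ≤ (c - c') * (-Real.log ε) := mul_le_mul_of_nonneg_left h' hcc'.le
        rw [← ENNReal.ofReal_mul hc.le]
        apply ENNReal.ofReal_le_ofReal
        have hζhalfneg : Real.log (ζ ε / 2) < 0 := by rw [hhalf]; linarith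
        rw [abs_of_neg hζhalfneg, abs_of_neg hlogε, hhalf]
        have e1 : c' * -Real.log ε + (c - c') * -Real.log ε = c * -Real.log ε := by ring
        have e2 : c' * -Real.log ε = -(c' * Real.log ε) := by ring
        linarith
      have h2 : ∀ᶠ ε in 𝓝[>] (0:ℝ),
          (fun ε' : ℝ => limsup (fun n =>
            ENNReal.ofReal (Real.log ((spanNum T d (Fs n) ε' (univ : Set X) : ℝ)) / ((Fs n).card : ℝ))) atTop) ε
          ≤ (fun δ : ℝ => limsup (fun n =>
            ENNReal.ofReal (Real.log ((spanNum T ζd (Fs n) δ (univ : Set X) : ℝ)) / ((Fs n).card : ℝ))) atTop) (ζ ε / 2) := by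
        filter_upwards [ev_pos, ev_leρ] with ε hε hρε
        have hζε : 0 < ζ ε := hζpos hε hρε
        refine limsup_le_limsup (Eventually.of_forall fun n => ?_)
        have hs1 : 1 ≤ spanNum T d (Fs n) ε (univ : Set X) := hsd (Fs n) hε
        have hs2 := hAspan n hε hρε (half_pos hζε) (half_lt_self hζε)
        have hcard : (0:ℝ) < ((Fs n).card : ℝ) := by exact_mod_cast (hFol.1 n).card_pos
        apply ENNReal.ofReal_le_ofReal
        refine (div_le_div_iff_of_pos_right hcard).mpr ?_
        refine Real.log_le_log ?_ ?_
        · exact_mod_cast Nat.lt_of_lt_of_le Nat.zero_lt_one hs1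
        · exact_mod_cast hs2
      unfold mdimMUpper
      exact core_II hc hθtl h2 evlog2
    exact ⟨final_i hkm partI, final_ii hkM partII⟩

end MeanDim17
end

section
/- Let G be a countable discrete group, (X,d) a G-system with diameter ρ, and {F_n} a Følner sequence in G. Let ζ ∈ A[0,ρ] satisfy k(ζ) := k_m(ζ) = k_M(ζ) > 0, and set ζ_d(x,y) = ζ(d(x,y)). Then overline{mdim}_M(X,G,d) = k(ζ) · overline{mdim}_M(X,G,ζ_d) and underline{mdim}_M(X,G,d) = k(ζ) · underline{mdim}_M(X,G,ζ_d). -/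
/-!
For `ε ≤ ρ`, monotonicity of `ζ` gives `r_F(ζ_d, ζ ε) ≤ r_F(d, ε) ≤ r_F(ζ_d, δ)` whenever
`δ < ζ ε`. Since `log ζ(ε) / log ε → k(ζ)`, normalising by `|log ε|` instead of `|log ζ(ε)|`
rescales by `k(ζ)` in the limit, and `ζ` maps right neighbourhoods of `0` onto right
neighbourhoods of `0` (intermediate value theorem), so substituting `ζ ε` for `ε` does not change
a `limsup` or `liminf` at `0⁺`.
-/

open Filter Set Topology
open scoped ENNReal

namespace MeanDim18

/-- `d` is a metric on `X`. -/
def IsMetricOn {X : Type*} (d : X → X → ℝ) : Prop :=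
  (∀ x y, 0 ≤ d x y) ∧ (∀ x y, d x y = 0 ↔ x = y) ∧
    (∀ x y, d x y = d y x) ∧ ∀ x y z, d x z ≤ d x y + d y z

/-- `d` induces the given topology on `X`. -/
def InducesTopology {X : Type*} [TopologicalSpace X] (d : X → X → ℝ) : Prop :=
  ∀ (x : X) (s : Set X), s ∈ 𝓝 x ↔ ∃ ε > 0, {y : X | d x y < ε} ⊆ s

/-- `T` is a continuous (left) action of `G` on `X`. -/
def IsContAction {G X : Type*} [Group G] [TopologicalSpace X] (T : G → X → X) : Prop :=
  (∀ x : X, T 1 x = x) ∧ (∀ g h : G, ∀ x : X, T (g * h) x = T g (T h x)) ∧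
    ∀ g : G, Continuous (T g)

/-- The dynamical (Bowen) metric `d_F(x,y) = max_{g ∈ F} d(gx, gy)`. -/
noncomputable def dynDist {G X : Type*} (T : G → X → X) (d : X → X → ℝ)
    (F : Finset G) (x y : X) : ℝ :=
  if h : F.Nonempty then F.sup' h (fun g => d (T g x) (T g y)) else 0

/-- `K` is an `(F,ε)`-spanning subset of `E`. -/
def IsSpanningSet {G X : Type*} (T : G → X → X) (d : X → X → ℝ)
    (F : Finset G) (ε : ℝ) (E : Set X) (K : Finset X) : Prop :=
  ↑K ⊆ E ∧ ∀ x ∈ E, ∃ y ∈ K, dynDist T d F x y ≤ ε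

/-- `r_F(d,ε,E)`: minimal cardinality of an `(F,ε)`-spanning subset of `E`. -/
noncomputable def spanNum {G X : Type*} (T : G → X → X) (d : X → X → ℝ)
    (F : Finset G) (ε : ℝ) (E : Set X) : ℕ :=
  sInf {n : ℕ | ∃ K : Finset X, IsSpanningSet T d F ε E K ∧ K.card = n}

/-- The max-metric on the product. -/
def prodDist {X Y : Type*} (dX : X → X → ℝ) (dY : Y → Y → ℝ) (p q : X × Y) : ℝ :=
  max (dX p.1 q.1) (dY p.2 q.2)

/-- The diagonal action on the product. -/
def prodAction {G X Y : Type*} (T : G → X → X) (S : G → Y → Y) (g : G) (p : X × Y) : X × Y :=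
  (T g p.1, S g p.2)

/-- `{F n}` is a Følner sequence of nonempty finite subsets of `G`. -/
def IsFolner {G : Type*} [Group G] (Fs : ℕ → Finset G) : Prop :=
  letI := Classical.decEq G
  (∀ n, (Fs n).Nonempty) ∧
    ∀ g : G, Tendsto
      (fun n => (((Fs n) \ (Fs n).image (fun h => g * h)).card : ℝ) / ((Fs n).card : ℝ))
      atTop (𝓝 0)

/-- Upper metric mean dimension (via spanning numbers), w.r.t. a Følner sequence. -/
noncomputable def mdimMUpper {G X : Type*} (T : G → X → X) (d : X → X → ℝ)
    (Fs : ℕ → Finset G) (E : Set X) : ℝ≥0∞ :=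
  limsup (fun ε : ℝ =>
      (limsup (fun n =>
          ENNReal.ofReal (Real.log (spanNum T d (Fs n) ε E : ℝ) / ((Fs n).card : ℝ))) atTop)
        / ENNReal.ofReal |Real.log ε|) (𝓝[>] (0 : ℝ))

/-- Lower metric mean dimension (via spanning numbers), w.r.t. a Følner sequence. -/
noncomputable def mdimMLower {G X : Type*} (T : G → X → X) (d : X → X → ℝ)
    (Fs : ℕ → Finset G) (E : Set X) : ℝ≥0∞ :=
  liminf (fun ε : ℝ =>
      (limsup (fun n =>
          ENNReal.ofReal (Real.log (spanNum T d (Fs n) ε E : ℝ) / ((Fs n).card : ℝ))) atTop)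
        / ENNReal.ofReal |Real.log ε|) (𝓝[>] (0 : ℝ))


/-- Diameter of a set with respect to an abstract metric `d` (with `diam ∅ = 0`). -/
noncomputable def setDiam {X : Type*} (d : X → X → ℝ) (A : Set X) : ℝ :=
  sSup {r : ℝ | ∃ x ∈ A, ∃ y ∈ A, r = d x y}

/-- `ζ ∈ A[0,ρ]`: continuous, increasing, subadditive on `[0,ρ]`, nonnegative,
and vanishing exactly at `0`. -/
def MemA (ρ : ℝ) (ζ : ℝ → ℝ) : Prop :=
  ContinuousOn ζ (Set.Icc 0 ρ) ∧ MonotoneOn ζ (Set.Icc 0 ρ) ∧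
    (∀ x ∈ Set.Icc 0 ρ, 0 ≤ ζ x) ∧
    (∀ x ∈ Set.Icc 0 ρ, ∀ y ∈ Set.Icc 0 ρ, x + y ∈ Set.Icc 0 ρ → ζ (x + y) ≤ ζ x + ζ y) ∧
    ∀ x ∈ Set.Icc 0 ρ, (ζ x = 0 ↔ x = 0)

/-- `k_m(ζ) = liminf_{ε→0⁺} log ζ(ε) / log ε`. -/
noncomputable def km (ζ : ℝ → ℝ) : ℝ :=
  liminf (fun ε : ℝ => Real.log (ζ ε) / Real.log ε) (𝓝[>] (0 : ℝ))

/-- `k_M(ζ) = limsup_{ε→0⁺} log ζ(ε) / log ε`. -/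
noncomputable def kM (ζ : ℝ → ℝ) : ℝ :=
  limsup (fun ε : ℝ => Real.log (ζ ε) / Real.log ε) (𝓝[>] (0 : ℝ))

section RealAnalysis

/-- Unbounded real `liminf`s and `limsup`s are `0` by convention, so a nonzero value forces
boundedness. -/
theorem tendsto_of_liminf_eq_limsup_of_ne_zero {α : Type*} {f : Filter α} {u : α → ℝ}
    (h : liminf u f = limsup u f) (h0 : liminf u f ≠ 0) : Tendsto u f (𝓝 (liminf u f)) := by
  have hsup : IsBoundedUnder (· ≤ ·) f u := by
    by_contra hb
    exact h0 (h.trans (Real.limsup_of_not_isBoundedUnder hb))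
  have hinf : IsBoundedUnder (· ≥ ·) f u := by
    by_contra hb
    exact h0 (Real.liminf_of_not_isBoundedUnder hb)
  exact tendsto_of_liminf_eq_limsup rfl h.symm hsup hinf

variable {ρ : ℝ} {θ : ℝ → ℝ}

theorem tendsto_nhdsGT_of_continuousOn (hρ : 0 < ρ) (hθc : ContinuousOn θ (Icc 0 ρ))
    (hθ0 : θ 0 = 0) (hθpos : ∀ x ∈ Ioc 0 ρ, 0 < θ x) :
    Tendsto θ (𝓝[>] 0) (𝓝[>] 0) := by
  have hcont : Tendsto θ (𝓝[Ioc 0 ρ] 0) (𝓝 0) := by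
    simpa [ContinuousWithinAt, hθ0] using
      (hθc.continuousWithinAt ⟨le_rfl, hρ.le⟩).mono Ioc_subset_Icc_self
  have h := tendsto_nhdsWithin_iff.2 ⟨hcont, eventually_mem_nhdsWithin.mono hθpos⟩
  rwa [nhdsWithin_Ioc_eq_nhdsGT hρ] at h

/-- The reverse inclusion comes from the intermediate value theorem on `[0, b]`. -/
theorem map_nhdsGT_of_continuousOn (hρ : 0 < ρ) (hθc : ContinuousOn θ (Icc 0 ρ))
    (hθ0 : θ 0 = 0) (hθpos : ∀ x ∈ Ioc 0 ρ, 0 < θ x) :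
    map θ (𝓝[>] 0) = 𝓝[>] 0 := by
  refine le_antisymm (tendsto_nhdsGT_of_continuousOn hρ hθc hθ0 hθpos) fun s hs => ?_
  obtain ⟨b, hb, hbs⟩ := mem_nhdsGT_iff_exists_Ioc_subset.1 (mem_map.1 hs)
  set b' := min b ρ
  have hb' : b' ∈ Ioc 0 ρ := ⟨lt_min hb hρ, min_le_right _ _⟩
  have hIV : Ioc (θ 0) (θ b') ⊆ θ '' Ioc 0 b' :=
    intermediate_value_Ioc hb'.1.le (hθc.mono (Icc_subset_Icc le_rfl hb'.2))
  rw [hθ0] at hIV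
  refine mem_of_superset (Ioc_mem_nhdsGT (hθpos b' hb')) fun y hy => ?_
  obtain ⟨x, hx, rfl⟩ := hIV hy
  exact hbs ⟨hx.1, hx.2.trans (min_le_left _ _)⟩

theorem tendsto_log_div_const_div_log {k c : ℝ}
    (h : Tendsto (fun ε => Real.log (θ ε) / Real.log ε) (𝓝[>] 0) (𝓝 k))
    (hθ : ∀ᶠ ε in 𝓝[>] 0, 0 < θ ε) (hc : c ≠ 0) :
    Tendsto (fun ε => Real.log (θ ε / c) / Real.log ε) (𝓝[>] 0) (𝓝 k) := by
  have hc' : Tendsto (fun ε => Real.log c / Real.log ε) (𝓝[>] 0) (𝓝 0) :=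
    tendsto_const_nhds.div_atBot Real.tendsto_log_nhdsGT_zero
  refine (by simpa using h.sub hc' : Tendsto _ _ (𝓝 k)).congr' ?_
  filter_upwards [hθ] with ε hε
  rw [Real.log_div hε.ne' hc, sub_div]

end RealAnalysis

section LogScale

variable {φ θ : ℝ → ℝ} {S₁ S₂ : ℝ → ℝ≥0∞} {k : ℝ}

theorem eventually_div_log_le_mul (hφ : Tendsto φ (𝓝[>] 0) (𝓝[>] 0))
    (hθ : Tendsto θ (𝓝[>] 0) (𝓝[>] 0)) (h : ∀ᶠ ε in 𝓝[>] 0, S₁ (φ ε) ≤ S₂ (θ ε)) :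
    ∀ᶠ ε in 𝓝[>] 0, S₁ (φ ε) / ENNReal.ofReal |Real.log (φ ε)| ≤
      ENNReal.ofReal (Real.log (θ ε) / Real.log (φ ε)) *
        (S₂ (θ ε) / ENNReal.ofReal |Real.log (θ ε)|) := by
  have hsmall : ∀ᶠ t in 𝓝[>] (0 : ℝ), Real.log t < 0 := by
    filter_upwards [Ioo_mem_nhdsGT (zero_lt_one' ℝ)] with t ht using Real.log_neg ht.1 ht.2
  filter_upwards [h, hφ.eventually hsmall, hθ.eventually hsmall] with ε hε hφε hθε
  rw [abs_of_neg hφε, abs_of_neg hθε, ← neg_div_neg_eq,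
    ENNReal.ofReal_div_of_pos (neg_pos.2 hφε), mul_comm, ← mul_div_assoc,
    ENNReal.div_mul_cancel (by simpa using hθε) ENNReal.ofReal_ne_top]
  gcongr

theorem limsup_liminf_div_log_le (hk : 0 < k) (hφ : map φ (𝓝[>] 0) = 𝓝[>] 0)
    (hθ : map θ (𝓝[>] 0) = 𝓝[>] 0)
    (hlog : Tendsto (fun ε => Real.log (θ ε) / Real.log (φ ε)) (𝓝[>] 0) (𝓝 k))
    (h : ∀ᶠ ε in 𝓝[>] 0, S₁ (φ ε) ≤ S₂ (θ ε)) :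
    limsup (fun ε => S₁ ε / ENNReal.ofReal |Real.log ε|) (𝓝[>] 0) ≤
        ENNReal.ofReal k * limsup (fun ε => S₂ ε / ENNReal.ofReal |Real.log ε|) (𝓝[>] 0) ∧
      liminf (fun ε => S₁ ε / ENNReal.ofReal |Real.log ε|) (𝓝[>] 0) ≤
        ENNReal.ofReal k * liminf (fun ε => S₂ ε / ENNReal.ofReal |Real.log ε|) (𝓝[>] 0) := by
  set g₁ := fun ε => S₁ ε / ENNReal.ofReal |Real.log ε|
  set g₂ := fun ε => S₂ ε / ENNReal.ofReal |Real.log ε|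
  set R := fun ε => ENNReal.ofReal (Real.log (θ ε) / Real.log (φ ε))
  have hR : limsup R (𝓝[>] 0) = ENNReal.ofReal k := (ENNReal.tendsto_ofReal hlog).limsup_eq
  have hR0 : limsup R (𝓝[>] 0) ≠ 0 := by simpa [hR] using hk
  have hRtop : limsup R (𝓝[>] 0) ≠ ⊤ := hR ▸ ENNReal.ofReal_ne_top
  have hle : g₁ ∘ φ ≤ᶠ[𝓝[>] 0] R * g₂ ∘ θ := eventually_div_log_le_mul hφ.le hθ.le h
  constructor
  · calc limsup g₁ (𝓝[>] 0) = limsup (g₁ ∘ φ) (𝓝[>] 0) := by rw [limsup_comp, hφ]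
      _ ≤ limsup (R * g₂ ∘ θ) (𝓝[>] 0) := limsup_le_limsup hle
      _ ≤ limsup R (𝓝[>] 0) * limsup (g₂ ∘ θ) (𝓝[>] 0) :=
        ENNReal.limsup_mul_le' (Or.inl hR0) (Or.inl hRtop)
      _ = ENNReal.ofReal k * limsup g₂ (𝓝[>] 0) := by rw [hR, limsup_comp, hθ]
  · calc liminf g₁ (𝓝[>] 0) = liminf (g₁ ∘ φ) (𝓝[>] 0) := by rw [liminf_comp, hφ]
      _ ≤ liminf (R * g₂ ∘ θ) (𝓝[>] 0) := liminf_le_liminf hle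
      _ ≤ limsup R (𝓝[>] 0) * liminf (g₂ ∘ θ) (𝓝[>] 0) :=
        ENNReal.liminf_mul_le (Or.inl hR0) (Or.inl hRtop)
      _ = ENNReal.ofReal k * liminf g₂ (𝓝[>] 0) := by rw [hR, liminf_comp, hθ]

theorem eq_ofReal_mul_of_le_of_le_inv_mul {a b : ℝ≥0∞} (hk : 0 < k)
    (h₁ : a ≤ ENNReal.ofReal k * b) (h₂ : b ≤ ENNReal.ofReal k⁻¹ * a) :
    a = ENNReal.ofReal k * b := by
  refine le_antisymm h₁ ?_
  calc ENNReal.ofReal k * b ≤ ENNReal.ofReal k * (ENNReal.ofReal k⁻¹ * a) := by gcongr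
    _ = a := by rw [← mul_assoc, ← ENNReal.ofReal_mul hk.le, mul_inv_cancel₀ hk.ne',
      ENNReal.ofReal_one, one_mul]

end LogScale

section Spanning

variable {G X : Type*} {T : G → X → X} {d d₁ d₂ : X → X → ℝ}
  {F : Finset G} {E : Set X} {K : Finset X} {ε δ : ℝ}

theorem InducesTopology.isOpen_ball [TopologicalSpace X] (hc : InducesTopology d)
    (hd : IsMetricOn d) (x : X) (r : ℝ) : IsOpen {y | d x y < r} := by
  refine isOpen_iff_mem_nhds.2 fun y hy => (hc y _).2 ⟨r - d x y, sub_pos.2 hy, fun z hz => ?_⟩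
  have hz : d y z < r - d x y := hz
  show d x z < r
  linarith [hd.2.2.2 x y z]

theorem exists_forall_le_of_compactSpace [TopologicalSpace X] [CompactSpace X]
    (hd : IsMetricOn d) (hc : InducesTopology d) : ∃ C, ∀ x y : X, d x y ≤ C := by
  rcases isEmpty_or_nonempty X with hX | ⟨⟨x₀⟩⟩
  · exact ⟨0, fun x => isEmptyElim x⟩
  obtain ⟨n, hn⟩ := isCompact_univ.elim_directed_cover (fun n : ℕ => {y | d x₀ y < n})
    (fun n => hc.isOpen_ball hd x₀ n)
    (fun y _ => mem_iUnion.2 (exists_nat_gt (d x₀ y)))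
    (Monotone.directed_le fun m n hmn y (hy : d x₀ y < m) =>
      (lt_of_lt_of_le hy (Nat.cast_le.2 hmn) : d x₀ y < n))
  refine ⟨2 * n, fun x y => ?_⟩
  have hx : d x₀ x < n := hn (mem_univ x)
  have hy : d x₀ y < n := hn (mem_univ y)
  linarith [hd.2.2.2 x x₀ y, hd.2.2.1 x x₀]

theorem le_setDiam_univ [TopologicalSpace X] [CompactSpace X] (hd : IsMetricOn d)
    (hc : InducesTopology d) (x y : X) : d x y ≤ setDiam d univ := by
  obtain ⟨C, hC⟩ := exists_forall_le_of_compactSpace hd hc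
  exact le_csSup ⟨C, by rintro r ⟨x, -, y, -, rfl⟩; exact hC x y⟩ ⟨x, trivial, y, trivial, rfl⟩

theorem dynDist_le_iff (hF : F.Nonempty) {x y : X} :
    dynDist T d F x y ≤ ε ↔ ∀ g ∈ F, d (T g x) (T g y) ≤ ε := by
  rw [dynDist, dif_pos hF, Finset.sup'_le_iff]

theorem IsSpanningSet.of_le_imp_le (hF : F.Nonempty) (h : ∀ x y, d₂ x y ≤ δ → d₁ x y ≤ ε)
    (hK : IsSpanningSet T d₂ F δ E K) : IsSpanningSet T d₁ F ε E K := by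
  refine ⟨hK.1, fun x hx => ?_⟩
  obtain ⟨y, hy, hxy⟩ := hK.2 x hx
  exact ⟨y, hy, (dynDist_le_iff hF).2 fun g hg => h _ _ ((dynDist_le_iff hF).1 hxy g hg)⟩

theorem exists_isSpanningSet [TopologicalSpace X] [CompactSpace X] (hT : ∀ g, Continuous (T g))
    (hd : IsMetricOn d) (hc : InducesTopology d) (hF : F.Nonempty) (hε : 0 < ε) :
    ∃ K, IsSpanningSet T d F ε univ K := by
  set U : X → Set X := fun x => ⋂ g ∈ F, T g ⁻¹' {z | d (T g x) z < ε}
  have hU : ∀ x, IsOpen (U x) := fun x =>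
    isOpen_biInter_finset fun g _ => (hc.isOpen_ball hd _ ε).preimage (hT g)
  have hcover : univ ⊆ ⋃ x, U x := fun y _ =>
    mem_iUnion.2 ⟨y, mem_iInter₂.2 fun g _ => show d _ _ < ε by rwa [(hd.2.1 _ _).2 rfl]⟩
  obtain ⟨K, hK⟩ := isCompact_univ.elim_finite_subcover U hU hcover
  refine ⟨K, subset_univ _, fun x _ => ?_⟩
  obtain ⟨y, hy, hxy⟩ := mem_iUnion₂.1 (hK (mem_univ x))
  refine ⟨y, hy, (dynDist_le_iff hF).2 fun g hg => ?_⟩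
  rw [hd.2.2.1]
  exact (mem_iInter₂.1 hxy g hg).le

theorem spanNum_le_card (hK : IsSpanningSet T d F ε E K) : spanNum T d F ε E ≤ K.card :=
  Nat.sInf_le ⟨K, hK, rfl⟩

theorem exists_isSpanningSet_card_eq (h : ∃ K, IsSpanningSet T d F ε E K) :
    ∃ K, IsSpanningSet T d F ε E K ∧ K.card = spanNum T d F ε E :=
  let ⟨K, hK⟩ := h
  Nat.sInf_mem (s := {n | ∃ K, IsSpanningSet T d F ε E K ∧ K.card = n}) ⟨K.card, K, hK, rfl⟩

theorem spanNum_le_spanNum (hF : F.Nonempty) (h : ∀ x y, d₂ x y ≤ δ → d₁ x y ≤ ε)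
    (hex : ∃ K, IsSpanningSet T d₂ F δ E K) : spanNum T d₁ F ε E ≤ spanNum T d₂ F δ E := by
  obtain ⟨K, hK, hcard⟩ := exists_isSpanningSet_card_eq hex
  exact hcard ▸ spanNum_le_card (hK.of_le_imp_le hF h)

theorem one_le_spanNum [Nonempty X] (h : ∃ K, IsSpanningSet T d F ε univ K) :
    1 ≤ spanNum T d F ε univ := by
  obtain ⟨K, hK, hcard⟩ := exists_isSpanningSet_card_eq h
  obtain ⟨y, hy, -⟩ := hK.2 (Classical.arbitrary X) (mem_univ _)
  exact hcard ▸ Finset.card_pos.2 ⟨y, hy⟩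

theorem spanNum_le_one [Subsingleton X] : spanNum T d F ε E ≤ 1 := by
  by_cases h : ∃ K, IsSpanningSet T d F ε E K
  · obtain ⟨K, -, hcard⟩ := exists_isSpanningSet_card_eq h
    exact hcard ▸ Finset.card_le_one_of_subsingleton K
  · simp only [spanNum, not_exists] at h ⊢
    simp [h]

end Spanning

section Entropy

variable {G X : Type*} {T : G → X → X} {d d₁ d₂ : X → X → ℝ} {Fs : ℕ → Finset G} {E : Set X}
  {ε δ : ℝ}

/-- `limsup_n |F_n|⁻¹ log r_{F_n}(d, ε, E)`, the inner limit in both metric mean dimensions. -/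
noncomputable def spanEntropy (T : G → X → X) (d : X → X → ℝ) (Fs : ℕ → Finset G) (E : Set X)
    (ε : ℝ) : ℝ≥0∞ :=
  limsup (fun n => ENNReal.ofReal (Real.log (spanNum T d (Fs n) ε E : ℝ) / ((Fs n).card : ℝ)))
    atTop

theorem mdimMUpper_eq_limsup : mdimMUpper T d Fs E =
    limsup (fun ε => spanEntropy T d Fs E ε / ENNReal.ofReal |Real.log ε|) (𝓝[>] 0) := rfl

theorem mdimMLower_eq_liminf : mdimMLower T d Fs E =
    liminf (fun ε => spanEntropy T d Fs E ε / ENNReal.ofReal |Real.log ε|) (𝓝[>] 0) := rfl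

theorem spanEntropy_mono (h₁ : ∀ n, 1 ≤ spanNum T d₁ (Fs n) ε E)
    (h : ∀ n, spanNum T d₁ (Fs n) ε E ≤ spanNum T d₂ (Fs n) δ E) :
    spanEntropy T d₁ Fs E ε ≤ spanEntropy T d₂ Fs E δ := by
  refine limsup_le_limsup (Eventually.of_forall fun n => ENNReal.ofReal_le_ofReal ?_)
  gcongr
  · exact_mod_cast h₁ n
  · exact_mod_cast h n

theorem spanEntropy_eq_zero [Subsingleton X] : spanEntropy T d Fs E ε = 0 := by
  have hlog : ∀ n, Real.log (spanNum T d (Fs n) ε E : ℝ) = 0 := fun n => by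
    have h : spanNum T d (Fs n) ε E ≤ 1 := spanNum_le_one
    rcases Nat.le_one_iff_eq_zero_or_eq_one.1 h with h | h <;> simp [h]
  simp only [spanEntropy, hlog, zero_div, ENNReal.ofReal_zero, limsup_const]

end Entropy

namespace MemA

variable {ρ ε δ : ℝ} {ζ : ℝ → ℝ}

theorem apply_zero (hζ : MemA ρ ζ) (hρ : 0 ≤ ρ) : ζ 0 = 0 :=
  (hζ.2.2.2.2 0 ⟨le_rfl, hρ⟩).2 rfl

theorem pos (hζ : MemA ρ ζ) (hε : ε ∈ Ioc 0 ρ) : 0 < ζ ε :=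
  (hζ.2.2.1 ε (Ioc_subset_Icc_self hε)).lt_of_ne
    fun h => hε.1.ne' ((hζ.2.2.2.2 ε (Ioc_subset_Icc_self hε)).1 h.symm)

theorem map_nhdsGT (hζ : MemA ρ ζ) (hρ : 0 < ρ) : map ζ (𝓝[>] 0) = 𝓝[>] 0 :=
  map_nhdsGT_of_continuousOn hρ hζ.1 (hζ.apply_zero hρ.le) fun _ => hζ.pos

theorem map_div_nhdsGT (hζ : MemA ρ ζ) (hρ : 0 < ρ) {c : ℝ} (hc : 0 < c) :
    map (fun ε => ζ ε / c) (𝓝[>] 0) = 𝓝[>] 0 :=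
  map_nhdsGT_of_continuousOn hρ (hζ.1.div_const c) (by simp [hζ.apply_zero hρ.le])
    fun _ hε => div_pos (hζ.pos hε) hc

theorem exists_lt (hζ : MemA ρ ζ) (hρ : 0 < ρ) (hδ : 0 < δ) : ∃ ε ∈ Ioc 0 ρ, ζ ε < δ := by
  have h := tendsto_nhdsGT_of_continuousOn hρ hζ.1 (hζ.apply_zero hρ.le) fun _ => hζ.pos
  obtain ⟨ε, hεδ, hε⟩ :=
    ((h.mono_right nhdsWithin_le_nhds).eventually (Iio_mem_nhds hδ)).and
      (Ioc_mem_nhdsGT hρ) |>.exists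
  exact ⟨ε, hε, hεδ⟩

end MemA

section Comparison

variable {G X : Type*} [TopologicalSpace X] [CompactSpace X] {T : G → X → X} {d : X → X → ℝ}
  {ρ ε δ : ℝ} {ζ : ℝ → ℝ} {F : Finset G} {Fs : ℕ → Finset G}

theorem exists_isSpanningSet_comp (hT : ∀ g, Continuous (T g)) (hd : IsMetricOn d)
    (hc : InducesTopology d) (hdρ : ∀ x y, d x y ≤ ρ) (hζ : MemA ρ ζ) (hρ : 0 < ρ)
    (hF : F.Nonempty) (hδ : 0 < δ) : ∃ K, IsSpanningSet T (fun x y => ζ (d x y)) F δ univ K := by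
  obtain ⟨ε, hε, hεδ⟩ := hζ.exists_lt hρ hδ
  obtain ⟨K, hK⟩ := exists_isSpanningSet hT hd hc hF hε.1
  refine ⟨K, hK.of_le_imp_le hF fun x y h => ?_⟩
  exact (hζ.2.1 ⟨hd.1 x y, hdρ x y⟩ (Ioc_subset_Icc_self hε) h).trans hεδ.le

theorem spanEntropy_comp_le [Nonempty X] (hT : ∀ g, Continuous (T g)) (hd : IsMetricOn d)
    (hc : InducesTopology d) (hdρ : ∀ x y, d x y ≤ ρ) (hζ : MemA ρ ζ)
    (hFs : ∀ n, (Fs n).Nonempty) (hε : ε ∈ Ioc 0 ρ) :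
    spanEntropy T (fun x y => ζ (d x y)) Fs univ (ζ ε) ≤ spanEntropy T d Fs univ ε := by
  refine spanEntropy_mono (fun n => one_le_spanNum ?_) fun n => spanNum_le_spanNum (hFs n)
    (fun x y h => hζ.2.1 ⟨hd.1 x y, hdρ x y⟩ (Ioc_subset_Icc_self hε) h)
    (exists_isSpanningSet hT hd hc (hFs n) hε.1)
  exact exists_isSpanningSet_comp hT hd hc hdρ hζ (hε.1.trans_le hε.2) (hFs n) (hζ.pos hε)

theorem spanEntropy_le_comp [Nonempty X] (hT : ∀ g, Continuous (T g)) (hd : IsMetricOn d)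
    (hc : InducesTopology d) (hdρ : ∀ x y, d x y ≤ ρ) (hζ : MemA ρ ζ)
    (hFs : ∀ n, (Fs n).Nonempty) (hε : ε ∈ Ioc 0 ρ) (hδ : δ ∈ Ioo 0 (ζ ε)) :
    spanEntropy T d Fs univ ε ≤ spanEntropy T (fun x y => ζ (d x y)) Fs univ δ := by
  refine spanEntropy_mono (fun n => one_le_spanNum (exists_isSpanningSet hT hd hc (hFs n) hε.1))
    fun n => spanNum_le_spanNum (hFs n) (fun x y h => ?_)
      (exists_isSpanningSet_comp hT hd hc hdρ hζ (hε.1.trans_le hε.2) (hFs n) hδ.1)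
  exact (hζ.2.1.reflect_lt ⟨hd.1 x y, hdρ x y⟩ (Ioc_subset_Icc_self hε) (h.trans_lt hδ.2)).le

end Comparison

theorem mdimM_comp_eq_general {G X : Type*} [Group G]
    [TopologicalSpace X] [CompactSpace X]
    (T : G → X → X) (hT : IsContAction T)
    (d : X → X → ℝ) (hd : IsMetricOn d) (hc : InducesTopology d)
    (Fs : ℕ → Finset G) (hFol : IsFolner Fs)
    (ρ : ℝ) (hρ : ρ = setDiam d (Set.univ : Set X))
    (ζ : ℝ → ℝ) (hζ : MemA ρ ζ) (hk : km ζ = kM ζ) (hkpos : 0 < km ζ) :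
    mdimMUpper T d Fs (Set.univ : Set X)
        = ENNReal.ofReal (km ζ) * mdimMUpper T (fun x y => ζ (d x y)) Fs (Set.univ : Set X) ∧
    mdimMLower T d Fs (Set.univ : Set X)
        = ENNReal.ofReal (km ζ) * mdimMLower T (fun x y => ζ (d x y)) Fs (Set.univ : Set X) := by
  simp only [mdimMUpper_eq_limsup, mdimMLower_eq_liminf]
  rcases subsingleton_or_nontrivial X with hX | hX
  · simp only [spanEntropy_eq_zero, ENNReal.zero_div, limsup_const, liminf_const, mul_zero,
      and_self]
  have hdρ : ∀ x y, d x y ≤ ρ := hρ ▸ le_setDiam_univ hd hc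
  have hρpos : 0 < ρ := by
    obtain ⟨x, y, hxy⟩ := exists_pair_ne X
    exact (lt_of_le_of_ne (hd.1 x y) fun h => hxy ((hd.2.1 x y).1 h.symm)).trans_le (hdρ x y)
  have hlog : Tendsto (fun ε => Real.log (ζ ε) / Real.log ε) (𝓝[>] 0) (𝓝 (km ζ)) :=
    tendsto_of_liminf_eq_limsup_of_ne_zero hk hkpos.ne'
  have hsmall : ∀ᶠ ε in 𝓝[>] 0, ε ∈ Ioc 0 ρ := Ioc_mem_nhdsGT hρpos
  have hd_le := limsup_liminf_div_log_le hkpos map_id (hζ.map_div_nhdsGT hρpos two_pos)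
    (tendsto_log_div_const_div_log hlog (hsmall.mono fun _ => hζ.pos) two_ne_zero)
    (hsmall.mono fun ε hε => spanEntropy_le_comp hT.2.2 hd hc hdρ hζ hFol.1 hε
      ⟨half_pos (hζ.pos hε), half_lt_self (hζ.pos hε)⟩)
  have hζd_le := limsup_liminf_div_log_le (inv_pos.2 hkpos) (hζ.map_nhdsGT hρpos) map_id
    (by simpa using hlog.inv₀ hkpos.ne')
    (hsmall.mono fun ε hε => spanEntropy_comp_le hT.2.2 hd hc hdρ hζ hFol.1 hε)
  exact ⟨eq_ofReal_mul_of_le_of_le_inv_mul hkpos hd_le.1 hζd_le.1,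
    eq_ofReal_mul_of_le_of_le_inv_mul hkpos hd_le.2 hζd_le.2⟩

/-- if `k(ζ) := k_m(ζ) = k_M(ζ) > 0`, then
`mdim_M(X,G,d) = k(ζ) · mdim_M(X,G,ζ∘d)` for both the upper and lower versions. -/
theorem mdimM_comp_eq {G X : Type*} [Group G] [Countable G]
    [TopologicalSpace X] [CompactSpace X]
    (T : G → X → X) (hT : IsContAction T)
    (d : X → X → ℝ) (hd : IsMetricOn d) (hc : InducesTopology d)
    (Fs : ℕ → Finset G) (hFol : IsFolner Fs)
    (ρ : ℝ) (hρ : ρ = setDiam d (Set.univ : Set X))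
    (ζ : ℝ → ℝ) (hζ : MemA ρ ζ) (hk : km ζ = kM ζ) (hkpos : 0 < km ζ) :
    mdimMUpper T d Fs (Set.univ : Set X)
        = ENNReal.ofReal (km ζ) * mdimMUpper T (fun x y => ζ (d x y)) Fs (Set.univ : Set X) ∧
    mdimMLower T d Fs (Set.univ : Set X)
        = ENNReal.ofReal (km ζ) * mdimMLower T (fun x y => ζ (d x y)) Fs (Set.univ : Set X) :=
  mdimM_comp_eq_general T hT d hd hc Fs hFol ρ hρ ζ hζ hk hkpos

end MeanDim18
end
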